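/- arXiv:2109.11271 — 9 statements merged into one kernel-verified Lean document; each statement's English description precedes it below -/
import Mathlib

section
/- (Moment generating function bound for the sample mean under sampling without replacement.) For every t ∈ ℝ, E[exp(t (ā₁(Z) − ā))] ≤ exp(σ²_mean t² / (n + 2)), where σ²_mean = (e_c² n)⁻¹ ∑_{i=1}^n (a_i − ā)². -/
/-!
Center `a` to `b` (so `∑ bᵢ = 0`), put `V = ∑ bᵢ²`, `s = t / n₁` and
`F(s) = ∑_{|A| = n₁} exp (s ∑_{i ∈ A} bᵢ)`. Double counting gives
`n ∑_{i ∈ A} bᵢ = ∑_{i ∈ A, j ∉ A} (bᵢ - bⱼ)`; pairing `A` with its image under the transposition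
`(i j)`, which lowers the sum by `bᵢ - bⱼ`, and using `(x - y)(eˣ - eʸ) ≤ (x - y)²(eˣ + eʸ)/2`
yields `F'(s) ≤ (V/2) s F(s)` for `s ≥ 0`. Hence `F(s) ≤ F(0) exp (V s² / 4)`, and
`1/4 ≤ n / (n + 2)` finishes the proof.
-/
open Finset Real

lemma monotone_mul_exp_add_one_sub_two_mul_exp_sub_one :
    Monotone fun d : ℝ => d * (exp d + 1) - 2 * (exp d - 1) := by
  have hderiv : ∀ d : ℝ, HasDerivAt (fun d : ℝ => d * (exp d + 1) - 2 * (exp d - 1))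
      (1 - (1 - d) * exp d) d := fun d =>
    (((hasDerivAt_id d).mul ((hasDerivAt_exp d).add_const 1)).sub
      (((hasDerivAt_exp d).sub_const 1).const_mul 2)).congr_deriv (by simp only [id]; ring)
  refine monotone_of_deriv_nonneg (fun d => (hderiv d).differentiableAt) fun d => ?_
  rw [(hderiv d).deriv, sub_nonneg]
  calc (1 - d) * exp d ≤ exp (-d) * exp d := by gcongr; linarith [add_one_le_exp (-d)]
    _ = 1 := by rw [← exp_add, neg_add_cancel, exp_zero]

lemma mul_exp_add_mul_sub_exp_le {s : ℝ} (hs : 0 ≤ s) (c y : ℝ) :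
    c * (exp (y + s * c) - exp y) ≤ s * c ^ 2 * (exp (y + s * c) + exp y) / 2 := by
  have hmono := monotone_mul_exp_add_one_sub_two_mul_exp_sub_one
  -- the bracket vanishes at `s * c = 0` and is monotone in `s * c`, so it has the sign of `c`
  have hsign : 0 ≤ c * (s * c * (exp (s * c) + 1) - 2 * (exp (s * c) - 1)) := by
    rcases le_total 0 c with hc | hc
    · exact mul_nonneg hc (by simpa using hmono (mul_nonneg hs hc))
    · exact mul_nonneg_of_nonpos_of_nonpos hc
        (by simpa using hmono (mul_nonpos_of_nonneg_of_nonpos hs hc))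
  rw [exp_add]
  linear_combination exp y / 2 * hsign

lemma le_mul_exp_of_hasDerivAt_le {F F' : ℝ → ℝ} {c s : ℝ} (hF : ∀ u, HasDerivAt F (F' u) u)
    (hF' : ∀ u, 0 ≤ u → F' u ≤ c * u * F u) (hs : 0 ≤ s) :
    F s ≤ F 0 * exp (c * s ^ 2 / 2) := by
  have hderiv : ∀ u, HasDerivAt (fun u => F u * exp (-(c / 2) * u ^ 2))
      (exp (-(c / 2) * u ^ 2) * (F' u - c * u * F u)) u := fun u =>
    ((hF u).mul ((hasDerivAt_pow 2 u).const_mul (-(c / 2))).exp).congr_deriv (by push_cast; ring)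
  have hanti : AntitoneOn (fun u => F u * exp (-(c / 2) * u ^ 2)) (Set.Ici 0) :=
    antitoneOn_of_deriv_nonpos (convex_Ici 0) (HasDerivAt.continuousOn fun u _ => hderiv u)
      (fun u _ => (hderiv u).differentiableAt.differentiableWithinAt) fun u hu => by
        rw [interior_Ici] at hu
        rw [(hderiv u).deriv]
        exact mul_nonpos_of_nonneg_of_nonpos (exp_pos _).le (sub_nonpos.2 (hF' u (le_of_lt hu)))
  have hdecay : F s * exp (-(c / 2) * s ^ 2) ≤ F 0 := by
    simpa using hanti Set.self_mem_Ici hs hs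
  calc F s = F s * exp (-(c / 2) * s ^ 2) * exp (c * s ^ 2 / 2) := by
        rw [mul_assoc, ← exp_add, show -(c / 2) * s ^ 2 + c * s ^ 2 / 2 = 0 by ring, exp_zero,
          mul_one]
    _ ≤ F 0 * exp (c * s ^ 2 / 2) := by gcongr

section Sampling

variable {ι : Type*} [DecidableEq ι]

lemma sum_eq_sum_map_swap_add {b : ι → ℝ} {A : Finset ι} {i j : ι} (hi : i ∈ A) (hj : j ∉ A) :
    ∑ k ∈ A, b k = ∑ k ∈ A.map (Equiv.swap i j).toEmbedding, b k + (b i - b j) := by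
  rw [sum_map, ← sub_eq_iff_eq_add', ← sum_sub_distrib]
  refine (sum_eq_single_of_mem i hi fun k hk hki => ?_).trans (by simp)
  rw [Equiv.toEmbedding_apply, Equiv.swap_apply_of_ne_of_ne hki (ne_of_mem_of_not_mem hk hj),
    sub_self]

variable [Fintype ι]

lemma sum_sum_mem_sum_notMem_comm {M : Type*} [AddCommMonoid M] (𝒜 : Finset (Finset ι))
    (f : Finset ι → ι → ι → M) :
    ∑ A ∈ 𝒜, ∑ i ∈ A, ∑ j ∈ Aᶜ, f A i j = ∑ i, ∑ j, ∑ A ∈ 𝒜 with i ∈ A ∧ j ∉ A, f A i j := by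
  rw [sum_comm' (t' := univ) (s' := fun i => {A ∈ 𝒜 | i ∈ A}) (by simp [and_comm])]
  refine sum_congr rfl fun i _ => ?_
  rw [sum_comm' (t' := univ) (s' := fun j => {A ∈ 𝒜 | i ∈ A ∧ j ∉ A}) (by simp [and_assoc])]

lemma card_mul_sum_eq_sum_sum_compl {b : ι → ℝ} (hb : ∑ i, b i = 0) (A : Finset ι) :
    Fintype.card ι * ∑ i ∈ A, b i = ∑ i ∈ A, ∑ j ∈ Aᶜ, (b i - b j) := by
  have hcompl : ∑ j ∈ Aᶜ, b j = -∑ i ∈ A, b i := by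
    rw [eq_neg_iff_add_eq_zero, sum_compl_add_sum, hb]
  simp only [sum_sub_distrib, sum_const, hcompl, card_compl, nsmul_eq_mul,
    Nat.cast_sub (card_le_univ A), ← mul_sum]
  ring

omit [DecidableEq ι] in
lemma sum_sum_sub_sq {b : ι → ℝ} (hb : ∑ i, b i = 0) :
    ∑ i, ∑ j, (b i - b j) ^ 2 = 2 * Fintype.card ι * ∑ i, b i ^ 2 := by
  simp_rw [sub_sq, sum_add_distrib, sum_sub_distrib, mul_assoc, ← mul_sum, ← sum_mul, hb,
    sum_const, card_univ, nsmul_eq_mul, ← mul_sum]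
  ring

lemma sum_powersetCard_filter_swap (k : ℕ) (i j : ι) (g : Finset ι → ℝ) :
    ∑ A ∈ powersetCard k univ with j ∈ A ∧ i ∉ A, g A =
      ∑ A ∈ powersetCard k univ with i ∈ A ∧ j ∉ A, g (A.map (Equiv.swap i j).toEmbedding) := by
  refine (sum_equiv (Equiv.swap i j).finsetCongr (fun A => ?_) fun A _ => rfl).symm
  simp [Finset.mem_map_equiv]

variable (b : ι → ℝ) {s : ℝ}

lemma sum_swap_pair_mul_exp_le (hs : 0 ≤ s) (k : ℕ) (i j : ι) :
    ∑ A ∈ powersetCard k univ with i ∈ A ∧ j ∉ A, (b i - b j) * exp (s * ∑ l ∈ A, b l) +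
      ∑ A ∈ powersetCard k univ with j ∈ A ∧ i ∉ A, (b j - b i) * exp (s * ∑ l ∈ A, b l) ≤
    s * (b i - b j) ^ 2 / 2 * ∑ A ∈ powersetCard k univ, exp (s * ∑ l ∈ A, b l) := by
  set E : Finset ι → ℝ := fun A => exp (s * ∑ l ∈ A, b l)
  set τ : Finset ι → Finset ι := fun A => A.map (Equiv.swap i j).toEmbedding
  have hdisj : ∑ A ∈ powersetCard k univ with i ∈ A ∧ j ∉ A, E A +
      ∑ A ∈ powersetCard k univ with j ∈ A ∧ i ∉ A, E A ≤ ∑ A ∈ powersetCard k univ, E A := by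
    rw [← sum_union (disjoint_filter.2 fun A _ h h' => h.2 h'.1)]
    exact sum_le_sum_of_subset_of_nonneg (union_subset (filter_subset _ _) (filter_subset _ _))
      fun A _ _ => (exp_pos _).le
  calc _ = ∑ A ∈ powersetCard k univ with i ∈ A ∧ j ∉ A,
        (b i - b j) * (E A - E (τ A)) := by
        rw [sum_powersetCard_filter_swap k i j, ← sum_add_distrib]
        exact sum_congr rfl fun A _ => by ring
    _ ≤ ∑ A ∈ powersetCard k univ with i ∈ A ∧ j ∉ A,
        s * (b i - b j) ^ 2 / 2 * (E A + E (τ A)) := by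
        refine sum_le_sum fun A hA => ?_
        obtain ⟨hi, hj⟩ := (mem_filter.1 hA).2
        have := mul_exp_add_mul_sub_exp_le hs (b i - b j) (s * ∑ l ∈ τ A, b l)
        dsimp only [E, τ] at this ⊢
        rw [sum_eq_sum_map_swap_add hi hj, mul_add]
        linarith
    _ ≤ s * (b i - b j) ^ 2 / 2 * ∑ A ∈ powersetCard k univ, E A := by
        rw [← mul_sum, sum_add_distrib, ← sum_powersetCard_filter_swap k i j]
        exact mul_le_mul_of_nonneg_left hdisj (by positivity)

variable {b}

theorem sum_powersetCard_mul_exp_le [Nonempty ι] (hb : ∑ i, b i = 0) (hs : 0 ≤ s) (k : ℕ) :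
    ∑ A ∈ powersetCard k univ, (∑ i ∈ A, b i) * exp (s * ∑ i ∈ A, b i) ≤
      (∑ i, b i ^ 2) / 2 * s * ∑ A ∈ powersetCard k univ, exp (s * ∑ i ∈ A, b i) := by
  set E : Finset ι → ℝ := fun A => exp (s * ∑ l ∈ A, b l)
  set G : ι → ι → ℝ := fun i j =>
    ∑ A ∈ powersetCard k univ with i ∈ A ∧ j ∉ A, (b i - b j) * E A
  have hcount : Fintype.card ι * ∑ A ∈ powersetCard k univ, (∑ i ∈ A, b i) * E A =
      ∑ i, ∑ j, G i j := by
    simp_rw [mul_sum, ← mul_assoc, card_mul_sum_eq_sum_sum_compl hb, sum_mul]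
    exact sum_sum_mem_sum_notMem_comm _ fun A i j => (b i - b j) * E A
  have hsymm : 2 * ∑ i, ∑ j, G i j = ∑ i, ∑ j, (G i j + G j i) := by
    simp_rw [sum_add_distrib]
    rw [sum_comm (f := fun i j => G j i)]
    ring
  have hcard : (0 : ℝ) < 2 * Fintype.card ι := by positivity
  refine le_of_mul_le_mul_left ?_ hcard
  calc 2 * Fintype.card ι * ∑ A ∈ powersetCard k univ, (∑ i ∈ A, b i) * E A
      = ∑ i, ∑ j, (G i j + G j i) := by rw [mul_assoc, hcount, hsymm]
    _ ≤ ∑ i, ∑ j, s * (b i - b j) ^ 2 / 2 * ∑ A ∈ powersetCard k univ, E A := by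
        gcongr with i _ j _
        exact sum_swap_pair_mul_exp_le b hs k i j
    _ = 2 * Fintype.card ι * ((∑ i, b i ^ 2) / 2 * s * ∑ A ∈ powersetCard k univ, E A) := by
        simp_rw [← sum_mul, mul_div_assoc, ← mul_sum, ← sum_div, sum_sum_sub_sq hb]
        ring

theorem sum_powersetCard_exp_le [Nonempty ι] (hb : ∑ i, b i = 0) (k : ℕ) (s : ℝ) :
    ∑ A ∈ powersetCard k univ, exp (s * ∑ i ∈ A, b i) ≤
      #(powersetCard k (univ : Finset ι)) * exp ((∑ i, b i ^ 2) * s ^ 2 / 4) := by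
  wlog hs : 0 ≤ s generalizing b s
  · simpa using this (b := -b) (by simp [hb]) (-s) (by linarith)
  have hderiv : ∀ u, HasDerivAt (fun u => ∑ A ∈ powersetCard k univ, exp (u * ∑ i ∈ A, b i))
      (∑ A ∈ powersetCard k univ, (∑ i ∈ A, b i) * exp (u * ∑ i ∈ A, b i)) u := fun u =>
    HasDerivAt.fun_sum fun A _ => ((hasDerivAt_mul_const _).exp).congr_deriv (mul_comm _ _)
  convert le_mul_exp_of_hasDerivAt_le hderiv (fun u hu => sum_powersetCard_mul_exp_le hb hu k) hs
    using 3
  · simp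
  · ring

end Sampling

theorem mgf_sample_mean_general (n n₁ : ℕ) (hn : 2 ≤ n) (hn₁ : 1 ≤ n₁)
    (a : Fin n → ℝ) (t : ℝ) :
    (∑ A ∈ powersetCard n₁ (univ : Finset (Fin n)),
        Real.exp (t * ((∑ i ∈ A, a i) / (n₁ : ℝ) - (∑ i, a i) / (n : ℝ)))) /
      ((powersetCard n₁ (univ : Finset (Fin n))).card : ℝ)
      ≤ Real.exp
          ((1 / (((n₁ : ℝ) / (n : ℝ)) ^ 2 * (n : ℝ)) *
              ∑ i, (a i - (∑ k, a k) / (n : ℝ)) ^ 2) * t ^ 2 / ((n : ℝ) + 2)) := by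
  have : Nonempty (Fin n) := ⟨⟨0, by omega⟩⟩
  have hnR : (2 : ℝ) ≤ n := by exact_mod_cast hn
  have hn₁R : (n₁ : ℝ) ≠ 0 := Nat.cast_ne_zero.2 (by omega)
  set b : Fin n → ℝ := fun i => a i - (∑ k, a k) / n
  have hb : ∑ i, b i = 0 := by
    simp only [b, sum_sub_distrib, sum_const, card_univ, Fintype.card_fin, nsmul_eq_mul]
    field_simp
    ring
  have hexponent : ∀ A ∈ powersetCard n₁ (univ : Finset (Fin n)),
      t * ((∑ i ∈ A, a i) / n₁ - (∑ i, a i) / n) = t / n₁ * ∑ i ∈ A, b i := fun A hA => by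
    simp only [b, sum_sub_distrib, sum_const, (mem_powersetCard_univ.1 hA), nsmul_eq_mul]
    field_simp
  rw [sum_congr rfl fun A hA => congrArg exp (hexponent A hA)]
  refine div_le_of_le_mul₀ (by positivity) (exp_pos _).le ?_
  refine (sum_powersetCard_exp_le hb n₁ (t / n₁)).trans ?_
  rw [mul_comm (exp _)]
  refine mul_le_mul_of_nonneg_left (exp_le_exp.2 ?_) (Nat.cast_nonneg _)
  have hquarter : (1 : ℝ) / 4 ≤ n / (n + 2) := by
    rw [div_le_div_iff₀ (by norm_num) (by positivity)]
    linarith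
  calc (∑ i, b i ^ 2) * (t / n₁) ^ 2 / 4 = (∑ i, b i ^ 2) * t ^ 2 / n₁ ^ 2 * (1 / 4) := by ring
    _ ≤ (∑ i, b i ^ 2) * t ^ 2 / n₁ ^ 2 * (n / (n + 2)) := by gcongr
    _ = (1 / ((n₁ / n : ℝ) ^ 2 * n) * ∑ i, b i ^ 2) * t ^ 2 / (n + 2) := by field_simp

/-- **MGF bound for the sample mean under sampling without replacement.**
`Z` is uniform on `G = {z ∈ {0,1}ⁿ : ∑ zᵢ = n₁}`, encoded by the `n₁`-element subsets
`A` of `Fin n`.  With `ā₁(A) = n₁⁻¹ ∑_{i∈A} aᵢ`, `ā = n⁻¹ ∑ᵢ aᵢ`, `e_c = n₁/n` and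
`σ²_mean = (e_c² n)⁻¹ ∑ᵢ (aᵢ − ā)²`, for every real `t`,
`E[exp(t(ā₁(Z) − ā))] ≤ exp(σ²_mean t²/(n+2))`. -/
theorem mgf_sample_mean (n n₁ : ℕ) (hn : 2 ≤ n) (hn₁ : 1 ≤ n₁) (hn₁' : n₁ ≤ n - 1)
    (a : Fin n → ℝ) (t : ℝ) :
    (∑ A ∈ powersetCard n₁ (univ : Finset (Fin n)),
        Real.exp (t * ((∑ i ∈ A, a i) / (n₁ : ℝ) - (∑ i, a i) / (n : ℝ)))) /
      ((powersetCard n₁ (univ : Finset (Fin n))).card : ℝ)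
      ≤ Real.exp
          ((1 / (((n₁ : ℝ) / (n : ℝ)) ^ 2 * (n : ℝ)) *
              ∑ i, (a i - (∑ k, a k) / (n : ℝ)) ^ 2) * t ^ 2 / ((n : ℝ) + 2)) :=
  mgf_sample_mean_general n n₁ hn hn₁ a t
end

section
/- (Discrete gradient bound for the sample covariance.) For every z ∈ G, ∑_{i : z_i = 1} ∑_{j : z_j = 0} (s_{ab}(z) − s_{ab}(z^{i,j}))² ≤ σ²_cov, where σ_cov = sqrt( (e_c² n)⁻¹ ∑_{i=1}^n (a_i − ā)²(b_i − b̄)² ) + sqrt( 8 (e_c³ n²)⁻¹ ∑_{i=1}^n (a_i − ā)² · ∑_{i=1}^n (b_i − b̄)² ). -/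
open Finset

/-!
Write `f`, `g` for the centred vectors `a - ā`, `b - b̄` (the sample covariance does not see the
centring) and `F`, `G` for their sums over `A`. The shortcut formula for the covariance shows that
swapping `i ∈ A` for `j ∉ A` changes `s_ab` by
`(fᵢgᵢ - f_jg_j)/n₁ + ((F - fᵢ)(g_j - gᵢ) + (G - gᵢ)(f_j - fᵢ))/(n₁(n₁ - 1))`,
so by Minkowski's inequality on `A × Aᶜ` the three terms can be bounded separately. The first
contributes at most `n ∑ (fᵢgᵢ)² / n₁²`. In the others `F - fᵢ` is a sum of `n₁ - 1` entries of
a centred vector, whence `n (F - fᵢ)² ≤ (n₁ - 1)(n - n₁ + 1) ∑ f²`, while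
`∑_{j ∉ A} (g_j - gᵢ)² ≤ ∑ g² + n gᵢ²`; together they give `2n/n₁³ ∑ f² ∑ g²` for each term.
-/

section Minkowski

variable {α β : Type*}

theorem sqrt_sum_sq_add_le (s : Finset α) (u v : α → ℝ) :
    √(∑ i ∈ s, (u i + v i) ^ 2) ≤ √(∑ i ∈ s, u i ^ 2) + √(∑ i ∈ s, v i ^ 2) := by
  have hexp : ∑ i ∈ s, (u i + v i) ^ 2
      = ∑ i ∈ s, u i ^ 2 + 2 * ∑ i ∈ s, u i * v i + ∑ i ∈ s, v i ^ 2 := by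
    simp only [add_sq, sum_add_distrib, mul_assoc, ← mul_sum]
  rw [Real.sqrt_le_left (by positivity), add_sq, Real.sq_sqrt (by positivity),
    Real.sq_sqrt (by positivity), hexp]
  linarith [Real.sum_mul_le_sqrt_mul_sqrt s u v]

theorem sqrt_sum_sum_sq_add_le (s : Finset α) (t : Finset β) (u v : α → β → ℝ) :
    √(∑ i ∈ s, ∑ j ∈ t, (u i j + v i j) ^ 2)
      ≤ √(∑ i ∈ s, ∑ j ∈ t, u i j ^ 2) + √(∑ i ∈ s, ∑ j ∈ t, v i j ^ 2) := by
  simp only [← sum_product']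
  exact sqrt_sum_sq_add_le _ (fun p : α × β ↦ u p.1 p.2) (fun p ↦ v p.1 p.2)

end Minkowski

theorem sum_sq_sum_sub {ι : Type*} (s : Finset ι) (f : ι → ℝ) :
    ∑ i ∈ s, (∑ k ∈ s, f k - f i) ^ 2 = (#s - 2) * (∑ k ∈ s, f k) ^ 2 + ∑ i ∈ s, f i ^ 2 := by
  simp only [sub_sq, sum_add_distrib, sum_sub_distrib, ← mul_sum, sum_const, nsmul_eq_mul]
  ring

section Centered

variable {ι : Type*} [Fintype ι] {f g : ι → ℝ}

theorem sum_sub_div_card_eq_zero (a : ι → ℝ) (h : Fintype.card ι ≠ 0) :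
    ∑ i, (a i - (∑ k, a k) / Fintype.card ι) = 0 := by
  rw [sum_sub_distrib, sum_const, card_univ, nsmul_eq_mul,
    mul_div_cancel₀ _ (by exact_mod_cast h), sub_self]

theorem sum_sub_const_sq_of_sum_eq_zero (hg : ∑ i, g i = 0) (c : ℝ) :
    ∑ j, (g j - c) ^ 2 = ∑ j, g j ^ 2 + Fintype.card ι * c ^ 2 := by
  simp only [sub_sq, sum_add_distrib, sum_sub_distrib, ← sum_mul, ← mul_sum, hg, sum_const,
    card_univ, nsmul_eq_mul]
  ring

variable [DecidableEq ι]

theorem sum_sum_compl_sub_sq_le (h : ι → ℝ) (s : Finset ι) :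
    ∑ i ∈ s, ∑ j ∈ sᶜ, (h i - h j) ^ 2 ≤ Fintype.card ι * ∑ i, h i ^ 2 := by
  have hexp : ∑ i ∈ s, ∑ j ∈ sᶜ, (h i - h j) ^ 2
      = #sᶜ * ∑ i ∈ s, h i ^ 2 - 2 * (∑ i ∈ s, h i) * (∑ j ∈ sᶜ, h j)
        + #s * ∑ j ∈ sᶜ, h j ^ 2 := by
    simp only [sub_sq, sum_add_distrib, sum_sub_distrib, sum_const, nsmul_eq_mul, mul_sum,
      sum_mul, mul_assoc]
    rw [sum_comm (s := s) (t := sᶜ) (f := fun i j ↦ 2 * (h i * h j))]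
  have hN : (Fintype.card ι : ℝ) = #s + #sᶜ := by exact_mod_cast (card_add_card_compl s).symm
  have hs := sq_sum_le_card_mul_sum_sq (s := s) (f := h)
  have hsc := sq_sum_le_card_mul_sum_sq (s := sᶜ) (f := h)
  rw [← sum_add_sum_compl s (fun i ↦ h i ^ 2), hexp, hN]
  nlinarith [sq_nonneg (∑ i ∈ s, h i + ∑ j ∈ sᶜ, h j)]

theorem card_mul_sq_sum_le_of_sum_eq_zero (hf : ∑ i, f i = 0) (s : Finset ι) :
    Fintype.card ι * (∑ i ∈ s, f i) ^ 2 ≤ #s * (Fintype.card ι - #s) * ∑ i, f i ^ 2 := by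
  have hcompl : ∑ i ∈ sᶜ, f i = -∑ i ∈ s, f i := by linarith [sum_add_sum_compl s f]
  have hN : (Fintype.card ι : ℝ) = #s + #sᶜ := by exact_mod_cast (card_add_card_compl s).symm
  have hs := sq_sum_le_card_mul_sum_sq (s := s) (f := f)
  have hsc := sq_sum_le_card_mul_sum_sq (s := sᶜ) (f := f)
  rw [hcompl, neg_sq] at hsc
  rw [← sum_add_sum_compl s (fun i ↦ f i ^ 2), hN]
  nlinarith [mul_le_mul_of_nonneg_left hs (Nat.cast_nonneg (α := ℝ) #sᶜ),
    mul_le_mul_of_nonneg_left hsc (Nat.cast_nonneg (α := ℝ) #s)]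

theorem card_mul_sq_sum_sub_le_of_sum_eq_zero (hf : ∑ i, f i = 0) {s : Finset ι} {i : ι}
    (hi : i ∈ s) :
    Fintype.card ι * (∑ k ∈ s, f k - f i) ^ 2
      ≤ (#s - 1) * (Fintype.card ι - #s + 1) * ∑ k, f k ^ 2 := by
  have h := card_mul_sq_sum_le_of_sum_eq_zero hf (s.erase i)
  rw [card_erase_of_mem hi, Nat.cast_sub (one_le_card.mpr ⟨i, hi⟩), Nat.cast_one] at h
  rw [← sum_erase_eq_sub hi]
  linarith

theorem card_mul_sum_sq_sum_sub_le_of_sum_eq_zero (hf : ∑ i, f i = 0) {s : Finset ι}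
    (hs : 2 ≤ #s) :
    Fintype.card ι * ∑ i ∈ s, (∑ k ∈ s, f k - f i) ^ 2
      ≤ ((#s - 2) * #s * (Fintype.card ι - #s) + Fintype.card ι) * ∑ k, f k ^ 2 := by
  have hS := card_mul_sq_sum_le_of_sum_eq_zero hf s
  have hsub : ∑ i ∈ s, f i ^ 2 ≤ ∑ k, f k ^ 2 :=
    sum_le_sum_of_subset_of_nonneg (subset_univ s) fun _ _ _ ↦ sq_nonneg _
  have hs2 : (0 : ℝ) ≤ #s - 2 := by rw [sub_nonneg]; exact_mod_cast hs
  rw [sum_sq_sum_sub]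
  nlinarith [mul_le_mul_of_nonneg_left hS hs2,
    mul_le_mul_of_nonneg_left hsub (Nat.cast_nonneg (α := ℝ) (Fintype.card ι))]

theorem card_mul_sum_sum_compl_sq_le_of_sum_eq_zero (hf : ∑ i, f i = 0) (hg : ∑ i, g i = 0)
    {s : Finset ι} (hs : 2 ≤ #s) :
    Fintype.card ι * ∑ i ∈ s, ∑ j ∈ sᶜ, ((∑ k ∈ s, f k - f i) * (g j - g i)) ^ 2
      ≤ (Fintype.card ι * (#s - 1) * (Fintype.card ι - #s + 1)
          + ((#s - 2) * #s * (Fintype.card ι - #s) + Fintype.card ι))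
        * ((∑ k, f k ^ 2) * ∑ k, g k ^ 2) := by
  set N : ℝ := (Fintype.card ι : ℝ)
  set u : ι → ℝ := fun i ↦ ∑ k ∈ s, f k - f i
  have hinner (i : ι) : ∑ j ∈ sᶜ, (g j - g i) ^ 2 ≤ ∑ k, g k ^ 2 + N * g i ^ 2 := by
    rw [← sum_sub_const_sq_of_sum_eq_zero hg]
    exact sum_le_sum_of_subset_of_nonneg (subset_univ _) fun _ _ _ ↦ sq_nonneg _
  have hsplit : ∑ i ∈ s, ∑ j ∈ sᶜ, (u i * (g j - g i)) ^ 2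
      ≤ (∑ k, g k ^ 2) * ∑ i ∈ s, u i ^ 2 + ∑ i ∈ s, N * u i ^ 2 * g i ^ 2 := calc
    _ = ∑ i ∈ s, u i ^ 2 * ∑ j ∈ sᶜ, (g j - g i) ^ 2 := by simp only [mul_pow, mul_sum]
    _ ≤ ∑ i ∈ s, u i ^ 2 * (∑ k, g k ^ 2 + N * g i ^ 2) :=
      sum_le_sum fun i _ ↦ mul_le_mul_of_nonneg_left (hinner i) (sq_nonneg _)
    _ = _ := by rw [mul_sum, ← sum_add_distrib]; exact sum_congr rfl fun _ _ ↦ by ring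
  have hK : 0 ≤ (#s - 1) * (N - #s + 1) * ∑ k, f k ^ 2 := by
    have hsN : (#s : ℝ) ≤ N := by simp only [N]; exact_mod_cast card_le_univ s
    have hs2 : (2 : ℝ) ≤ #s := by exact_mod_cast hs
    exact mul_nonneg (mul_nonneg (by linarith) (by linarith)) (by positivity)
  have hpoint : ∑ i ∈ s, N * u i ^ 2 * g i ^ 2
      ≤ (#s - 1) * (N - #s + 1) * (∑ k, f k ^ 2) * ∑ k, g k ^ 2 := calc
    _ ≤ ∑ i ∈ s, (#s - 1) * (N - #s + 1) * (∑ k, f k ^ 2) * g i ^ 2 :=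
      sum_le_sum fun i hi ↦ mul_le_mul_of_nonneg_right
        (card_mul_sq_sum_sub_le_of_sum_eq_zero hf hi) (sq_nonneg _)
    _ = (#s - 1) * (N - #s + 1) * (∑ k, f k ^ 2) * ∑ i ∈ s, g i ^ 2 := (mul_sum ..).symm
    _ ≤ _ := mul_le_mul_of_nonneg_left
      (sum_le_sum_of_subset_of_nonneg (subset_univ s) fun _ _ _ ↦ sq_nonneg _) hK
  have hsum := card_mul_sum_sq_sum_sub_le_of_sum_eq_zero hf hs
  have hN : 0 ≤ N := Nat.cast_nonneg _
  have hG : 0 ≤ ∑ k, g k ^ 2 := by positivity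
  nlinarith [mul_le_mul_of_nonneg_left hsplit hN, mul_le_mul_of_nonneg_left hsum hG,
    mul_le_mul_of_nonneg_left hpoint hN]

theorem sum_sum_compl_sq_div_le_of_sum_eq_zero (hf : ∑ i, f i = 0) (hg : ∑ i, g i = 0)
    {s : Finset ι} (hs : 2 ≤ #s) (hsN : #s < Fintype.card ι) :
    ∑ i ∈ s, ∑ j ∈ sᶜ, ((∑ k ∈ s, f k - f i) * (g j - g i) / (#s * (#s - 1))) ^ 2
      ≤ 2 * Fintype.card ι / #s ^ 3 * ((∑ k, f k ^ 2) * ∑ k, g k ^ 2) := by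
  have hbound := card_mul_sum_sum_compl_sq_le_of_sum_eq_zero hf hg hs
  simp only [div_pow, ← sum_div]
  set T := ∑ i ∈ s, ∑ j ∈ sᶜ, ((∑ k ∈ s, f k - f i) * (g j - g i)) ^ 2
  set m : ℝ := (#s : ℝ)
  set N : ℝ := (Fintype.card ι : ℝ)
  set FG := (∑ k, f k ^ 2) * ∑ k, g k ^ 2
  have hm : 2 ≤ m := by simp only [m]; exact_mod_cast hs
  have hmN : m + 1 ≤ N := by simp only [m, N]; exact_mod_cast hsN
  have hFG : 0 ≤ FG := by positivity
  -- Equality holds at `m = 2`, `N = 3`: this is where the constant `8` of the theorem comes from.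
  have hpoly : m * (N * (m - 1) * (N - m + 1) + ((m - 2) * m * (N - m) + N))
      ≤ 2 * N ^ 2 * (m - 1) ^ 2 := by
    have h1 : 0 ≤ m - 2 := by linarith
    have h2 : 0 ≤ N - m - 1 := by linarith
    nlinarith [mul_nonneg h1 h2, mul_nonneg (mul_nonneg h1 h2) h2,
      mul_nonneg (mul_nonneg h1 h1) h2]
  have hmT : m * T ≤ 2 * N * (m - 1) ^ 2 * FG := by
    refine le_of_mul_le_mul_left ?_ (by linarith : 0 < N)
    nlinarith [mul_le_mul_of_nonneg_left hbound (by linarith : 0 ≤ m),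
      mul_le_mul_of_nonneg_right hpoly hFG]
  rw [div_le_iff₀ (pow_pos (mul_pos (by linarith) (by linarith)) 2),
    show 2 * N / m ^ 3 * FG * (m * (m - 1)) ^ 2 = 2 * N * (m - 1) ^ 2 * FG / m by field_simp,
    le_div_iff₀ (by positivity)]
  linarith

end Centered

section SampleCov

variable {ι : Type*} [DecidableEq ι]

/-- The divisor `m` is the fixed sample size (`n₁` in `s_ab`), not `#s`. -/
noncomputable def sampleCov (m : ℕ) (f g : ι → ℝ) (s : Finset ι) : ℝ :=
  1 / ((m : ℝ) - 1) * ∑ i ∈ s, (f i - (∑ k ∈ s, f k) / m) * (g i - (∑ k ∈ s, g k) / m)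

omit [DecidableEq ι] in
theorem sampleCov_sub_const {m : ℕ} {s : Finset ι} (hs : #s = m) (f g : ι → ℝ) (c d : ℝ) :
    sampleCov m (fun i ↦ f i - c) (fun i ↦ g i - d) s = sampleCov m f g s := by
  obtain rfl | hne := s.eq_empty_or_nonempty
  · simp [sampleCov]
  have hm : (m : ℝ) ≠ 0 := by rw [← hs]; exact_mod_cast hne.card_pos.ne'
  simp only [sampleCov, sum_sub_distrib, sum_const, hs, nsmul_eq_mul]
  congr 1
  refine sum_congr rfl fun i _ ↦ ?_
  field_simp
  ring

omit [DecidableEq ι] in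
theorem sampleCov_eq {m : ℕ} {s : Finset ι} (hs : #s = m) (f g : ι → ℝ) :
    sampleCov m f g s
      = (∑ i ∈ s, f i * g i - (∑ i ∈ s, f i) * (∑ i ∈ s, g i) / m) / (m - 1) := by
  obtain rfl | hne := s.eq_empty_or_nonempty
  · simp [sampleCov]
  have hm : (m : ℝ) ≠ 0 := by rw [← hs]; exact_mod_cast hne.card_pos.ne'
  simp only [sampleCov, sub_mul, mul_sub, sum_sub_distrib, ← sum_mul, ← mul_sum, sum_const, hs,
    nsmul_eq_mul]
  field_simp
  ring

theorem card_insert_erase_of_mem_of_notMem {s : Finset ι} {i j : ι} (hi : i ∈ s) (hj : j ∉ s) :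
    #(insert j (s.erase i)) = #s := by
  rw [card_insert_of_notMem (fun h ↦ hj (mem_of_mem_erase h)), card_erase_add_one hi]

theorem sum_insert_erase_of_mem_of_notMem {s : Finset ι} {i j : ι} (hi : i ∈ s) (hj : j ∉ s)
    (h : ι → ℝ) : ∑ k ∈ insert j (s.erase i), h k = ∑ k ∈ s, h k - h i + h j := by
  rw [sum_insert (fun h ↦ hj (mem_of_mem_erase h)), sum_erase_eq_sub hi, add_comm]

theorem sampleCov_sub_sampleCov_insert_erase {m : ℕ} {s : Finset ι} (hs : #s = m) (hm : 2 ≤ m)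
    {i j : ι} (hi : i ∈ s) (hj : j ∉ s) (f g : ι → ℝ) :
    sampleCov m f g s - sampleCov m f g (insert j (s.erase i))
      = (f i * g i - f j * g j) / m
        + ((∑ k ∈ s, f k - f i) * (g j - g i) / (m * (m - 1))
          + (∑ k ∈ s, g k - g i) * (f j - f i) / (m * (m - 1))) := by
  have hm0 : (m : ℝ) ≠ 0 := by positivity
  have hm1 : (m : ℝ) - 1 ≠ 0 := by
    have : (2 : ℝ) ≤ m := by exact_mod_cast hm
    linarith
  rw [sampleCov_eq hs, sampleCov_eq ((card_insert_erase_of_mem_of_notMem hi hj).trans hs),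
    sum_insert_erase_of_mem_of_notMem hi hj, sum_insert_erase_of_mem_of_notMem hi hj,
    sum_insert_erase_of_mem_of_notMem hi hj]
  field_simp
  ring

end SampleCov

section Gradient

variable {ι : Type*} [Fintype ι] [DecidableEq ι]

theorem sum_sum_compl_sq_sampleCov_sub_le_of_sum_eq_zero {f g : ι → ℝ} (hf : ∑ i, f i = 0)
    (hg : ∑ i, g i = 0) {m : ℕ} {s : Finset ι} (hs : #s = m) (hm : 2 ≤ m)
    (hmN : m < Fintype.card ι) :
    ∑ i ∈ s, ∑ j ∈ sᶜ, (sampleCov m f g s - sampleCov m f g (insert j (s.erase i))) ^ 2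
      ≤ (√(Fintype.card ι / m ^ 2 * ∑ i, f i ^ 2 * g i ^ 2)
          + √(8 * Fintype.card ι / m ^ 3 * ((∑ i, f i ^ 2) * ∑ i, g i ^ 2))) ^ 2 := by
  set N : ℝ := (Fintype.card ι : ℝ)
  set R : ℝ := 2 * N / m ^ 3 * ((∑ i, f i ^ 2) * ∑ i, g i ^ 2)
  have hmain : ∑ i ∈ s, ∑ j ∈ sᶜ, ((f i * g i - f j * g j) / m) ^ 2
      ≤ N / m ^ 2 * ∑ i, f i ^ 2 * g i ^ 2 := calc
    _ = (∑ i ∈ s, ∑ j ∈ sᶜ, (f i * g i - f j * g j) ^ 2) / m ^ 2 := by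
      simp only [div_pow, sum_div]
    _ ≤ N * (∑ i, (f i * g i) ^ 2) / m ^ 2 := by
      gcongr; exact sum_sum_compl_sub_sq_le (fun i ↦ f i * g i) s
    _ = _ := by simp only [mul_pow]; ring
  have hfg := hs ▸ sum_sum_compl_sq_div_le_of_sum_eq_zero hf hg (hs ▸ hm) (hs ▸ hmN)
  have hgf := hs ▸ sum_sum_compl_sq_div_le_of_sum_eq_zero hg hf (hs ▸ hm) (hs ▸ hmN)
  rw [mul_comm (∑ i, g i ^ 2)] at hgf
  have hsqrt : √(8 * N / m ^ 3 * ((∑ i, f i ^ 2) * ∑ i, g i ^ 2)) = √R + √R := by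
    rw [← two_mul, show 8 * N / m ^ 3 * ((∑ i, f i ^ 2) * ∑ i, g i ^ 2) = 2 ^ 2 * R by ring,
      Real.sqrt_mul (by norm_num), Real.sqrt_sq (by norm_num)]
  refine (Real.sqrt_le_left (by positivity)).mp ?_
  rw [sum_congr rfl fun i hi ↦ sum_congr rfl fun j hj ↦ by
    rw [sampleCov_sub_sampleCov_insert_erase hs hm hi (mem_compl.mp hj)], hsqrt]
  calc _ ≤ _ := sqrt_sum_sum_sq_add_le _ _ _ _
    _ ≤ _ := add_le_add_right (sqrt_sum_sum_sq_add_le _ _ _ _) _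
    _ ≤ _ := by gcongr

theorem sum_sum_compl_sq_sampleCov_sub_le (a b : ι → ℝ) {m : ℕ} {s : Finset ι} (hs : #s = m)
    (hm : 2 ≤ m) (hmN : m < Fintype.card ι) :
    let abar := (∑ i, a i) / Fintype.card ι
    let bbar := (∑ i, b i) / Fintype.card ι
    ∑ i ∈ s, ∑ j ∈ sᶜ, (sampleCov m a b s - sampleCov m a b (insert j (s.erase i))) ^ 2
      ≤ (√(Fintype.card ι / m ^ 2 * ∑ i, (a i - abar) ^ 2 * (b i - bbar) ^ 2)
          + √(8 * Fintype.card ι / m ^ 3 * ((∑ i, (a i - abar) ^ 2) * ∑ i, (b i - bbar) ^ 2)))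
        ^ 2 := by
  intro abar bbar
  have hcentre {t : Finset ι} (ht : #t = m) :
      sampleCov m a b t = sampleCov m (fun i ↦ a i - abar) (fun i ↦ b i - bbar) t :=
    (sampleCov_sub_const ht a b abar bbar).symm
  rw [hcentre hs, sum_congr rfl fun i hi ↦ sum_congr rfl fun j hj ↦ by
    rw [hcentre ((card_insert_erase_of_mem_of_notMem hi (mem_compl.mp hj)).trans hs)]]
  exact sum_sum_compl_sq_sampleCov_sub_le_of_sum_eq_zero (sum_sub_div_card_eq_zero a (by omega))
    (sum_sub_div_card_eq_zero b (by omega)) hs hm hmN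

end Gradient

theorem grad_sample_cov_bound_general (n n₁ : ℕ) (hn₁ : 2 ≤ n₁) (hn₁' : n₁ ≤ n - 1)
    (a b : Fin n → ℝ) :
    let abar : ℝ := (∑ i, a i) / (n : ℝ)
    let bbar : ℝ := (∑ i, b i) / (n : ℝ)
    let sab : Finset (Fin n) → ℝ := fun A =>
      (1 / ((n₁ : ℝ) - 1)) *
        ∑ i ∈ A, (a i - (∑ k ∈ A, a k) / (n₁ : ℝ)) * (b i - (∑ k ∈ A, b k) / (n₁ : ℝ))
    let ec : ℝ := (n₁ : ℝ) / (n : ℝ)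
    let σcov : ℝ :=
      Real.sqrt (1 / (ec ^ 2 * (n : ℝ)) * ∑ i, (a i - abar) ^ 2 * (b i - bbar) ^ 2) +
        Real.sqrt (8 / (ec ^ 3 * (n : ℝ) ^ 2) *
          ((∑ i, (a i - abar) ^ 2) * ∑ i, (b i - bbar) ^ 2))
    ∀ A ∈ powersetCard n₁ (univ : Finset (Fin n)),
      ∑ i ∈ A, ∑ j ∈ Aᶜ, (sab A - sab (insert j (A.erase i))) ^ 2 ≤ σcov ^ 2 := by
  intro abar bbar sab ec σcov A hA
  have hbound := sum_sum_compl_sq_sampleCov_sub_le a b (mem_powersetCard_univ.mp hA) hn₁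
    (by simp only [Fintype.card_fin]; omega)
  simp only [Fintype.card_fin] at hbound
  have hn : (n : ℝ) ≠ 0 := by norm_cast; omega
  have hn₁0 : (n₁ : ℝ) ≠ 0 := by norm_cast; omega
  have hX : 1 / (ec ^ 2 * n) = n / n₁ ^ 2 := by simp only [ec]; field_simp
  have hY : 8 / (ec ^ 3 * n ^ 2) = 8 * n / n₁ ^ 3 := by simp only [ec]; field_simp
  simp only [σcov, hX, hY]
  exact hbound

/-- **Discrete gradient bound for the sample covariance.**
For every `z ∈ G` (encoded as an `n₁`-element subset `A` of `Fin n`, with neighbour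
`z^{i,j} = insert j (A.erase i)` for `i ∈ A`, `j ∉ A`),
`∑_{i∈A} ∑_{j∉A} (s_ab(A) − s_ab(A^{i,j}))² ≤ σ²_cov`, where
`σ_cov = sqrt((e_c² n)⁻¹ ∑ (aᵢ−ā)²(bᵢ−b̄)²) + sqrt(8(e_c³ n²)⁻¹ ∑(aᵢ−ā)² ∑(bᵢ−b̄)²)`. -/
theorem grad_sample_cov_bound (n n₁ : ℕ) (hn : 3 ≤ n) (hn₁ : 2 ≤ n₁) (hn₁' : n₁ ≤ n - 1)
    (a b : Fin n → ℝ) :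
    let abar : ℝ := (∑ i, a i) / (n : ℝ)
    let bbar : ℝ := (∑ i, b i) / (n : ℝ)
    let sab : Finset (Fin n) → ℝ := fun A =>
      (1 / ((n₁ : ℝ) - 1)) *
        ∑ i ∈ A, (a i - (∑ k ∈ A, a k) / (n₁ : ℝ)) * (b i - (∑ k ∈ A, b k) / (n₁ : ℝ))
    let ec : ℝ := (n₁ : ℝ) / (n : ℝ)
    let σcov : ℝ :=
      Real.sqrt (1 / (ec ^ 2 * (n : ℝ)) * ∑ i, (a i - abar) ^ 2 * (b i - bbar) ^ 2) +
        Real.sqrt (8 / (ec ^ 3 * (n : ℝ) ^ 2) *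
          ((∑ i, (a i - abar) ^ 2) * ∑ i, (b i - bbar) ^ 2))
    ∀ A ∈ powersetCard n₁ (univ : Finset (Fin n)),
      ∑ i ∈ A, ∑ j ∈ Aᶜ, (sab A - sab (insert j (A.erase i))) ^ 2 ≤ σcov ^ 2 :=
  grad_sample_cov_bound_general n n₁ hn₁ hn₁' a b
end

section
/- (Weighted bound on the block gradient constants.) Define for each block m the constant σ_{[m]cov} = sqrt( (e_{[m]}² n_{[m]})⁻¹ ∑_{i∈[m]} (a_i − ā_{[m]})²(b_i − b̄_{[m]})² ) + sqrt( 8 (e_{[m]}³ n_{[m]}²)⁻¹ ∑_{i∈[m]} (a_i − ā_{[m]})² · ∑_{i∈[m]} (b_i − b̄_{[m]})² ), and set κ_a⁴ = n⁻¹ ∑_{m=1}^M ∑_{i∈[m]} (a_i − ā_{[m]})⁴ / e_{[m]}³ and κ_b⁴ = n⁻¹ ∑_{m=1}^M ∑_{i∈[m]} (b_i − b̄_{[m]})⁴ / e_{[m]}³. Then ∑_{m=1}^M π_{[m]} σ²_{[m]cov} ≤ 15 (κ_a⁴ κ_b⁴)^{1/2}. -/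
open Finset

set_option maxHeartbeats 1600000 in
/-- **Weighted bound on the block gradient constants.**
A population of `n = ∑ₘ n_[m]` units is partitioned into `M` blocks; block `m` carries
units `Fin (nb m)`, weight `π_[m] = n_[m]/n` and a number `e_[m] ∈ (0,1]`.  With the
block constants `σ_[m]cov` and `κ_a⁴, κ_b⁴` as in the statement,
`∑ₘ π_[m] σ²_[m]cov ≤ 15 (κ_a⁴ κ_b⁴)^{1/2}`. -/
theorem weighted_block_gradient_bound (M : ℕ) (nb : Fin M → ℕ) (hnb : ∀ m, 2 ≤ nb m)
    (e : Fin M → ℝ) (he0 : ∀ m, 0 < e m) (he1 : ∀ m, e m ≤ 1)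
    (a b : (m : Fin M) → Fin (nb m) → ℝ) :
    let n : ℝ := ∑ m, (nb m : ℝ)
    let π : Fin M → ℝ := fun m => (nb m : ℝ) / n
    let abar : (m : Fin M) → ℝ := fun m => (∑ i, a m i) / (nb m : ℝ)
    let bbar : (m : Fin M) → ℝ := fun m => (∑ i, b m i) / (nb m : ℝ)
    let σcov : Fin M → ℝ := fun m =>
      Real.sqrt (1 / (e m ^ 2 * (nb m : ℝ)) *
          ∑ i, (a m i - abar m) ^ 2 * (b m i - bbar m) ^ 2) +
        Real.sqrt (8 / (e m ^ 3 * (nb m : ℝ) ^ 2) *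
          ((∑ i, (a m i - abar m) ^ 2) * ∑ i, (b m i - bbar m) ^ 2))
    let κa4 : ℝ := (1 / n) * ∑ m, ∑ i, (a m i - abar m) ^ 4 / e m ^ 3
    let κb4 : ℝ := (1 / n) * ∑ m, ∑ i, (b m i - bbar m) ^ 4 / e m ^ 3
    ∑ m, π m * σcov m ^ 2 ≤ 15 * Real.sqrt (κa4 * κb4) := by
  intro n π abar bbar σcov κa4 κb4
  rcases Nat.eq_zero_or_pos M with hM | hM
  · have h1 : ∑ m, π m * σcov m ^ 2 = 0 := by
      subst hM; simp
    rw [h1]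
    positivity
  -- n > 0
  have hn : (0:ℝ) < n := by
    have h2 : (2:ℝ) ≤ (nb ⟨0, hM⟩ : ℝ) := by exact_mod_cast hnb ⟨0, hM⟩
    have h3 : (nb ⟨0, hM⟩ : ℝ) ≤ n :=
      Finset.single_le_sum (f := fun m => (nb m : ℝ)) (fun m _ => Nat.cast_nonneg _)
        (mem_univ _)
    linarith
  set u : Fin M → ℝ := fun m => ∑ i, (a m i - abar m) ^ 4 / e m ^ 3 with hu
  set v : Fin M → ℝ := fun m => ∑ i, (b m i - bbar m) ^ 4 / e m ^ 3 with hv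
  have hu0 : ∀ m, 0 ≤ u m := fun m => sum_nonneg fun i _ => by
    have := he0 m; positivity
  have hv0 : ∀ m, 0 ≤ v m := fun m => sum_nonneg fun i _ => by
    have := he0 m; positivity
  have key : ∀ m : Fin M, π m * σcov m ^ 2 ≤ (15 / n) * Real.sqrt (u m * v m) := by
    intro m
    have hnm : (0:ℝ) < (nb m : ℝ) := by
      have := hnb m; exact_mod_cast Nat.lt_of_lt_of_le two_pos this
    have he := he0 m
    have he3 : (0:ℝ) < e m ^ 3 := by positivity
    set Qa := ∑ i, (a m i - abar m) ^ 4 with hQa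
    set Qb := ∑ i, (b m i - bbar m) ^ 4 with hQb
    set Sa := ∑ i, (a m i - abar m) ^ 2 with hSa
    set Sb := ∑ i, (b m i - bbar m) ^ 2 with hSb
    set A := ∑ i, (a m i - abar m) ^ 2 * (b m i - bbar m) ^ 2 with hA
    have hQa0 : 0 ≤ Qa := sum_nonneg fun i _ => by positivity
    have hQb0 : 0 ≤ Qb := sum_nonneg fun i _ => by positivity
    have hSa0 : 0 ≤ Sa := sum_nonneg fun i _ => by positivity
    have hSb0 : 0 ≤ Sb := sum_nonneg fun i _ => by positivity
    have hA0 : 0 ≤ A := sum_nonneg fun i _ => by positivity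
    -- Cauchy-Schwarz: A ≤ √(Qa Qb)
    have hCS1 : A ^ 2 ≤ Qa * Qb := by
      have h := Finset.sum_mul_sq_le_sq_mul_sq univ
        (fun i => (a m i - abar m) ^ 2) (fun i => (b m i - bbar m) ^ 2)
      calc A ^ 2 ≤ (∑ i, ((a m i - abar m) ^ 2) ^ 2) * ∑ i, ((b m i - bbar m) ^ 2) ^ 2 := h
        _ = Qa * Qb := by rw [hQa, hQb]; norm_num [← pow_mul]
    have hAle : A ≤ Real.sqrt (Qa * Qb) := by
      rw [← Real.sqrt_sq hA0]
      exact Real.sqrt_le_sqrt hCS1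
    -- Cauchy-Schwarz: Sa² ≤ nb m * Qa, Sb² ≤ nb m * Qb
    have hSa2 : Sa ^ 2 ≤ (nb m : ℝ) * Qa := by
      have h := Finset.sum_mul_sq_le_sq_mul_sq univ
        (fun _ : Fin (nb m) => (1:ℝ)) (fun i => (a m i - abar m) ^ 2)
      calc Sa ^ 2 = (∑ i, (1:ℝ) * (a m i - abar m) ^ 2) ^ 2 := by rw [hSa]; norm_num
        _ ≤ (∑ _i : Fin (nb m), (1:ℝ) ^ 2) * ∑ i, ((a m i - abar m) ^ 2) ^ 2 := h
        _ = (nb m : ℝ) * Qa := by rw [hQa]; norm_num [← pow_mul, card_univ]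
    have hSb2 : Sb ^ 2 ≤ (nb m : ℝ) * Qb := by
      have h := Finset.sum_mul_sq_le_sq_mul_sq univ
        (fun _ : Fin (nb m) => (1:ℝ)) (fun i => (b m i - bbar m) ^ 2)
      calc Sb ^ 2 = (∑ i, (1:ℝ) * (b m i - bbar m) ^ 2) ^ 2 := by rw [hSb]; norm_num
        _ ≤ (∑ _i : Fin (nb m), (1:ℝ) ^ 2) * ∑ i, ((b m i - bbar m) ^ 2) ^ 2 := h
        _ = (nb m : ℝ) * Qb := by rw [hQb]; norm_num [← pow_mul, card_univ]
    have hSaSb : Sa * Sb ≤ (nb m : ℝ) * Real.sqrt (Qa * Qb) := by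
      have hprod : Sa ^ 2 * Sb ^ 2 ≤ ((nb m : ℝ) * Qa) * ((nb m : ℝ) * Qb) :=
        mul_le_mul hSa2 hSb2 (sq_nonneg _) (by positivity)
      calc Sa * Sb = Real.sqrt ((Sa * Sb) ^ 2) :=
            (Real.sqrt_sq (mul_nonneg hSa0 hSb0)).symm
        _ ≤ Real.sqrt (((nb m : ℝ) * Real.sqrt (Qa * Qb)) ^ 2) := by
            apply Real.sqrt_le_sqrt
            calc (Sa * Sb) ^ 2 = Sa ^ 2 * Sb ^ 2 := by ring
              _ ≤ (nb m : ℝ) * Qa * ((nb m : ℝ) * Qb) := hprod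
              _ = ((nb m : ℝ) * Real.sqrt (Qa * Qb)) ^ 2 := by
                  rw [mul_pow, Real.sq_sqrt (mul_nonneg hQa0 hQb0)]; ring
        _ = (nb m : ℝ) * Real.sqrt (Qa * Qb) := Real.sqrt_sq (by positivity)
    -- the target quantity t
    set t := Real.sqrt (Qa * Qb) / (e m ^ 3 * (nb m : ℝ)) with ht
    have ht0 : 0 ≤ t := by positivity
    have hc1 : 1 / (e m ^ 2 * (nb m : ℝ)) * A ≤ t := by
      rw [one_div_mul_eq_div, ht]
      apply div_le_div₀ (Real.sqrt_nonneg _) hAle (by positivity)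
      have h32 : e m ^ 3 ≤ e m ^ 2 :=
        pow_le_pow_of_le_one he.le (he1 m) (by norm_num)
      exact mul_le_mul_of_nonneg_right h32 hnm.le
    have hc2 : 8 / (e m ^ 3 * (nb m : ℝ) ^ 2) * (Sa * Sb) ≤ 8 * t := by
      have h1 : 8 / (e m ^ 3 * (nb m : ℝ) ^ 2) * (Sa * Sb)
          ≤ 8 / (e m ^ 3 * (nb m : ℝ) ^ 2) * ((nb m : ℝ) * Real.sqrt (Qa * Qb)) :=
        mul_le_mul_of_nonneg_left hSaSb (by positivity)
      refine h1.trans_eq ?_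
      rw [ht]; field_simp
    have hσeq : σcov m = Real.sqrt (1 / (e m ^ 2 * (nb m : ℝ)) * A) +
        Real.sqrt (8 / (e m ^ 3 * (nb m : ℝ) ^ 2) * (Sa * Sb)) := rfl
    have hσ : σcov m ≤ Real.sqrt t + Real.sqrt (8 * t) := by
      rw [hσeq]
      exact add_le_add (Real.sqrt_le_sqrt hc1) (Real.sqrt_le_sqrt hc2)
    have hσ0 : 0 ≤ σcov m := by
      rw [hσeq]; positivity
    have hσ2 : σcov m ^ 2 ≤ (Real.sqrt t + Real.sqrt (8 * t)) ^ 2 :=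
      pow_le_pow_left₀ hσ0 hσ 2
    have hmix : Real.sqrt t * Real.sqrt (8 * t) ≤ 3 * t := by
      rw [← Real.sqrt_mul ht0]
      calc Real.sqrt (t * (8 * t)) ≤ Real.sqrt ((3 * t) ^ 2) :=
            Real.sqrt_le_sqrt (by nlinarith)
        _ = 3 * t := Real.sqrt_sq (by positivity)
    have hsq : (Real.sqrt t + Real.sqrt (8 * t)) ^ 2 ≤ 15 * t := by
      have h1 : Real.sqrt t ^ 2 = t := Real.sq_sqrt ht0
      have h2 : Real.sqrt (8 * t) ^ 2 = 8 * t := Real.sq_sqrt (by positivity)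
      nlinarith [hmix]
    have hσ15 : σcov m ^ 2 ≤ 15 * t := hσ2.trans hsq
    -- conclude
    have huv : Real.sqrt (u m * v m) = Real.sqrt (Qa * Qb) / e m ^ 3 := by
      have h1 : u m = Qa / e m ^ 3 := by rw [hu, hQa]; exact (Finset.sum_div ..).symm
      have h2 : v m = Qb / e m ^ 3 := by rw [hv, hQb]; exact (Finset.sum_div ..).symm
      have h3 : u m * v m = (Real.sqrt (Qa * Qb) / e m ^ 3) ^ 2 := by
        rw [h1, h2, div_pow, Real.sq_sqrt (mul_nonneg hQa0 hQb0)]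
        ring
      rw [h3, Real.sqrt_sq (by positivity)]
    have hπ : π m = (nb m : ℝ) / n := rfl
    calc π m * σcov m ^ 2 ≤ π m * (15 * t) := by
          apply mul_le_mul_of_nonneg_left hσ15
          rw [hπ]; positivity
      _ = (15 / n) * Real.sqrt (u m * v m) := by
          rw [hπ, ht, huv]; field_simp
  calc ∑ m, π m * σcov m ^ 2 ≤ ∑ m, (15 / n) * Real.sqrt (u m * v m) :=
        Finset.sum_le_sum fun m _ => key m
    _ = (15 / n) * ∑ m, Real.sqrt (u m) * Real.sqrt (v m) := by
        rw [← Finset.mul_sum]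
        congr 1
        exact Finset.sum_congr rfl fun m _ => Real.sqrt_mul (hu0 m) _
    _ ≤ (15 / n) * (Real.sqrt (∑ m, u m) * Real.sqrt (∑ m, v m)) := by
        apply mul_le_mul_of_nonneg_left _ (by positivity)
        exact Real.sum_sqrt_mul_sqrt_le univ hu0 hv0
    _ = 15 * Real.sqrt (κa4 * κb4) := by
        have hκa : κa4 = (1 / n) * ∑ m, u m := rfl
        have hκb : κb4 = (1 / n) * ∑ m, v m := rfl
        rw [hκa, hκb,
          show (1 / n * ∑ m, u m) * (1 / n * ∑ m, v m)
            = (1 / n) ^ 2 * ((∑ m, u m) * (∑ m, v m)) by ring,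
          Real.sqrt_mul (by positivity), Real.sqrt_sq (by positivity),
          Real.sqrt_mul (sum_nonneg fun m _ => hu0 m)]
        field_simp
end

section
/- (Concentration of the weighted treated-sample mean under stratified randomization.) Assume σ_a² = n⁻¹ ∑_{m=1}^M ∑_{i∈[m]} (a_i − ā_{[m]})² / e_{[m]}² is strictly positive. Then for every t > 0, P( ∑_{m=1}^M π_{[m]} (ā_{[m]1} − ā_{[m]}) ≥ t ) ≤ exp( − n t² / (4 σ_a²) ). -/
/-!
Chernoff's method. The moment generating function of the statistic factorizes over the
blocks, and within a block it is that of `∑ i ∈ S, cᵢ` for a uniform `k`-subset `S` of the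
`n` units, with `∑ cᵢ = 0`. Since `P(T ⊆ S) ≤ (k/n)^|T|`, expanding `∏ i ∈ S, (1 + yᵢ)` shows
that for `c` of constant sign this is at most the moment generating function under independent
Bernoulli(`k/n`) selections. Cauchy–Schwarz splits a general `c` into its positive and
negative parts, and the Bernoulli bound `1 - p + p eᵘ ≤ exp (p u + u²/2)` then gives
`E exp (∑ i ∈ S, cᵢ) ≤ exp (∑ cᵢ²)`. Summing over blocks, the statistic has variance proxy
`σ_a² / n`, and optimizing the Chernoff parameter gives `exp (-n t² / (4 σ_a²))`.
-/

open Finset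

lemma Real.exp_le_one_add_add_sq_div_two_of_nonpos {u : ℝ} (hu : u ≤ 0) :
    Real.exp u ≤ 1 + u + u ^ 2 / 2 := by
  obtain ⟨x, hx, rfl⟩ : ∃ x, 0 ≤ x ∧ u = -x := ⟨-u, by linarith, by ring⟩
  -- `(1 - x + x²/2) (1 + x + x²/2 + x³/6) = 1 + x³/6 + x⁴/12 + x⁵/12 ≥ 1`
  have hcubic : 1 + x + x ^ 2 / 2 + x ^ 3 / 6 ≤ Real.exp x := by
    simpa [sum_range_succ, Nat.factorial] using Real.sum_le_exp_of_nonneg hx 4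
  have hinv : Real.exp (-x) * Real.exp x = 1 := by
    rw [← Real.exp_add, neg_add_cancel, Real.exp_zero]
  have hcubic_pos : 0 < 1 + x + x ^ 2 / 2 + x ^ 3 / 6 := by positivity
  refine le_of_mul_le_mul_right ?_ hcubic_pos
  nlinarith [mul_le_mul_of_nonneg_left hcubic (Real.exp_pos (-x)).le, pow_nonneg hx 3,
    pow_nonneg hx 4, pow_nonneg hx 5]

lemma one_sub_add_mul_exp_le {p u : ℝ} (hp0 : 0 ≤ p) (hp1 : p ≤ 1) :
    1 - p + p * Real.exp u ≤ Real.exp (p * u + u ^ 2 / 2) := by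
  wlog hu : u ≤ 0 generalizing p u with H
  · have hflip := H (p := 1 - p) (u := -u) (by linarith) (by linarith) (by linarith)
    calc 1 - p + p * Real.exp u = Real.exp u * (1 - (1 - p) + (1 - p) * Real.exp (-u)) := by
          rw [Real.exp_neg]; field_simp; ring
      _ ≤ Real.exp u * Real.exp ((1 - p) * -u + (-u) ^ 2 / 2) := by gcongr
      _ = Real.exp (p * u + u ^ 2 / 2) := by rw [← Real.exp_add]; ring_nf
  calc 1 - p + p * Real.exp u ≤ 1 - p + p * (1 + u + u ^ 2 / 2) := by
        gcongr; exact Real.exp_le_one_add_add_sq_div_two_of_nonpos hu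
    _ ≤ 1 + (p * u + u ^ 2 / 2) := by nlinarith [pow_two_nonneg u]
    _ ≤ Real.exp (p * u + u ^ 2 / 2) := by linarith [Real.add_one_le_exp (p * u + u ^ 2 / 2)]

lemma prod_one_sub_add_mul_exp_le {ι : Type*} {p : ℝ} (hp0 : 0 ≤ p) (hp1 : p ≤ 1)
    (s : Finset ι) (c : ι → ℝ) (hc : ∑ i ∈ s, c i = 0) :
    ∏ i ∈ s, (1 - p + p * Real.exp (c i)) ≤ Real.exp (∑ i ∈ s, c i ^ 2 / 2) :=
  calc ∏ i ∈ s, (1 - p + p * Real.exp (c i))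
      ≤ ∏ i ∈ s, Real.exp (p * c i + c i ^ 2 / 2) :=
        prod_le_prod (fun i _ => by nlinarith [Real.exp_pos (c i)])
          fun i _ => one_sub_add_mul_exp_le hp0 hp1
    _ = Real.exp (∑ i ∈ s, c i ^ 2 / 2) := by
        rw [← Real.exp_sum, sum_add_distrib, ← mul_sum, hc, mul_zero, zero_add]

lemma Real.exp_sum_sq {ι : Type*} (s : Finset ι) (f : ι → ℝ) :
    Real.exp (∑ i ∈ s, f i) ^ 2 = Real.exp (∑ i ∈ s, 2 * f i) := by
  rw [← mul_sum, ← Real.exp_nat_mul]; norm_num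

lemma Nat.descFactorial_mul_pow_le {k n : ℕ} (hkn : k ≤ n) (j : ℕ) :
    k.descFactorial j * n ^ j ≤ n.descFactorial j * k ^ j := by
  simp only [Nat.descFactorial_eq_prod_range, pow_eq_prod_const, ← prod_mul_distrib]
  refine prod_le_prod' fun i _ => ?_
  have := Nat.mul_le_mul_left i hkn
  rw [Nat.sub_mul, Nat.sub_mul, Nat.mul_comm k n]
  omega

lemma Nat.choose_sub_mul_pow_le {n k j : ℕ} (hjk : j ≤ k) (hkn : k ≤ n) :
    (n - j).choose (k - j) * n ^ j ≤ n.choose k * k ^ j := by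
  have hpos : 0 < j.factorial * n.choose j :=
    Nat.mul_pos j.factorial_pos (Nat.choose_pos (hjk.trans hkn))
  refine Nat.le_of_mul_le_mul_right ?_ hpos
  calc (n - j).choose (k - j) * n ^ j * (j.factorial * n.choose j)
      = n.choose k * (k.descFactorial j * n ^ j) := by
        rw [Nat.descFactorial_eq_factorial_mul_choose]
        linear_combination (j.factorial * n ^ j) * (Nat.choose_mul (n := n) hjk).symm
    _ ≤ n.choose k * (n.descFactorial j * k ^ j) :=
        Nat.mul_le_mul_left _ (Nat.descFactorial_mul_pow_le hkn j)
    _ = n.choose k * k ^ j * (j.factorial * n.choose j) := by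
        rw [Nat.descFactorial_eq_factorial_mul_choose]; ring

section Sampling

variable {n k : ℕ}

lemma card_filter_powersetCard_univ_subset_le (hkn : k ≤ n) (T : Finset (Fin n)) :
    (#{s ∈ powersetCard k (univ : Finset (Fin n)) | T ⊆ s} : ℝ)
      ≤ n.choose k * ((k : ℝ) / n) ^ #T := by
  rcases lt_or_ge k #T with hkT | hTk
  · have hempty : {s ∈ powersetCard k (univ : Finset (Fin n)) | T ⊆ s} = ∅ :=
      filter_eq_empty_iff.2 fun s hs hTs => by
        have := card_le_card hTs
        rw [(mem_powersetCard.1 hs).2] at this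
        omega
    rw [hempty, card_empty, Nat.cast_zero]
    positivity
  have hpow : (0 : ℝ) < (n : ℝ) ^ #T := by
    rcases (#T).eq_zero_or_pos with h | h
    · simp [h]
    · exact pow_pos (by exact_mod_cast h.trans_le (hTk.trans hkn)) _
  rw [card_filter_powersetCard_subset T univ k (subset_univ T) hTk, card_univ,
    Fintype.card_fin, div_pow, ← mul_div_assoc, le_div_iff₀ hpow]
  exact_mod_cast Nat.choose_sub_mul_pow_le hTk hkn

lemma sum_powersetCard_prod_one_add_le (hkn : k ≤ n) (y : Fin n → ℝ) (hy : ∀ i, 0 ≤ y i) :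
    ∑ s ∈ powersetCard k univ, ∏ i ∈ s, (1 + y i)
      ≤ n.choose k * ∏ i, (1 + (k : ℝ) / n * y i) :=
  calc ∑ s ∈ powersetCard k univ, ∏ i ∈ s, (1 + y i)
      = ∑ s ∈ powersetCard k univ, ∑ T ∈ s.powerset, ∏ i ∈ T, y i := by
        simp only [prod_one_add]
    _ = ∑ T, ∑ s ∈ powersetCard k univ with T ⊆ s, ∏ i ∈ T, y i :=
        sum_comm' fun s T => by simp only [mem_powerset, mem_filter, mem_univ]; tauto
    _ = ∑ T, (#{s ∈ powersetCard k univ | T ⊆ s} : ℝ) * ∏ i ∈ T, y i := by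
        simp only [sum_const, nsmul_eq_mul]
    _ ≤ ∑ T, n.choose k * ((k : ℝ) / n) ^ #T * ∏ i ∈ T, y i := by
        gcongr with T
        · exact prod_nonneg fun i _ => hy i
        · exact card_filter_powersetCard_univ_subset_le hkn T
    _ = n.choose k * ∏ i, (1 + (k : ℝ) / n * y i) := by
        rw [prod_one_add, powerset_univ, mul_sum]
        simp only [prod_mul_distrib, prod_const, mul_assoc]

lemma sum_powersetCard_exp_sum_le_of_nonneg (hkn : k ≤ n) (d : Fin n → ℝ)
    (hd : ∀ i, 0 ≤ d i) :
    ∑ s ∈ powersetCard k univ, Real.exp (∑ i ∈ s, d i)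
      ≤ n.choose k * ∏ i, (1 - (k : ℝ) / n + k / n * Real.exp (d i)) := by
  have h := sum_powersetCard_prod_one_add_le hkn (fun i => Real.exp (d i) - 1)
    fun i => sub_nonneg.2 (Real.one_le_exp (hd i))
  simp only [Real.exp_sum]
  convert h using 3 with s _ i _ i <;> ring

lemma sum_powersetCard_exp_sum_le_of_nonpos (hkn : k ≤ n) (d : Fin n → ℝ)
    (hd : ∀ i, d i ≤ 0) :
    ∑ s ∈ powersetCard k univ, Real.exp (∑ i ∈ s, d i)
      ≤ n.choose k * ∏ i, (1 - (k : ℝ) / n + k / n * Real.exp (d i)) := by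
  -- pass to complements: `sᶜ` is a uniform `(n - k)`-subset, and `-d ≥ 0`
  have hcompl (s : Finset (Fin n)) :
      Real.exp (∑ i ∈ s, d i) = Real.exp (∑ i, d i) * Real.exp (∑ i ∈ sᶜ, -d i) := by
    rw [← Real.exp_add, sum_neg_distrib, ← sum_add_sum_compl s d, add_neg_cancel_right]
  have hreindex : ∑ s ∈ powersetCard k univ, Real.exp (∑ i ∈ sᶜ, -d i)
      = ∑ u ∈ powersetCard (n - k) univ, Real.exp (∑ i ∈ u, -d i) := by
    refine sum_nbij' compl compl (fun s hs => ?_) (fun u hu => ?_) (fun s _ => compl_compl s)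
      (fun u _ => compl_compl u) fun s _ => rfl
    · simp only [mem_powersetCard_univ, card_compl, Fintype.card_fin] at hs ⊢; omega
    · simp only [mem_powersetCard_univ, card_compl, Fintype.card_fin] at hu ⊢; omega
  calc ∑ s ∈ powersetCard k univ, Real.exp (∑ i ∈ s, d i)
      = Real.exp (∑ i, d i)
          * ∑ u ∈ powersetCard (n - k) univ, Real.exp (∑ i ∈ u, -d i) := by
        rw [sum_congr rfl fun s _ => hcompl s, ← mul_sum, hreindex]
    _ ≤ Real.exp (∑ i, d i) * (n.choose (n - k) * ∏ i,
          (1 - ((n - k : ℕ) : ℝ) / n + (n - k : ℕ) / n * Real.exp (-d i))) := by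
        gcongr
        exact sum_powersetCard_exp_sum_le_of_nonneg (Nat.sub_le _ _) _
          fun i => neg_nonneg.2 (hd i)
    _ = n.choose k * ∏ i, (1 - (k : ℝ) / n + k / n * Real.exp (d i)) := by
        rw [Nat.choose_symm hkn, mul_left_comm, Real.exp_sum, ← prod_mul_distrib]
        congr 1
        refine prod_congr rfl fun i _ => ?_
        have hn : (n : ℝ) ≠ 0 := by exact_mod_cast i.pos.ne'
        rw [Nat.cast_sub hkn, Real.exp_neg]
        field_simp
        ring

lemma sum_powersetCard_exp_sum_le (hkn : k ≤ n) (c : Fin n → ℝ) (hc : ∑ i, c i = 0) :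
    ∑ s ∈ powersetCard k univ, Real.exp (∑ i ∈ s, c i)
      ≤ n.choose k * Real.exp (∑ i, c i ^ 2) := by
  set p : ℝ := k / n
  have hp0 : 0 ≤ p := by positivity
  have hp1 : p ≤ 1 := div_le_one_of_le₀ (by exact_mod_cast hkn) (Nat.cast_nonneg n)
  -- Cauchy–Schwarz separates the positive and the negative parts of `c`
  set F : Finset (Fin n) → ℝ := fun s => Real.exp (∑ i ∈ s, max (c i) 0)
  set G : Finset (Fin n) → ℝ := fun s => Real.exp (∑ i ∈ s, min (c i) 0)
  have hsplit (s : Finset (Fin n)) : Real.exp (∑ i ∈ s, c i) = F s * G s := by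
    simp only [F, G, ← Real.exp_add, ← sum_add_distrib, max_add_min, add_zero]
  have hF : ∑ s ∈ powersetCard k univ, F s ^ 2
      ≤ n.choose k * ∏ i, (1 - p + p * Real.exp (2 * max (c i) 0)) := by
    simp only [F, Real.exp_sum_sq]
    exact sum_powersetCard_exp_sum_le_of_nonneg hkn _ fun i => by positivity
  have hG : ∑ s ∈ powersetCard k univ, G s ^ 2
      ≤ n.choose k * ∏ i, (1 - p + p * Real.exp (2 * min (c i) 0)) := by
    simp only [G, Real.exp_sum_sq]
    exact sum_powersetCard_exp_sum_le_of_nonpos hkn _ fun i => by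
      nlinarith [min_le_right (c i) 0]
  have hpair (i : Fin n) : (1 - p + p * Real.exp (2 * max (c i) 0))
      * (1 - p + p * Real.exp (2 * min (c i) 0)) = 1 - p + p * Real.exp (2 * c i) := by
    rcases le_total (c i) 0 with h | h <;> simp [h]
  have hsq : (∑ s ∈ powersetCard k univ, F s * G s) ^ 2
      ≤ (n.choose k * Real.exp (∑ i, c i ^ 2)) ^ 2 :=
    calc (∑ s ∈ powersetCard k univ, F s * G s) ^ 2
        ≤ (∑ s ∈ powersetCard k univ, F s ^ 2) * ∑ s ∈ powersetCard k univ, G s ^ 2 :=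
          sum_mul_sq_le_sq_mul_sq _ _ _
      _ ≤ (n.choose k * ∏ i, (1 - p + p * Real.exp (2 * max (c i) 0)))
            * (n.choose k * ∏ i, (1 - p + p * Real.exp (2 * min (c i) 0))) := by
          gcongr
      _ = n.choose k ^ 2 * ∏ i, (1 - p + p * Real.exp (2 * c i)) := by
          rw [mul_mul_mul_comm, ← prod_mul_distrib, sq]; simp only [hpair]
      _ ≤ n.choose k ^ 2 * Real.exp (∑ i, (2 * c i) ^ 2 / 2) := by
          gcongr
          exact prod_one_sub_add_mul_exp_le hp0 hp1 _ _ (by rw [← mul_sum, hc, mul_zero])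
      _ = (n.choose k * Real.exp (∑ i, c i ^ 2)) ^ 2 := by
          rw [mul_pow, Real.exp_sum_sq]; congr 2; exact sum_congr rfl fun i _ => by ring
  rw [sum_congr rfl fun s _ => hsplit s]
  exact (pow_le_pow_iff_left₀ (by positivity) (by positivity) two_ne_zero).1 hsq

end Sampling

lemma sum_piFinset_powersetCard_exp_sum_le {ι : Type*} [Fintype ι] [DecidableEq ι]
    {nb k : ι → ℕ} (hk : ∀ m, k m ≤ nb m) (c : (m : ι) → Fin (nb m) → ℝ)
    (hc : ∀ m, ∑ i, c m i = 0) :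
    ∑ A ∈ Fintype.piFinset (fun m => powersetCard (k m) univ),
        Real.exp (∑ m, ∑ i ∈ A m, c m i)
      ≤ #(Fintype.piFinset fun m => powersetCard (k m) (univ : Finset (Fin (nb m))))
          * Real.exp (∑ m, ∑ i, c m i ^ 2) :=
  calc ∑ A ∈ Fintype.piFinset (fun m => powersetCard (k m) univ),
        Real.exp (∑ m, ∑ i ∈ A m, c m i)
      = ∏ m, ∑ s ∈ powersetCard (k m) univ, Real.exp (∑ i ∈ s, c m i) := by
        rw [prod_univ_sum]; simp only [Real.exp_sum]
    _ ≤ ∏ m, ((nb m).choose (k m) * Real.exp (∑ i, c m i ^ 2)) :=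
        prod_le_prod (fun m _ => by positivity)
          fun m _ => sum_powersetCard_exp_sum_le (hk m) (c m) (hc m)
    _ = _ := by
        simp only [prod_mul_distrib, Fintype.card_piFinset, card_powersetCard, card_univ,
          Fintype.card_fin, Real.exp_sum, Nat.cast_prod]

lemma card_filter_le_le_exp_mul_sum_exp {β : Type*} (Ω : Finset β) (f : β → ℝ) {θ : ℝ}
    (hθ : 0 ≤ θ) (t : ℝ) :
    (#{A ∈ Ω | t ≤ f A} : ℝ) ≤ Real.exp (-(θ * t)) * ∑ A ∈ Ω, Real.exp (θ * f A) :=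
  calc (#{A ∈ Ω | t ≤ f A} : ℝ) = ∑ A ∈ Ω with t ≤ f A, 1 := by simp
    _ ≤ ∑ A ∈ Ω with t ≤ f A, Real.exp (θ * (f A - t)) :=
        sum_le_sum fun A hA => Real.one_le_exp
          (mul_nonneg hθ (sub_nonneg.2 (mem_filter.1 hA).2))
    _ ≤ ∑ A ∈ Ω, Real.exp (θ * (f A - t)) :=
        sum_le_sum_of_subset_of_nonneg (filter_subset _ _) fun _ _ _ => by positivity
    _ = Real.exp (-(θ * t)) * ∑ A ∈ Ω, Real.exp (θ * f A) := by
        rw [mul_sum]; exact sum_congr rfl fun A _ => by rw [← Real.exp_add]; ring_nf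

lemma card_filter_le_div_card_le_exp_of_sum_exp_le {β : Type*} (Ω : Finset β) (f : β → ℝ)
    {v t : ℝ} (hv : 0 < v) (ht : 0 ≤ t)
    (hmgf : ∀ θ, 0 ≤ θ → ∑ A ∈ Ω, Real.exp (θ * f A) ≤ #Ω * Real.exp (θ ^ 2 * v)) :
    (#{A ∈ Ω | t ≤ f A} : ℝ) / #Ω ≤ Real.exp (-(t ^ 2 / (4 * v))) := by
  have hθ : 0 ≤ t / (2 * v) := by positivity
  refine div_le_of_le_mul₀ (by positivity) (by positivity) ?_
  calc (#{A ∈ Ω | t ≤ f A} : ℝ)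
      ≤ Real.exp (-(t / (2 * v) * t)) * (#Ω * Real.exp ((t / (2 * v)) ^ 2 * v)) :=
        (card_filter_le_le_exp_mul_sum_exp Ω f hθ t).trans (by gcongr; exact hmgf _ hθ)
    _ = Real.exp (-(t ^ 2 / (4 * v))) * #Ω := by
        rw [mul_left_comm, ← Real.exp_add, mul_comm]; congr 2; field_simp; ring

theorem stratified_mean_concentration_general (M : ℕ) (nb n1 : Fin M → ℕ)
    (hn1 : ∀ m, 1 ≤ n1 m) (hn1' : ∀ m, n1 m ≤ nb m - 1)
    (a : (m : Fin M) → Fin (nb m) → ℝ) (t : ℝ) (ht : 0 < t) :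
    let n : ℝ := ∑ m, (nb m : ℝ)
    let π : Fin M → ℝ := fun m => (nb m : ℝ) / n
    let e : Fin M → ℝ := fun m => (n1 m : ℝ) / (nb m : ℝ)
    let abar : (m : Fin M) → ℝ := fun m => (∑ i, a m i) / (nb m : ℝ)
    let σa2 : ℝ := (1 / n) * ∑ m, ∑ i, (a m i - abar m) ^ 2 / e m ^ 2
    let Ω := Fintype.piFinset fun m => powersetCard (n1 m) (univ : Finset (Fin (nb m)))
    0 < σa2 →
    ((Ω.filter fun A =>
        t ≤ ∑ m, π m * ((∑ i ∈ A m, a m i) / (n1 m : ℝ) - abar m)).card : ℝ) /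
        (Ω.card : ℝ)
      ≤ Real.exp (-(n * t ^ 2) / (4 * σa2)) := by
  intro n π e abar σa2 Ω hσ
  have hn : 0 < n := one_div_pos.1 (pos_of_mul_pos_left hσ (by positivity))
  have hnb (m : Fin M) : (nb m : ℝ) ≠ 0 :=
    Nat.cast_ne_zero.2 (by have := hn1' m; have := hn1 m; omega)
  have hn1_ne (m : Fin M) : (n1 m : ℝ) ≠ 0 := by have := hn1 m; positivity
  set c : ℝ → (m : Fin M) → Fin (nb m) → ℝ :=
    fun θ m i => θ * (π m / n1 m) * (a m i - abar m)
  have hc (θ : ℝ) (m : Fin M) : ∑ i, c θ m i = 0 := by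
    simp only [c, ← mul_sum, sum_sub_distrib, sum_const, card_univ, Fintype.card_fin, abar,
      nsmul_eq_mul, mul_div_cancel₀ _ (hnb m), sub_self, mul_zero]
  have hstat (θ : ℝ) : ∀ A ∈ Ω, θ * ∑ m, π m * ((∑ i ∈ A m, a m i) / n1 m - abar m)
      = ∑ m, ∑ i ∈ A m, c θ m i := fun A hA => by
    simp only [mul_sum, c]
    refine sum_congr rfl fun m _ => ?_
    rw [← mul_sum, sum_sub_distrib, sum_const,
      (mem_powersetCard_univ.1 (Fintype.mem_piFinset.1 hA m)), nsmul_eq_mul]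
    field_simp [hn1_ne m]
  have hvar (θ : ℝ) : ∑ m, ∑ i, c θ m i ^ 2 = θ ^ 2 * (σa2 / n) := by
    simp only [σa2, mul_sum, sum_div, c, e, π]
    exact sum_congr rfl fun m _ => sum_congr rfl fun i _ => by field_simp
  have := card_filter_le_div_card_le_exp_of_sum_exp_le Ω _ (div_pos hσ hn) ht.le fun θ _ => by
    rw [sum_congr rfl fun A hA => congrArg Real.exp (hstat θ A hA), ← hvar]
    exact sum_piFinset_powersetCard_exp_sum_le (fun m => (hn1' m).trans (Nat.sub_le _ _)) _
      (hc θ)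
  convert this using 3
  field_simp

/-- **Concentration of the weighted treated-sample mean under stratified randomization.**
In each block `m` exactly `n1 m` of the `nb m` units are treated, uniformly and
independently across blocks: the assignment is a function `A` with `A m` an
`n1 m`-element subset of `Fin (nb m)`, uniform on `Ω`.  If
`σ_a² = n⁻¹ ∑ₘ ∑_{i∈[m]} (aᵢ − ā_[m])²/e_[m]² > 0`, then for `t > 0`,
`P(∑ₘ π_[m](ā_[m]1 − ā_[m]) ≥ t) ≤ exp(−n t²/(4σ_a²))`. -/
theorem stratified_mean_concentration (M : ℕ) (nb n1 : Fin M → ℕ)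
    (hnb : ∀ m, 2 ≤ nb m) (hn1 : ∀ m, 1 ≤ n1 m) (hn1' : ∀ m, n1 m ≤ nb m - 1)
    (a : (m : Fin M) → Fin (nb m) → ℝ) (t : ℝ) (ht : 0 < t) :
    let n : ℝ := ∑ m, (nb m : ℝ)
    let π : Fin M → ℝ := fun m => (nb m : ℝ) / n
    let e : Fin M → ℝ := fun m => (n1 m : ℝ) / (nb m : ℝ)
    let abar : (m : Fin M) → ℝ := fun m => (∑ i, a m i) / (nb m : ℝ)
    let σa2 : ℝ := (1 / n) * ∑ m, ∑ i, (a m i - abar m) ^ 2 / e m ^ 2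
    let Ω := Fintype.piFinset fun m => powersetCard (n1 m) (univ : Finset (Fin (nb m)))
    0 < σa2 →
    ((Ω.filter fun A =>
        t ≤ ∑ m, π m * ((∑ i ∈ A m, a m i) / (n1 m : ℝ) - abar m)).card : ℝ) /
        (Ω.card : ℝ)
      ≤ Real.exp (-(n * t ^ 2) / (4 * σa2)) :=
  stratified_mean_concentration_general M nb n1 hn1 hn1' a t ht
end

section
/- (Deterministic ℓ₁-error bound for the stratified Lasso.) Suppose β is supported on S ⊆ {1,…,p} (β_{S^c} = 0) with |S| = s ≥ 1, and there are constants C > 0, ξ > 1, and 0 < η < (ξ − 1)/(ξ + 1) such that ‖v_S‖₁ ≤ C s ‖Σ_{XX} v‖_∞ for every v ∈ ℝ^p with ‖v_{S^c}‖₁ ≤ ξ ‖v_S‖₁, where Σ_{XX} = ∑_m π_{[m]} S²_{[m]X}. If ‖Σ̂_{Xε}‖_∞ ≤ ηλ and ‖Σ̂_{XX} − Σ_{XX}‖_∞ ≤ ρ with (1 + ξ) C s ρ ≤ 1/2, then ‖β̂ − β‖₁ ≤ K s λ, where K = max{ (2/(1 − η)) (2/((1 − η)ξ − (1 + η)) +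 1), 2 (1 + ξ) C (1 + η) }. -/
open Finset

lemma le_of_forall_pos_mul (a b h : ℝ) (hh : 0 ≤ h)
    (H : ∀ δ : ℝ, 0 < δ → a ≤ b + δ * h) : a ≤ b := by
  by_contra hab
  push_neg at hab
  rcases lt_or_ge 0 h with hp | hp
  · have hd : 0 < (a - b) / (2 * h) := div_pos (by linarith) (by linarith)
    have := H ((a - b) / (2 * h)) hd
    have hkey : (a - b) / (2 * h) * h = (a - b) / 2 := by
      field_simp
    rw [hkey] at this
    linarith
  · have := H 1 one_pos; nlinarith

lemma kkt_aux (d h bj lam : ℝ) (hh : 0 ≤ h) (hlam : 0 ≤ lam)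
    (H : ∀ t : ℝ, 0 ≤ t * d + t ^ 2 * (h / 2) + lam * (|bj + t| - |bj|)) :
    |d| ≤ lam := by
  apply le_of_forall_pos_mul _ _ (h / 2) (by linarith)
  intro δ hδ
  have habs : ∀ t : ℝ, |bj + t| - |bj| ≤ |t| := by
    intro t
    have := abs_sub_abs_le_abs_sub (bj + t) bj
    simpa using this
  rcases le_or_gt 0 d with hd | hd
  · have h1 := H (-δ)
    have h2 := habs (-δ)
    rw [abs_neg, abs_of_pos hδ] at h2
    rw [abs_of_nonneg hd]
    nlinarith [mul_le_mul_of_nonneg_left h2 hlam]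
  · have h1 := H δ
    have h2 := habs δ
    rw [abs_of_pos hδ] at h2
    rw [abs_of_neg hd]
    nlinarith [mul_le_mul_of_nonneg_left h2 hlam]

lemma sigma_helper {M : ℕ} {nb : Fin M → ℕ} (A : (m : Fin M) → Finset (Fin (nb m)))
    (wgt : Fin M → ℝ) (f : (m : Fin M) → Fin (nb m) → ℝ) :
    ∑ q : Σ m, Fin (nb m), (if q.2 ∈ A q.1 then wgt q.1 else 0) * f q.1 q.2
      = ∑ m, wgt m * ∑ i ∈ A m, f m i := by
  rw [← Finset.univ_sigma_univ, Finset.sum_sigma]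
  refine Finset.sum_congr rfl fun m _ => ?_
  rw [Finset.mul_sum]
  rw [← Finset.sum_filter_add_sum_filter_not Finset.univ (fun i => i ∈ A m)]
  have h2 : ∑ i ∈ Finset.univ.filter (fun i => ¬ i ∈ A m),
      (if i ∈ A m then wgt m else 0) * f m i = 0 := by
    apply Finset.sum_eq_zero
    intro i hi
    simp only [Finset.mem_filter] at hi
    simp [hi.2]
  rw [h2, add_zero]
  have h3 : Finset.univ.filter (fun i => i ∈ A m) = A m := by
    ext i; simp
  rw [h3]
  exact Finset.sum_congr rfl fun i hi => by simp [hi]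
set_option maxHeartbeats 2000000 in
lemma lasso_abstract {p : ℕ} {ι : Type} [Fintype ι] (w : ι → ℝ) (hw : ∀ i, 0 ≤ w i)
    (c : ι → Fin p → ℝ) (e : ι → ℝ) (β βh : Fin p → ℝ) (S : Finset (Fin p))
    (hβ : ∀ j ∉ S, β j = 0)
    (lam η ξ C ρ : ℝ) (hlam : 0 < lam) (hξ : 1 < ξ) (hη0 : 0 < η)
    (hη1 : η < (ξ - 1) / (ξ + 1)) (hC : 0 < C) (hρ0 : 0 ≤ ρ)
    (Spop : Fin p → Fin p → ℝ)
    (hmin : ∀ b : Fin p → ℝ,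
      (1/2) * (∑ i, w i * (e i - ∑ j, c i j * (βh j - β j)) ^ 2) + lam * ∑ j, |βh j| ≤
      (1/2) * (∑ i, w i * (e i - ∑ j, c i j * (b j - β j)) ^ 2) + lam * ∑ j, |b j|)
    (hcompat : ∀ v : Fin p → ℝ, (∑ j ∈ Sᶜ, |v j| ≤ ξ * ∑ j ∈ S, |v j|) →
      ∑ j ∈ S, |v j| ≤ C * (S.card : ℝ) * ‖fun j : Fin p => ∑ l, Spop j l * v l‖)
    (hXε : ∀ j, |∑ i, w i * c i j * e i| ≤ η * lam)
    (hρ : ∀ j l, |(∑ i, w i * c i j * c i l) - Spop j l| ≤ ρ)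
    (hρs : (1 + ξ) * C * (S.card : ℝ) * ρ ≤ 1 / 2) :
    ∑ j, |βh j - β j| ≤
      max ((2 / (1 - η)) * (2 / ((1 - η) * ξ - (1 + η)) + 1))
        (2 * (1 + ξ) * C * (1 + η)) * (S.card : ℝ) * lam := by
  set v : Fin p → ℝ := fun j => βh j - β j with hv
  set a : ℝ := ∑ j ∈ S, |v j| with hadef
  set b : ℝ := ∑ j ∈ Sᶜ, |v j| with hbdef
  have hξ1 : (0:ℝ) < ξ + 1 := by linarith
  have hηξ : η * (ξ + 1) < ξ - 1 := by
    have := (lt_div_iff₀ hξ1).mp hη1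
    linarith
  have hη_lt1 : η < 1 := by nlinarith
  have ha0 : 0 ≤ a := Finset.sum_nonneg fun j _ => abs_nonneg _
  have hb0 : 0 ≤ b := Finset.sum_nonneg fun j _ => abs_nonneg _
  have hab : ∑ j, |βh j - β j| = a + b := by
    rw [hadef, hbdef, Finset.sum_add_sum_compl]
  have hs0 : (0:ℝ) ≤ (S.card : ℝ) := Nat.cast_nonneg _
  set E : Fin p → ℝ := fun j => ∑ i, w i * c i j * e i with hE
  set D : Fin p → ℝ := fun j => ∑ i, w i * c i j * (∑ l, c i l * v l) with hD
  -- expansion of the quadratic at v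
  have hswapT : ∑ j, v j * E j = ∑ i, w i * e i * (∑ j, c i j * v j) := by
    simp only [hE, Finset.mul_sum, Finset.sum_mul]
    rw [Finset.sum_comm]
    exact Finset.sum_congr rfl fun i _ => Finset.sum_congr rfl fun j _ => by ring
  have hexpand : ∑ i, w i * (e i - ∑ j, c i j * v j) ^ 2
      = (∑ i, w i * e i ^ 2) - 2 * (∑ j, v j * E j)
        + ∑ i, w i * (∑ j, c i j * v j) ^ 2 := by
    rw [hswapT]
    calc ∑ i, w i * (e i - ∑ j, c i j * v j) ^ 2
        = ∑ i, (w i * e i ^ 2 - 2 * (w i * e i * (∑ j, c i j * v j))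
            + w i * (∑ j, c i j * v j) ^ 2) :=
          Finset.sum_congr rfl fun i _ => by ring
      _ = _ := by
          rw [Finset.sum_add_distrib, Finset.sum_sub_distrib, ← Finset.mul_sum]
  -- basic inequality
  have hG0 : 0 ≤ ∑ i, w i * (∑ j, c i j * v j) ^ 2 :=
    Finset.sum_nonneg fun i _ => mul_nonneg (hw i) (sq_nonneg _)
  have hbasic : 0 ≤ (∑ j, v j * E j) + lam * (∑ j, |β j| - ∑ j, |βh j|) := by
    have h1 := hmin β
    simp only [sub_self, mul_zero, Finset.sum_const_zero] at h1
    rw [hexpand] at h1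
    simp only [sub_zero] at h1
    nlinarith
  have hT : |∑ j, v j * E j| ≤ η * lam * (a + b) := by
    calc |∑ j, v j * E j| ≤ ∑ j, |v j * E j| := Finset.abs_sum_le_sum_abs _ _
      _ ≤ ∑ j, |v j| * (η * lam) := by
          refine Finset.sum_le_sum fun j _ => ?_
          rw [abs_mul]
          exact mul_le_mul_of_nonneg_left (hXε j) (abs_nonneg _)
      _ = (a + b) * (η * lam) := by rw [← Finset.sum_mul, ← hab]
      _ = η * lam * (a + b) := by ring
  have hnormdiff : ∑ j, |β j| - ∑ j, |βh j| ≤ a - b := by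
    rw [← Finset.sum_add_sum_compl S (fun j => |β j|),
      ← Finset.sum_add_sum_compl S (fun j => |βh j|)]
    have h1 : ∑ j ∈ S, |β j| - ∑ j ∈ S, |βh j| ≤ a := by
      rw [hadef, ← Finset.sum_sub_distrib]
      refine Finset.sum_le_sum fun j _ => ?_
      calc |β j| - |βh j| ≤ |β j - βh j| := abs_sub_abs_le_abs_sub _ _
        _ = |v j| := by simp only [hv]; rw [abs_sub_comm]
    have h2 : ∑ j ∈ Sᶜ, |β j| - ∑ j ∈ Sᶜ, |βh j| = -b := by
      have hz : ∑ j ∈ Sᶜ, |β j| = 0 := by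
        refine Finset.sum_eq_zero fun j hj => ?_
        rw [hβ j (Finset.mem_compl.mp hj), abs_zero]
      have hb' : ∑ j ∈ Sᶜ, |βh j| = b := by
        rw [hbdef]
        refine Finset.sum_congr rfl fun j hj => ?_
        simp only [hv]
        rw [hβ j (Finset.mem_compl.mp hj), sub_zero]
      rw [hz, hb']; ring
    linarith
  -- cone condition
  have hgap : 0 < (1 - η) * ξ - (1 + η) := by nlinarith
  have hcone0 : (1 - η) * b ≤ (1 + η) * a := by
    have h3 : 0 ≤ η * lam * (a + b) + lam * (a - b) := by
      have h4 := le_abs_self (∑ j, v j * E j)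
      have h5 := mul_le_mul_of_nonneg_left hnormdiff hlam.le
      linarith
    have h6 : 0 ≤ lam * (η * (a + b) + (a - b)) := by nlinarith
    have h7 : lam * 0 ≤ lam * (η * (a + b) + (a - b)) := by linarith
    have h8 := le_of_mul_le_mul_left h7 hlam
    linarith
  have hcone : b ≤ ξ * a := by nlinarith [mul_nonneg ha0 hgap.le]
  -- KKT condition
  have hH0 : ∀ j, 0 ≤ ∑ i, w i * c i j ^ 2 :=
    fun j => Finset.sum_nonneg fun i _ => mul_nonneg (hw i) (sq_nonneg _)
  have hKKT : ∀ j, |D j - E j| ≤ lam := by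
    intro j
    apply kkt_aux (D j - E j) (∑ i, w i * c i j ^ 2) (βh j) lam (hH0 j) hlam.le
    intro t
    have hbsum : ∀ i : ι, ∑ l, c i l * (Function.update βh j (βh j + t) l - β l)
        = (∑ l, c i l * v l) + c i j * t := by
      intro i
      have hterm : ∀ l, c i l * (Function.update βh j (βh j + t) l - β l)
          = c i l * v l + (if l = j then c i l * t else 0) := by
        intro l
        by_cases h : l = j
        · subst h
          rw [Function.update_self, if_pos rfl]
          simp only [hv]
          ring
        · rw [Function.update_of_ne h, if_neg h]
          simp only [hv]
          ring
      rw [Finset.sum_congr rfl fun l _ => hterm l, Finset.sum_add_distrib]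
      congr 1
      simp
    have habs_sum : ∑ l, |Function.update βh j (βh j + t) l| =
        (∑ l, |βh l|) + (|βh j + t| - |βh j|) := by
      have h1' : ∑ l, |Function.update βh j (βh j + t) l|
          = |βh j + t| + ∑ l ∈ Finset.univ.erase j, |βh l| := by
        rw [← Finset.add_sum_erase Finset.univ _ (Finset.mem_univ j)]
        rw [Function.update_self]
        congr 1
        refine Finset.sum_congr rfl fun l hl => ?_
        rw [Function.update_of_ne (Finset.ne_of_mem_erase hl)]
      have h2' : ∑ l, |βh l| = |βh j| + ∑ l ∈ Finset.univ.erase j, |βh l| :=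
        (Finset.add_sum_erase Finset.univ _ (Finset.mem_univ j)).symm
      rw [h1', h2']; ring
    have hEDsplit : ∑ i, w i * c i j * (e i - ∑ l, c i l * v l) = E j - D j := by
      simp only [hE, hD, ← Finset.sum_sub_distrib]
      exact Finset.sum_congr rfl fun i _ => by ring
    have hq : ∑ i, w i * (e i - ∑ l, c i l * (Function.update βh j (βh j + t) l - β l)) ^ 2
        = (∑ i, w i * (e i - ∑ l, c i l * v l) ^ 2)
          - 2 * t * (E j - D j) + t ^ 2 * (∑ i, w i * c i j ^ 2) := by
      rw [← hEDsplit, Finset.mul_sum, Finset.mul_sum, ← Finset.sum_sub_distrib,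
        ← Finset.sum_add_distrib]
      refine Finset.sum_congr rfl fun i _ => ?_
      rw [hbsum i]
      ring
    have h1 := hmin (Function.update βh j (βh j + t))
    rw [hq, habs_sum] at h1
    linarith
  -- D j equals Shat applied to v
  have hDv : ∀ j, D j = ∑ l, (∑ i, w i * c i j * c i l) * v l := by
    intro j
    simp only [hD, Finset.mul_sum, Finset.sum_mul]
    rw [Finset.sum_comm]
    exact Finset.sum_congr rfl fun l _ => Finset.sum_congr rfl fun i _ => by ring
  have hDbound : ∀ j, |D j| ≤ (1 + η) * lam := by
    intro j
    have h1 := abs_add_le (D j - E j) (E j)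
    rw [sub_add_cancel] at h1
    calc |D j| ≤ |D j - E j| + |E j| := h1
      _ ≤ lam + η * lam := add_le_add (hKKT j) (hXε j)
      _ = (1 + η) * lam := by ring
  -- bound on Spop * v
  have hvsum : ∑ l, |v l| = a + b := hab
  have hSpopv : ∀ j, |∑ l, Spop j l * v l| ≤ (1 + η) * lam + ρ * (a + b) := by
    intro j
    have hsplit : ∑ l, Spop j l * v l
        = D j - ∑ l, ((∑ i, w i * c i j * c i l) - Spop j l) * v l := by
      rw [hDv j, ← Finset.sum_sub_distrib]
      exact Finset.sum_congr rfl fun l _ => by ring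
    rw [hsplit]
    have h2 : |∑ l, ((∑ i, w i * c i j * c i l) - Spop j l) * v l| ≤ ρ * (a + b) := by
      calc |∑ l, ((∑ i, w i * c i j * c i l) - Spop j l) * v l|
          ≤ ∑ l, |((∑ i, w i * c i j * c i l) - Spop j l) * v l| :=
            Finset.abs_sum_le_sum_abs _ _
        _ ≤ ∑ l, ρ * |v l| := by
            refine Finset.sum_le_sum fun l _ => ?_
            rw [abs_mul]
            exact mul_le_mul_of_nonneg_right (hρ j l) (abs_nonneg _)
        _ = ρ * (a + b) := by rw [← Finset.mul_sum, hvsum]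
    calc |D j - ∑ l, ((∑ i, w i * c i j * c i l) - Spop j l) * v l|
        ≤ |D j| + |∑ l, ((∑ i, w i * c i j * c i l) - Spop j l) * v l| := abs_sub _ _
      _ ≤ (1 + η) * lam + ρ * (a + b) := add_le_add (hDbound j) h2
  have hrhs0 : 0 ≤ (1 + η) * lam + ρ * (a + b) := by
    have := mul_nonneg hρ0 (by linarith : (0:ℝ) ≤ a + b)
    nlinarith
  have hnorm_le : ‖fun j : Fin p => ∑ l, Spop j l * v l‖ ≤ (1 + η) * lam + ρ * (a + b) := by
    rw [pi_norm_le_iff_of_nonneg hrhs0]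
    intro j
    rw [Real.norm_eq_abs]
    exact hSpopv j
  have hcomp := hcompat v (by rw [← hadef, ← hbdef]; exact hcone)
  rw [← hadef] at hcomp
  have h3 : a ≤ C * (S.card : ℝ) * ((1 + η) * lam + ρ * (a + b)) :=
    hcomp.trans (mul_le_mul_of_nonneg_left hnorm_le (by positivity))
  have h4 : a + b ≤ (1 + ξ) * a := by linarith
  have h5 : a + b ≤ (1 + ξ) * (C * (S.card : ℝ) * ((1 + η) * lam + ρ * (a + b))) :=
    h4.trans (mul_le_mul_of_nonneg_left h3 (by linarith))
  have h6 : (1 + ξ) * C * (S.card : ℝ) * ρ * (a + b) ≤ (1/2) * (a + b) :=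
    mul_le_mul_of_nonneg_right hρs (by linarith)
  have h7 : a + b ≤ 2 * (1 + ξ) * C * (1 + η) * ((S.card : ℝ) * lam) := by nlinarith
  rw [hab]
  calc a + b ≤ 2 * (1 + ξ) * C * (1 + η) * ((S.card : ℝ) * lam) := h7
    _ ≤ max ((2 / (1 - η)) * (2 / ((1 - η) * ξ - (1 + η)) + 1))
        (2 * (1 + ξ) * C * (1 + η)) * ((S.card : ℝ) * lam) :=
        mul_le_mul_of_nonneg_right (le_max_right _ _) (by positivity)
    _ = _ := by ring

set_option maxHeartbeats 2000000 in

/-- **Deterministic ℓ₁-error bound for the stratified Lasso.**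
Fixed assignment: `A m` is the set of treated units of block `m`, with `|A m| = n1 m ≥ 2`.
`β` is supported on `S` with `s = |S| ≥ 1`; the compatibility condition holds on the cone
`{v : ‖v_{Sᶜ}‖₁ ≤ ξ‖v_S‖₁}` (with the sup norm on `Fin p → ℝ` being the maximal absolute
entry); the sup norms of `Σ̂_Xε` and `Σ̂_XX − Σ_XX` are controlled.  Then
`‖β̂ − β‖₁ ≤ K s λ` with
`K = max{(2/(1−η))(2/((1−η)ξ−(1+η)) + 1), 2(1+ξ)C(1+η)}`. -/
theorem lasso_l1_error_bound (M p : ℕ) (nb n1 : Fin M → ℕ)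
    (hn1 : ∀ m, 2 ≤ n1 m) (hn1' : ∀ m, n1 m ≤ nb m) (hnb : ∀ m, 2 ≤ nb m)
    (x : (m : Fin M) → Fin (nb m) → Fin p → ℝ)
    (Y : (m : Fin M) → Fin (nb m) → ℝ) (β βhat : Fin p → ℝ)
    (S : Finset (Fin p)) (hβ : ∀ j ∉ S, β j = 0) (hS : 1 ≤ S.card)
    (A : (m : Fin M) → Finset (Fin (nb m))) (hA : ∀ m, (A m).card = n1 m)
    (lam η ξ C ρ : ℝ) (hlam : 0 < lam) (hξ : 1 < ξ) (hη0 : 0 < η)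
    (hη1 : η < (ξ - 1) / (ξ + 1)) (hC : 0 < C) :
    let n : ℝ := ∑ m, (nb m : ℝ)
    let π : Fin M → ℝ := fun m => (nb m : ℝ) / n
    let xbar : (m : Fin M) → Fin p → ℝ := fun m j => (∑ i, x m i j) / (nb m : ℝ)
    let Ybar : (m : Fin M) → ℝ := fun m => (∑ i, Y m i) / (nb m : ℝ)
    let ε : (m : Fin M) → Fin (nb m) → ℝ := fun m i =>
      Y m i - Ybar m - ∑ j, (x m i j - xbar m j) * β j
    let xbar1 : (m : Fin M) → Fin p → ℝ := fun m j => (∑ i ∈ A m, x m i j) / (n1 m : ℝ)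
    let Ybar1 : (m : Fin M) → ℝ := fun m => (∑ i ∈ A m, Y m i) / (n1 m : ℝ)
    let εbar1 : (m : Fin M) → ℝ := fun m => (∑ i ∈ A m, ε m i) / (n1 m : ℝ)
    let Spop : Fin p → Fin p → ℝ := fun j l =>
      ∑ m, π m * ((1 / ((nb m : ℝ) - 1)) *
        ∑ i, (x m i j - xbar m j) * (x m i l - xbar m l))
    let Shat : Fin p → Fin p → ℝ := fun j l =>
      ∑ m, π m * ((1 / ((n1 m : ℝ) - 1)) *
        ∑ i ∈ A m, (x m i j - xbar1 m j) * (x m i l - xbar1 m l))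
    let SigXε : Fin p → ℝ := fun j =>
      ∑ m, π m * ((1 / ((n1 m : ℝ) - 1)) *
        ∑ i ∈ A m, (x m i j - xbar1 m j) * (ε m i - εbar1 m))
    let obj : (Fin p → ℝ) → ℝ := fun b =>
      (1 / 2) * ∑ m, π m / ((n1 m : ℝ) - 1) *
          ∑ i ∈ A m, (Y m i - Ybar1 m - ∑ j, (x m i j - xbar1 m j) * b j) ^ 2
        + lam * ∑ j, |b j|
    let K : ℝ := max ((2 / (1 - η)) * (2 / ((1 - η) * ξ - (1 + η)) + 1))
      (2 * (1 + ξ) * C * (1 + η))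
    (∀ b : Fin p → ℝ, obj βhat ≤ obj b) →
    (∀ v : Fin p → ℝ, (∑ j ∈ Sᶜ, |v j| ≤ ξ * ∑ j ∈ S, |v j|) →
      ∑ j ∈ S, |v j| ≤ C * (S.card : ℝ) * ‖fun j : Fin p => ∑ l, Spop j l * v l‖) →
    (∀ j, |SigXε j| ≤ η * lam) →
    (∀ j l, |Shat j l - Spop j l| ≤ ρ) →
    ((1 + ξ) * C * (S.card : ℝ) * ρ ≤ 1 / 2) →
    ∑ j, |βhat j - β j| ≤ K * (S.card : ℝ) * lam := by
  intro n π xbar Ybar ε xbar1 Ybar1 εbar1 Spop Shat SigXε obj K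
  intro hmin hcompat hXε hρ hρs
  -- definitional unfoldings
  have hεdef : ∀ m i, ε m i = Y m i - Ybar m - ∑ j, (x m i j - xbar m j) * β j :=
    fun _ _ => rfl
  have hεbar1def : ∀ m, εbar1 m = (∑ i ∈ A m, ε m i) / (n1 m : ℝ) := fun _ => rfl
  have hxbar1def : ∀ m j, xbar1 m j = (∑ i ∈ A m, x m i j) / (n1 m : ℝ) := fun _ _ => rfl
  have hYbar1def : ∀ m, Ybar1 m = (∑ i ∈ A m, Y m i) / (n1 m : ℝ) := fun _ => rfl
  -- positivity facts
  have hn0 : (0:ℝ) ≤ n := Finset.sum_nonneg fun m _ => Nat.cast_nonneg _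
  have hπ0 : ∀ m, 0 ≤ π m := fun m => div_nonneg (Nat.cast_nonneg _) hn0
  have hn1R : ∀ m, (2:ℝ) ≤ (n1 m : ℝ) := fun m => by exact_mod_cast hn1 m
  have hn1ne : ∀ m, (n1 m : ℝ) ≠ 0 := fun m => by have := hn1R m; linarith
  -- block mean identity for ε
  have key : ∀ m, εbar1 m = Ybar1 m - Ybar m - ∑ j, (xbar1 m j - xbar m j) * β j := by
    intro m
    have hc : ((A m).card : ℝ) = (n1 m : ℝ) := by exact_mod_cast congrArg Nat.cast (hA m)
    have hsum : ∑ i ∈ A m, ε m i = (∑ i ∈ A m, Y m i) - (n1 m : ℝ) * Ybar m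
        - ∑ j, ((∑ i ∈ A m, x m i j) - (n1 m : ℝ) * xbar m j) * β j := by
      calc ∑ i ∈ A m, ε m i
          = ∑ i ∈ A m, (Y m i - Ybar m - ∑ j, (x m i j - xbar m j) * β j) :=
            Finset.sum_congr rfl fun i _ => hεdef m i
        _ = (∑ i ∈ A m, Y m i) - ((A m).card : ℝ) * Ybar m
            - ∑ i ∈ A m, ∑ j, (x m i j - xbar m j) * β j := by
            rw [Finset.sum_sub_distrib, Finset.sum_sub_distrib, Finset.sum_const,
              nsmul_eq_mul]
        _ = _ := by
            rw [hc, Finset.sum_comm]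
            congr 1
            refine Finset.sum_congr rfl fun j _ => ?_
            rw [← Finset.sum_mul, Finset.sum_sub_distrib, Finset.sum_const, nsmul_eq_mul, hc]
    have hterm : ∀ j, ((∑ i ∈ A m, x m i j) - (n1 m : ℝ) * xbar m j) * β j
        = (n1 m : ℝ) * ((xbar1 m j - xbar m j) * β j) := by
      intro j
      rw [hxbar1def]
      field_simp [hn1ne m]
    rw [hεbar1def, hsum, Finset.sum_congr rfl fun j _ => hterm j, ← Finset.mul_sum,
      hYbar1def]
    field_simp [hn1ne m]
  have hpoint : ∀ m (i : Fin (nb m)), ε m i - εbar1 m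
      = Y m i - Ybar1 m - ∑ j, (x m i j - xbar1 m j) * β j := by
    intro m i
    rw [hεdef, key m]
    have hsub : ∑ j, (x m i j - xbar1 m j) * β j
        = (∑ j, (x m i j - xbar m j) * β j) - ∑ j, (xbar1 m j - xbar m j) * β j := by
      rw [← Finset.sum_sub_distrib]
      exact Finset.sum_congr rfl fun j _ => by ring
    rw [hsub]
    ring
  -- instantiate the abstract lemma
  set w : (Σ m : Fin M, Fin (nb m)) → ℝ :=
    fun q => if q.2 ∈ A q.1 then π q.1 / ((n1 q.1 : ℝ) - 1) else 0 with hwdef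
  set cc : (Σ m : Fin M, Fin (nb m)) → Fin p → ℝ :=
    fun q j => x q.1 q.2 j - xbar1 q.1 j with hccdef
  set ee : (Σ m : Fin M, Fin (nb m)) → ℝ :=
    fun q => ε q.1 q.2 - εbar1 q.1 with heedef
  have hw : ∀ q, 0 ≤ w q := by
    intro q
    simp only [hwdef]
    split
    · exact div_nonneg (hπ0 q.1) (by have := hn1R q.1; linarith)
    · exact le_rfl
  have hwgt : ∀ m, π m / ((n1 m : ℝ) - 1) = π m / ((n1 m : ℝ) - 1) := fun _ => rfl
  -- transfer of block sums
  have hsig : ∀ f : (m : Fin M) → Fin (nb m) → ℝ,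
      ∑ q : Σ m : Fin M, Fin (nb m), w q * f q.1 q.2
        = ∑ m, π m / ((n1 m : ℝ) - 1) * ∑ i ∈ A m, f m i := by
    intro f
    exact sigma_helper A (fun m => π m / ((n1 m : ℝ) - 1)) f
  -- main hypotheses transfer
  have hE_eq : ∀ j, (∑ q : Σ m : Fin M, Fin (nb m), w q * cc q j * ee q) = SigXε j := by
    intro j
    have h1 : ∀ q : Σ m : Fin M, Fin (nb m), w q * cc q j * ee q
        = w q * ((x q.1 q.2 j - xbar1 q.1 j) * (ε q.1 q.2 - εbar1 q.1)) :=
      fun q => by simp only [hccdef, heedef]; ring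
    rw [Finset.sum_congr rfl fun q _ => h1 q,
      hsig (fun m i => (x m i j - xbar1 m j) * (ε m i - εbar1 m))]
    refine Finset.sum_congr rfl fun m _ => ?_
    show π m / ((n1 m : ℝ) - 1) * _ = π m * ((1 / ((n1 m : ℝ) - 1)) * _)
    ring
  have hShat_eq : ∀ j l, (∑ q : Σ m : Fin M, Fin (nb m), w q * cc q j * cc q l)
      = Shat j l := by
    intro j l
    have h1 : ∀ q : Σ m : Fin M, Fin (nb m), w q * cc q j * cc q l
        = w q * ((x q.1 q.2 j - xbar1 q.1 j) * (x q.1 q.2 l - xbar1 q.1 l)) :=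
      fun q => by simp only [hccdef]; ring
    rw [Finset.sum_congr rfl fun q _ => h1 q,
      hsig (fun m i => (x m i j - xbar1 m j) * (x m i l - xbar1 m l))]
    refine Finset.sum_congr rfl fun m _ => ?_
    show π m / ((n1 m : ℝ) - 1) * _ = π m * ((1 / ((n1 m : ℝ) - 1)) * _)
    ring
  have hobj_eq : ∀ b : Fin p → ℝ,
      (1/2) * (∑ q : Σ m : Fin M, Fin (nb m), w q * (ee q - ∑ j, cc q j * (b j - β j)) ^ 2)
        + lam * ∑ j, |b j| = obj b := by
    intro b
    have h1 : ∀ q : Σ m : Fin M, Fin (nb m), w q * (ee q - ∑ j, cc q j * (b j - β j)) ^ 2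
        = w q * ((Y q.1 q.2 - Ybar1 q.1 - ∑ j, (x q.1 q.2 j - xbar1 q.1 j) * b j) ^ 2) := by
      intro q
      congr 1
      have h2 : ∑ j, cc q j * (b j - β j)
          = (∑ j, cc q j * b j) - ∑ j, cc q j * β j := by
        rw [← Finset.sum_sub_distrib]
        exact Finset.sum_congr rfl fun j _ => by ring
      simp only [heedef, hccdef] at *
      rw [h2, hpoint q.1 q.2]
      ring
    rw [Finset.sum_congr rfl fun q _ => h1 q,
      hsig (fun m i => (Y m i - Ybar1 m - ∑ j, (x m i j - xbar1 m j) * b j) ^ 2)]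
  -- ρ nonneg
  have hρ0 : 0 ≤ ρ := le_trans (abs_nonneg _)
    (hρ (S.min' (Finset.card_pos.mp hS)) (S.min' (Finset.card_pos.mp hS)))
  have hmain := lasso_abstract w hw cc ee β βhat S hβ lam η ξ C ρ hlam hξ hη0 hη1 hC hρ0
    Spop
    (by intro b; rw [hobj_eq b, hobj_eq βhat]; exact hmin b)
    hcompat
    (by intro j; rw [hE_eq j]; exact hXε j)
    (by intro j l; rw [hShat_eq j l]; exact hρ j l)
    hρs
  exact hmain
end

section
/- (Eigenvalue bound for the weighted treated-sample covariance matrix.) Fix an assignment vector Z ∈ {0,1}ⁿ having exactly n_{[m]1} ones in each block m, where n_{[m]1} ≥ 2 and e_{[m]} = n_{[m]1}/n_{[m]} ≥ c for some c > 0 and every m. Then the largest eigenvalue of Σ̂_{XX} = ∑_{m=1}^M π_{[m]} s²_{[m]X} satisfies Λ_max(Σ̂_{XX}) ≤ (2/c) Λ_max(Σ_{XX}), where Σ_{XX} = ∑_{m=1}^M π_{[m]} S²_{[m]X}. -/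
/-!
For a unit vector `u`, the quadratic form of `Σ̂_XX` splits over blocks into
`π_[m] / (n_[m]1 - 1)` times the scatter of the projections `uᵀ x_i` about their treated mean.
The treated mean minimises that scatter over the treated units, and these are a subset of the
block, so it is at most the scatter of the whole block about its mean. Since `n_[m]1 ≥ 2` and
`n_[m]1 ≥ c n_[m]`, the weights obey `1 / (n_[m]1 - 1) ≤ 2 / n_[m]1 ≤ (2 / c) / (n_[m] - 1)`.
Hence `uᵀ Σ̂_XX u ≤ (2 / c) uᵀ Σ_XX u` for every `u`, and taking suprema gives the bound.
-/

open Finset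

/-- The largest eigenvalue of a symmetric positive semidefinite matrix
(encoded as `Fin p → Fin p → ℝ`), characterized as the supremum of the quadratic form
over unit vectors. -/
noncomputable def lamMax {p : ℕ} (Q : Fin p → Fin p → ℝ) : ℝ :=
  sSup {r : ℝ | ∃ u : Fin p → ℝ, ∑ j, u j ^ 2 = 1 ∧ r = ∑ j, ∑ l, u j * Q j l * u l}

section QuadForm

variable {ι : Type*} [Fintype ι]

def quadForm (Q : ι → ι → ℝ) (u : ι → ℝ) : ℝ :=
  ∑ j, ∑ l, u j * Q j l * u l

theorem quadForm_sum {β : Type*} (t : Finset β) (Q : β → ι → ι → ℝ) (u : ι → ℝ) :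
    quadForm (fun j l => ∑ m ∈ t, Q m j l) u = ∑ m ∈ t, quadForm (Q m) u := by
  simp only [quadForm, mul_sum, sum_mul]
  exact (sum_congr rfl fun _ _ => sum_comm).trans sum_comm

theorem quadForm_const_mul (a : ℝ) (Q : ι → ι → ℝ) (u : ι → ℝ) :
    quadForm (fun j l => a * Q j l) u = a * quadForm Q u := by
  simp only [quadForm, mul_sum]
  exact sum_congr rfl fun _ _ => sum_congr rfl fun _ _ => by ring

theorem quadForm_mul_self (d u : ι → ℝ) :
    quadForm (fun j l => d j * d l) u = (∑ j, u j * d j) ^ 2 := by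
  rw [quadForm, sq, sum_mul_sum]
  exact sum_congr rfl fun _ _ => sum_congr rfl fun _ _ => by ring

end QuadForm

theorem quadForm_le_lamMax {p : ℕ} (Q : Fin p → Fin p → ℝ) {u : Fin p → ℝ}
    (hu : ∑ j, u j ^ 2 = 1) : quadForm Q u ≤ lamMax Q := by
  refine le_csSup ⟨∑ j, ∑ l, |Q j l|, ?_⟩ ⟨u, hu, rfl⟩
  rintro _ ⟨v, hv, rfl⟩
  have hv_le : ∀ j, |v j| ≤ 1 := fun j =>
    (sq_le_one_iff_abs_le_one _).mp <|
      hv ▸ single_le_sum (f := fun j => v j ^ 2) (fun _ _ => sq_nonneg _) (mem_univ j)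
  refine sum_le_sum fun j _ => sum_le_sum fun l _ => ?_
  calc v j * Q j l * v l ≤ |v j| * |Q j l| * |v l| := by
        rw [← abs_mul, ← abs_mul]; exact le_abs_self _
    _ ≤ 1 * |Q j l| * 1 := by gcongr <;> exact hv_le _
    _ = |Q j l| := by ring

theorem lamMax_le_mul_lamMax {p : ℕ} {Q R : Fin p → Fin p → ℝ} {K : ℝ} (hK : 0 ≤ K)
    (hR : ∀ u, 0 ≤ quadForm R u) (hQR : ∀ u, quadForm Q u ≤ K * quadForm R u) :
    lamMax Q ≤ K * lamMax R := by
  have hR_nonneg : 0 ≤ lamMax R := Real.sSup_nonneg <| by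
    rintro _ ⟨u, -, rfl⟩
    exact hR u
  refine Real.sSup_le ?_ (mul_nonneg hK hR_nonneg)
  rintro _ ⟨u, hu, rfl⟩
  exact (hQR u).trans (mul_le_mul_of_nonneg_left (quadForm_le_lamMax R hu) hK)

theorem sum_sq_sub_mean_le {α : Type*} (s : Finset α) (v : α → ℝ) (a : ℝ) :
    ∑ i ∈ s, (v i - (∑ k ∈ s, v k) / #s) ^ 2 ≤ ∑ i ∈ s, (v i - a) ^ 2 := by
  rcases s.eq_empty_or_nonempty with rfl | hs
  · simp
  set μ := (∑ k ∈ s, v k) / #s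
  have hsum : ∑ k ∈ s, v k = #s * μ := by
    have : (#s : ℝ) ≠ 0 := by exact_mod_cast hs.card_pos.ne'
    rw [mul_div_cancel₀ _ this]
  have hdiff : ∑ i ∈ s, (v i - a) ^ 2 - ∑ i ∈ s, (v i - μ) ^ 2 = #s * (μ - a) ^ 2 := by
    calc ∑ i ∈ s, (v i - a) ^ 2 - ∑ i ∈ s, (v i - μ) ^ 2
        = ∑ i ∈ s, (2 * (μ - a) * v i - (μ ^ 2 - a ^ 2)) := by
          rw [← sum_sub_distrib]
          exact sum_congr rfl fun _ _ => by ring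
      _ = 2 * (μ - a) * ∑ k ∈ s, v k - #s * (μ ^ 2 - a ^ 2) := by
          rw [sum_sub_distrib, ← mul_sum, sum_const, nsmul_eq_mul]
      _ = #s * (μ - a) ^ 2 := by rw [hsum]; ring
  nlinarith [sq_nonneg (μ - a)]

theorem sum_sq_inner_sub_mean_le_of_subset {α ι : Type*} [Fintype ι] {s t : Finset α}
    (hst : s ⊆ t) (x : α → ι → ℝ) (u a : ι → ℝ) :
    ∑ i ∈ s, (∑ j, u j * (x i j - (∑ k ∈ s, x k j) / #s)) ^ 2
      ≤ ∑ i ∈ t, (∑ j, u j * (x i j - a j)) ^ 2 := by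
  set v : α → ℝ := fun i => ∑ j, u j * x i j
  have inner_sub (i : α) (b : ι → ℝ) : ∑ j, u j * (x i j - b j) = v i - ∑ j, u j * b j := by
    simp only [v, mul_sub, sum_sub_distrib]
  have inner_mean : ∑ j, u j * ((∑ k ∈ s, x k j) / #s) = (∑ k ∈ s, v k) / #s := by
    simp only [v, mul_div_assoc', mul_sum, ← sum_div]
    rw [sum_comm]
  simp only [inner_sub, inner_mean]
  calc ∑ i ∈ s, (v i - (∑ k ∈ s, v k) / #s) ^ 2
      ≤ ∑ i ∈ s, (v i - ∑ j, u j * a j) ^ 2 := sum_sq_sub_mean_le s v _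
    _ ≤ ∑ i ∈ t, (v i - ∑ j, u j * a j) ^ 2 :=
        sum_le_sum_of_subset_of_nonneg hst fun _ _ _ => sq_nonneg _

theorem one_div_sub_one_le_of_mul_le {a b c : ℝ} (hc : 0 < c) (ha : 2 ≤ a) (hb : 1 < b)
    (hcb : c * b ≤ a) : 1 / (a - 1) ≤ 2 / c * (1 / (b - 1)) := by
  rw [div_mul_div_comm, mul_one, div_le_div_iff₀ (by linarith) (by nlinarith)]
  nlinarith

theorem sample_cov_eigenvalue_bound_general (M p : ℕ) (nb n1 : Fin M → ℕ)
    (hnb : ∀ m, 3 ≤ nb m) (hn1 : ∀ m, 2 ≤ n1 m)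
    (x : (m : Fin M) → Fin (nb m) → Fin p → ℝ) (c : ℝ) (hc : 0 < c)
    (A : (m : Fin M) → Finset (Fin (nb m))) (hA : ∀ m, (A m).card = n1 m)
    (hce : ∀ m, c ≤ (n1 m : ℝ) / (nb m : ℝ)) :
    let n : ℝ := ∑ m, (nb m : ℝ)
    let π : Fin M → ℝ := fun m => (nb m : ℝ) / n
    let xbar : (m : Fin M) → Fin p → ℝ := fun m j => (∑ i, x m i j) / (nb m : ℝ)
    let xbar1 : (m : Fin M) → Fin p → ℝ := fun m j => (∑ i ∈ A m, x m i j) / (n1 m : ℝ)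
    let Shat : Fin p → Fin p → ℝ := fun j l =>
      ∑ m, π m * ((1 / ((n1 m : ℝ) - 1)) *
        ∑ i ∈ A m, (x m i j - xbar1 m j) * (x m i l - xbar1 m l))
    let Spop : Fin p → Fin p → ℝ := fun j l =>
      ∑ m, π m * ((1 / ((nb m : ℝ) - 1)) *
        ∑ i, (x m i j - xbar m j) * (x m i l - xbar m l))
    lamMax Shat ≤ (2 / c) * lamMax Spop := by
  intro n π xbar xbar1 Shat Spop
  have hn1R (m : Fin M) : (2 : ℝ) ≤ n1 m := by exact_mod_cast hn1 m
  have hnbR (m : Fin M) : (3 : ℝ) ≤ nb m := by exact_mod_cast hnb m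
  have hweight (m : Fin M) : 1 / ((n1 m : ℝ) - 1) ≤ 2 / c * (1 / ((nb m : ℝ) - 1)) :=
    one_div_sub_one_le_of_mul_le hc (hn1R m) (by linarith [hnbR m])
      ((le_div_iff₀ (by linarith [hnbR m])).mp (hce m))
  refine lamMax_le_mul_lamMax (by positivity) (fun u => ?_) (fun u => ?_) <;>
    simp only [Shat, Spop, quadForm_sum, quadForm_const_mul, quadForm_mul_self]
  · exact sum_nonneg fun m _ => mul_nonneg (by positivity) <|
      mul_nonneg (one_div_nonneg.mpr (by linarith [hnbR m])) (by positivity)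
  rw [mul_sum]
  refine sum_le_sum fun m _ => ?_
  have hscatter := sum_sq_inner_sub_mean_le_of_subset (subset_univ (A m)) (x m) u (xbar m)
  rw [hA m] at hscatter
  calc π m * (1 / ((n1 m : ℝ) - 1) * ∑ i ∈ A m, (∑ j, u j * (x m i j - xbar1 m j)) ^ 2)
      ≤ π m * (2 / c * (1 / ((nb m : ℝ) - 1)) *
          ∑ i, (∑ j, u j * (x m i j - xbar m j)) ^ 2) := by
        gcongr
        · exact mul_nonneg (by positivity) (one_div_nonneg.mpr (by linarith [hnbR m]))
        · exact hweight m
    _ = 2 / c * (π m * (1 / ((nb m : ℝ) - 1) *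
          ∑ i, (∑ j, u j * (x m i j - xbar m j)) ^ 2)) := by ring

/-- **Eigenvalue bound for the weighted treated-sample covariance matrix.**
For a fixed assignment `A` with `|A m| = n1 m ≥ 2` and propensity scores
`e_[m] = n1 m / nb m ≥ c > 0`,
`Λ_max(Σ̂_XX) ≤ (2/c) Λ_max(Σ_XX)`, where `Σ̂_XX = ∑ₘ π_[m] s²_[m]X` and
`Σ_XX = ∑ₘ π_[m] S²_[m]X`. -/
theorem sample_cov_eigenvalue_bound (M p : ℕ) (nb n1 : Fin M → ℕ)
    (hnb : ∀ m, 3 ≤ nb m) (hn1 : ∀ m, 2 ≤ n1 m) (hn1' : ∀ m, n1 m ≤ nb m)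
    (x : (m : Fin M) → Fin (nb m) → Fin p → ℝ) (c : ℝ) (hc : 0 < c)
    (A : (m : Fin M) → Finset (Fin (nb m))) (hA : ∀ m, (A m).card = n1 m)
    (hce : ∀ m, c ≤ (n1 m : ℝ) / (nb m : ℝ)) :
    let n : ℝ := ∑ m, (nb m : ℝ)
    let π : Fin M → ℝ := fun m => (nb m : ℝ) / n
    let xbar : (m : Fin M) → Fin p → ℝ := fun m j => (∑ i, x m i j) / (nb m : ℝ)
    let xbar1 : (m : Fin M) → Fin p → ℝ := fun m j => (∑ i ∈ A m, x m i j) / (n1 m : ℝ)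
    let Shat : Fin p → Fin p → ℝ := fun j l =>
      ∑ m, π m * ((1 / ((n1 m : ℝ) - 1)) *
        ∑ i ∈ A m, (x m i j - xbar1 m j) * (x m i l - xbar1 m l))
    let Spop : Fin p → Fin p → ℝ := fun j l =>
      ∑ m, π m * ((1 / ((nb m : ℝ) - 1)) *
        ∑ i, (x m i j - xbar m j) * (x m i l - xbar m l))
    lamMax Shat ≤ (2 / c) * lamMax Spop :=
  sample_cov_eigenvalue_bound_general M p nb n1 hnb hn1 x c hc A hA hce
end

section
/- (Deterministic bound on the number of covariates selected by the Lasso.) Suppose η ∈ (0,1), ‖Σ̂_{Xε}‖_∞ ≤ ηλ, ‖β̂ − β‖₁ ≤ K s λ for some constants K > 0 and s > 0, e_{[m]} = n_{[m]1}/n_{[m]} ≥ c > 0 and n_{[m]1} ≥ 2 for every m, and Λ_max(Σ_{XX}) ≤ C′ where Σ_{XX} = ∑_m π_{[m]} S²_{[m]X}. Then the number of nonzero coordinates of β̂ satisfies ‖β̂‖₀ ≤ 2 C′ K (1 + η) s / (c (1 − η)²). -/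
open Finset

private lemma aux_le_zero {x a δ : ℝ} (ha : 0 ≤ a) (hδ : 0 < δ)
    (h : ∀ s : ℝ, 0 < s → s < δ → x ≤ a * s) : x ≤ 0 := by
  by_contra hx
  push_neg at hx
  have hs0 : 0 < min (δ/2) (x/(2*(a+1))) := lt_min (by linarith) (by positivity)
  have hsδ : min (δ/2) (x/(2*(a+1))) < δ := lt_of_le_of_lt (min_le_left _ _) (by linarith)
  have h1 := h _ hs0 hsδ
  have h2 : a * min (δ/2) (x/(2*(a+1))) ≤ a * (x/(2*(a+1))) :=
    mul_le_mul_of_nonneg_left (min_le_right _ _) ha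
  have h3 : a * (x / (2*(a+1))) < x := by
    rw [mul_div_assoc'] at *
    rw [div_lt_iff₀ (by linarith)]
    nlinarith
  linarith

private lemma kkt_abs {g a lam q : ℝ} (ha : 0 ≤ a) (hlam : 0 < lam)
    (h : ∀ t : ℝ, g * t ≤ a * t^2 + lam * (|q + t| - |q|)) : |g| ≤ lam := by
  have key : ∀ s : ℝ, 0 < s → s < 1 → |g| - lam ≤ a * s := by
    intro s hs _
    have h1 := h s
    have h2 := h (-s)
    have e1 : |q + s| - |q| ≤ s := by
      have := abs_add_le q s
      rw [abs_of_pos hs] at this; linarith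
    have e2 : |q + (-s)| - |q| ≤ s := by
      have := abs_sub_abs_le_abs_sub (q + (-s)) q
      have : |q + (-s)| - |q| ≤ |(-s)| := by
        have := abs_add_le q (-s); linarith [abs_add_le q (-s)]
      rw [abs_neg, abs_of_pos hs] at this; linarith
    rcases abs_cases g with ⟨hg, _⟩ | ⟨hg, _⟩
    · nlinarith
    · nlinarith
  have := aux_le_zero ha one_pos key
  linarith

private lemma kkt_pos {g a lam q : ℝ} (ha : 0 ≤ a) (hq : 0 < q)
    (h : ∀ t : ℝ, g * t ≤ a * t^2 + lam * (|q + t| - |q|)) : g = lam := by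
  have key : ∀ s : ℝ, 0 < s → s < q → |g - lam| ≤ a * s := by
    intro s hs hsq
    have h1 := h s
    have h2 := h (-s)
    rw [abs_of_pos hq, abs_of_pos (by linarith : (0:ℝ) < q + s)] at h1
    rw [abs_of_pos hq, abs_of_pos (by linarith : (0:ℝ) < q + (-s))] at h2
    rcases abs_cases (g - lam) with ⟨hg, _⟩ | ⟨hg, _⟩
    · nlinarith
    · nlinarith
  have := aux_le_zero ha hq key
  have : |g - lam| ≤ 0 := this
  have := abs_nonneg (g - lam)
  have : |g - lam| = 0 := le_antisymm ‹|g - lam| ≤ 0› ‹0 ≤ |g - lam|›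
  have := abs_eq_zero.mp this
  linarith

private lemma kkt_neg {g a lam q : ℝ} (ha : 0 ≤ a) (hq : q < 0)
    (h : ∀ t : ℝ, g * t ≤ a * t^2 + lam * (|q + t| - |q|)) : g = -lam := by
  have h' : ∀ t : ℝ, (-g) * t ≤ a * t^2 + lam * (|(-q) + t| - |(-q)|) := by
    intro t
    have := h (-t)
    have e1 : |(-q) + t| = |q + (-t)| := by rw [← abs_neg]; ring_nf
    have e2 : |(-q)| = |q| := abs_neg q
    rw [e1, e2]
    calc (-g) * t = g * (-t) := by ring
    _ ≤ a * (-t)^2 + lam * (|q + (-t)| - |q|) := this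
    _ = a * t^2 + lam * (|q + (-t)| - |q|) := by ring_nf
  have := kkt_pos ha (by linarith : (0:ℝ) < -q) h'
  linarith

private lemma expand_sq_blk {κ : Type*} (s : Finset κ) (r d : κ → ℝ) (t : ℝ) :
    ∑ i ∈ s, (r i - d i * t)^2 =
      ∑ i ∈ s, (r i)^2 - t * (2 * ∑ i ∈ s, d i * r i) + t^2 * ∑ i ∈ s, (d i)^2 := by
  have : ∀ i ∈ s, (r i - d i * t)^2 = (r i)^2 - t * (2 * (d i * r i)) + t^2 * (d i)^2 :=
    fun i _ => by ring
  rw [Finset.sum_congr rfl this, Finset.sum_add_distrib, Finset.sum_sub_distrib,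
    ← Finset.mul_sum, ← Finset.mul_sum, ← Finset.mul_sum]

private lemma expand_sq_nested {M : ℕ} {κ : Fin M → Type*} [∀ m, Fintype (κ m)]
    (w : Fin M → ℝ) (A : (m : Fin M) → Finset (κ m)) (r d : (m : Fin M) → κ m → ℝ) (t : ℝ) :
    ∑ m, w m * ∑ i ∈ A m, (r m i - d m i * t)^2 =
      ∑ m, w m * ∑ i ∈ A m, (r m i)^2 - 2 * t * (∑ m, w m * ∑ i ∈ A m, d m i * r m i)
        + t^2 * ∑ m, w m * ∑ i ∈ A m, (d m i)^2 := by
  have h1 : ∀ m ∈ (univ : Finset (Fin M)), w m * ∑ i ∈ A m, (r m i - d m i * t)^2 =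
      w m * ∑ i ∈ A m, (r m i)^2 - (w m * ∑ i ∈ A m, d m i * r m i) * (2 * t)
        + (w m * ∑ i ∈ A m, (d m i)^2) * t^2 := by
    intro m _; rw [expand_sq_blk]; ring
  rw [Finset.sum_congr rfl h1, Finset.sum_add_distrib, Finset.sum_sub_distrib,
    ← Finset.sum_mul, ← Finset.sum_mul]
  ring

private lemma expand_add_blk {κ : Type*} (s : Finset κ) (P Q : κ → ℝ) (t : ℝ) :
    ∑ i ∈ s, (P i + t * Q i)^2 =
      ∑ i ∈ s, (P i)^2 + t * (2 * ∑ i ∈ s, P i * Q i) + t^2 * ∑ i ∈ s, (Q i)^2 := by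
  have : ∀ i ∈ s, (P i + t * Q i)^2 = (P i)^2 + t * (2 * (P i * Q i)) + t^2 * (Q i)^2 :=
    fun i _ => by ring
  rw [Finset.sum_congr rfl this, Finset.sum_add_distrib, Finset.sum_add_distrib,
    ← Finset.mul_sum, ← Finset.mul_sum, ← Finset.mul_sum]

private lemma cs_nested {M : ℕ} {κ : Fin M → Type*} [∀ m, Fintype (κ m)]
    (w : Fin M → ℝ) (hw : ∀ m, 0 ≤ w m) (A : (m : Fin M) → Finset (κ m))
    (P Q : (m : Fin M) → κ m → ℝ) :
    (∑ m, w m * ∑ i ∈ A m, P m i * Q m i)^2 ≤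
      (∑ m, w m * ∑ i ∈ A m, (P m i)^2) * (∑ m, w m * ∑ i ∈ A m, (Q m i)^2) := by
  have key : ∀ t : ℝ, 0 ≤ (∑ m, w m * ∑ i ∈ A m, (Q m i)^2) * (t * t)
      + (2 * ∑ m, w m * ∑ i ∈ A m, P m i * Q m i) * t
      + (∑ m, w m * ∑ i ∈ A m, (P m i)^2) := by
    intro t
    have h1 : ∀ m ∈ (univ : Finset (Fin M)), w m * ∑ i ∈ A m, (P m i + t * Q m i)^2 =
        w m * ∑ i ∈ A m, (P m i)^2 + (w m * ∑ i ∈ A m, P m i * Q m i) * (2 * t)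
          + (w m * ∑ i ∈ A m, (Q m i)^2) * (t * t) := by
      intro m _; rw [expand_add_blk]; ring
    have e : (∑ m, w m * ∑ i ∈ A m, (Q m i)^2) * (t * t)
        + (2 * ∑ m, w m * ∑ i ∈ A m, P m i * Q m i) * t
        + (∑ m, w m * ∑ i ∈ A m, (P m i)^2)
        = ∑ m, w m * ∑ i ∈ A m, (P m i + t * Q m i)^2 := by
      rw [Finset.sum_congr rfl h1, Finset.sum_add_distrib, Finset.sum_add_distrib,
        ← Finset.sum_mul, ← Finset.sum_mul]
      ring
    rw [e]
    exact Finset.sum_nonneg fun m _ =>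
      mul_nonneg (hw m) (Finset.sum_nonneg fun i _ => sq_nonneg _)
  have hd := discrim_le_zero key
  rw [discrim] at hd
  nlinarith [hd]

private lemma sum_sq_mean_le {κ : Type*} (A : Finset κ) (a : κ → ℝ) (μ : ℝ)
    (hA : 0 < (A.card : ℝ)) :
    ∑ i ∈ A, (a i - (∑ i ∈ A, a i) / (A.card : ℝ))^2 ≤ ∑ i ∈ A, (a i - μ)^2 := by
  have expand : ∀ μ' : ℝ, ∑ i ∈ A, (a i - μ')^2 =
      ∑ i ∈ A, (a i)^2 - 2*μ'*(∑ i ∈ A, a i) + (A.card : ℝ)*μ'^2 := by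
    intro μ'
    have : ∀ i ∈ A, (a i - μ')^2 = (a i)^2 - 2*μ'*(a i) + μ'^2 := fun i _ => by ring
    rw [Finset.sum_congr rfl this, Finset.sum_add_distrib, Finset.sum_sub_distrib,
      ← Finset.mul_sum, Finset.sum_const, nsmul_eq_mul]
  set q := (∑ i ∈ A, a i) / (A.card:ℝ) with hq
  have hSq : (∑ i ∈ A, a i) = (A.card:ℝ) * q := by
    rw [hq]; field_simp
  rw [expand, expand, hSq]
  nlinarith [mul_nonneg hA.le (sq_nonneg (q - μ))]

private lemma swap_nested {M p : ℕ} {κ : Fin M → Type*} [∀ m, Fintype (κ m)]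
    (w : Fin M → ℝ) (A : (m : Fin M) → Finset (κ m))
    (d : (m : Fin M) → κ m → Fin p → ℝ) (e : (m : Fin M) → κ m → ℝ) (v : Fin p → ℝ) :
    ∑ j, v j * (∑ m, w m * ∑ i ∈ A m, d m i j * e m i)
      = ∑ m, w m * ∑ i ∈ A m, (∑ j, v j * d m i j) * e m i := by
  have step1 : ∀ j ∈ (univ : Finset (Fin p)), v j * (∑ m, w m * ∑ i ∈ A m, d m i j * e m i)
      = ∑ m, v j * (w m * ∑ i ∈ A m, d m i j * e m i) := fun j _ => Finset.mul_sum _ _ _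
  rw [Finset.sum_congr rfl step1, Finset.sum_comm]
  apply Finset.sum_congr rfl
  intro m _
  have l1 : ∀ j ∈ (univ : Finset (Fin p)), v j * (w m * ∑ i ∈ A m, d m i j * e m i)
      = w m * ∑ i ∈ A m, v j * d m i j * e m i := by
    intro j _
    rw [Finset.mul_sum, Finset.mul_sum, Finset.mul_sum]
    exact Finset.sum_congr rfl fun i _ => by ring
  rw [Finset.sum_congr rfl l1, ← Finset.mul_sum]
  congr 1
  rw [Finset.sum_comm]
  exact Finset.sum_congr rfl fun i _ => (Finset.sum_mul _ _ _).symm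

private lemma quadform_swap {M p : ℕ} {κ : Fin M → Type*} [∀ m, Fintype (κ m)]
    (c : Fin M → ℝ) (s : (m : Fin M) → Finset (κ m))
    (d : (m : Fin M) → κ m → Fin p → ℝ) (v : Fin p → ℝ) :
    ∑ j, ∑ l, v j * (∑ m, c m * ∑ i ∈ s m, d m i j * d m i l) * v l
      = ∑ m, c m * ∑ i ∈ s m, (∑ j, v j * d m i j)^2 := by
  have h1 : ∀ j ∈ (univ : Finset (Fin p)),
      ∑ l, v j * (∑ m, c m * ∑ i ∈ s m, d m i j * d m i l) * v l
        = v j * (∑ m, c m * ∑ i ∈ s m, d m i j * (∑ l, v l * d m i l)) := by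
    intro j _
    have e1 : ∀ l ∈ (univ : Finset (Fin p)),
        v j * (∑ m, c m * ∑ i ∈ s m, d m i j * d m i l) * v l
          = v j * (v l * (∑ m, c m * ∑ i ∈ s m, d m i l * d m i j)) := by
      intro l _
      have : ∑ m, c m * ∑ i ∈ s m, d m i j * d m i l
          = ∑ m, c m * ∑ i ∈ s m, d m i l * d m i j := by
        exact Finset.sum_congr rfl fun m _ => by
          congr 1; exact Finset.sum_congr rfl fun i _ => by ring
      rw [this]; ring
    rw [Finset.sum_congr rfl e1, ← Finset.mul_sum,
      swap_nested c s d (fun m i => d m i j) v]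
    congr 1
    apply Finset.sum_congr rfl; intro m _
    congr 1
    exact Finset.sum_congr rfl fun i _ => by ring
  rw [Finset.sum_congr rfl h1, swap_nested c s d (fun m i => ∑ l, v l * d m i l) v]
  apply Finset.sum_congr rfl; intro m _
  congr 1
  exact Finset.sum_congr rfl fun i _ => by rw [sq]
private lemma bdd_quad {p : ℕ} (Q : Fin p → Fin p → ℝ) :
    BddAbove {rr : ℝ | ∃ u : Fin p → ℝ,
      ∑ j, u j ^ 2 = 1 ∧ rr = ∑ j, ∑ l, u j * Q j l * u l} := by
  refine ⟨∑ j, ∑ l, |Q j l|, ?_⟩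
  rintro rr ⟨u, hu, rfl⟩
  have hu1 : ∀ j, |u j| ≤ 1 := by
    intro j
    have h1 : u j ^ 2 ≤ 1 := by
      rw [← hu]
      exact Finset.single_le_sum (f := fun j => u j ^ 2)
        (fun i _ => sq_nonneg _) (mem_univ j)
    exact abs_le_one_iff_mul_self_le_one.mpr (by nlinarith)
  apply Finset.sum_le_sum
  intro j _
  apply Finset.sum_le_sum
  intro l _
  calc u j * Q j l * u l ≤ |u j * Q j l * u l| := le_abs_self _
  _ = |u j| * |Q j l| * |u l| := by rw [abs_mul, abs_mul]
  _ ≤ 1 * |Q j l| * 1 := by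
      apply mul_le_mul _ (hu1 l) (abs_nonneg (u l)) (by positivity)
      exact mul_le_mul (hu1 j) le_rfl (abs_nonneg (Q j l))
        (by linarith [abs_nonneg (u j)])
  _ = |Q j l| := by ring

private lemma lamMax_nonneg {p : ℕ} (Q : Fin p → Fin p → ℝ) (hQ : ∀ j, 0 ≤ Q j j) :
    0 ≤ lamMax Q := by
  rcases Nat.eq_zero_or_pos p with hp | hp
  · have hempty : {rr : ℝ | ∃ u : Fin p → ℝ,
        ∑ j, u j ^ 2 = 1 ∧ rr = ∑ j, ∑ l, u j * Q j l * u l} = ∅ := by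
      ext rr
      simp only [Set.mem_setOf_eq, Set.mem_empty_iff_false, iff_false, not_exists]
      intro u hcon
      have h0 : ∑ j, u j ^ 2 = 0 := by subst hp; simp
      rw [h0] at hcon
      norm_num at hcon
    rw [lamMax, hempty, Real.sSup_empty]
  · set j0 : Fin p := ⟨0, hp⟩
    have hmem : Q j0 j0 ∈ {rr : ℝ | ∃ u : Fin p → ℝ,
        ∑ j, u j ^ 2 = 1 ∧ rr = ∑ j, ∑ l, u j * Q j l * u l} := by
      refine ⟨fun j => if j = j0 then 1 else 0, ?_, ?_⟩
      · simp [apply_ite (· ^ 2), Finset.sum_ite_eq']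
      · simp [ite_mul, mul_ite, Finset.sum_ite_eq', Finset.sum_ite_eq]
    exact le_trans (hQ j0) (le_csSup (bdd_quad Q) hmem)

private lemma quad_le_lamMax {p : ℕ} (Q : Fin p → Fin p → ℝ) (v : Fin p → ℝ) (N : ℝ)
    (hN : 0 < N) (hv : ∑ j, v j ^ 2 = N) :
    ∑ j, ∑ l, v j * Q j l * v l ≤ lamMax Q * N := by
  set sQ := Real.sqrt N with hsQ
  have hsq : sQ * sQ = N := Real.mul_self_sqrt hN.le
  have hsqpos : 0 < sQ := Real.sqrt_pos.mpr hN
  have hNne : N ≠ 0 := hN.ne'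
  have humem : (∑ j, ∑ l, v j * Q j l * v l) / N ∈ {rr : ℝ | ∃ u : Fin p → ℝ,
      ∑ j, u j ^ 2 = 1 ∧ rr = ∑ j, ∑ l, u j * Q j l * u l} := by
    refine ⟨fun j => v j / sQ, ?_, ?_⟩
    · have h1 : ∀ j ∈ (univ : Finset (Fin p)), (v j / sQ)^2 = (v j)^2 / N := by
        intro j _
        rw [div_pow, sq sQ, hsq]
      rw [Finset.sum_congr rfl h1, ← Finset.sum_div, hv, div_self hNne]
    · have h1 : ∀ j l, v j / sQ * Q j l * (v l / sQ) = (v j * Q j l * v l)/N := by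
        intro j l
        rw [← hsq]
        field_simp
      symm
      have h2' : ∀ j ∈ (univ : Finset (Fin p)),
          ∑ l, v j / sQ * Q j l * (v l / sQ) = (∑ l, v j * Q j l * v l)/N := by
        intro j _
        rw [Finset.sum_congr rfl fun l (_ : l ∈ univ) => h1 j l, ← Finset.sum_div]
      rw [Finset.sum_congr rfl h2', ← Finset.sum_div]
  have h2 : (∑ j, ∑ l, v j * Q j l * v l) / N ≤ lamMax Q := le_csSup (bdd_quad Q) humem
  calc ∑ j, ∑ l, v j * Q j l * v l = ((∑ j, ∑ l, v j * Q j l * v l)/N) * N := by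
        field_simp
  _ ≤ lamMax Q * N := mul_le_mul_of_nonneg_right h2 hN.le

set_option maxHeartbeats 2000000 in
/-- **Deterministic bound on the number of covariates selected by the Lasso.**
Fixed assignment `A` with `|A m| = n1 m ≥ 2` and `e_[m] = n1 m / nb m ≥ c > 0`.
If `β̂` minimizes the weighted Lasso objective, `‖Σ̂_Xε‖_∞ ≤ ηλ` (with `η ∈ (0,1)`),
`‖β̂ − β‖₁ ≤ K s λ`, and `Λ_max(Σ_XX) ≤ C′`, then
`‖β̂‖₀ ≤ 2C′K(1+η)s/(c(1−η)²)`. -/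
theorem lasso_sparsity_bound (M p : ℕ) (nb n1 : Fin M → ℕ)
    (hnb : ∀ m, 3 ≤ nb m) (hn1 : ∀ m, 2 ≤ n1 m) (hn1' : ∀ m, n1 m ≤ nb m)
    (x : (m : Fin M) → Fin (nb m) → Fin p → ℝ)
    (Y : (m : Fin M) → Fin (nb m) → ℝ) (β βhat : Fin p → ℝ)
    (A : (m : Fin M) → Finset (Fin (nb m))) (hA : ∀ m, (A m).card = n1 m)
    (lam η c C' K s : ℝ) (hlam : 0 < lam) (hη0 : 0 < η) (hη1 : η < 1)
    (hc : 0 < c) (hK : 0 < K) (hs : 0 < s)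
    (hce : ∀ m, c ≤ (n1 m : ℝ) / (nb m : ℝ)) :
    let n : ℝ := ∑ m, (nb m : ℝ)
    let π : Fin M → ℝ := fun m => (nb m : ℝ) / n
    let xbar : (m : Fin M) → Fin p → ℝ := fun m j => (∑ i, x m i j) / (nb m : ℝ)
    let Ybar : (m : Fin M) → ℝ := fun m => (∑ i, Y m i) / (nb m : ℝ)
    let ε : (m : Fin M) → Fin (nb m) → ℝ := fun m i =>
      Y m i - Ybar m - ∑ j, (x m i j - xbar m j) * β j
    let xbar1 : (m : Fin M) → Fin p → ℝ := fun m j => (∑ i ∈ A m, x m i j) / (n1 m : ℝ)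
    let Ybar1 : (m : Fin M) → ℝ := fun m => (∑ i ∈ A m, Y m i) / (n1 m : ℝ)
    let εbar1 : (m : Fin M) → ℝ := fun m => (∑ i ∈ A m, ε m i) / (n1 m : ℝ)
    let Spop : Fin p → Fin p → ℝ := fun j l =>
      ∑ m, π m * ((1 / ((nb m : ℝ) - 1)) *
        ∑ i, (x m i j - xbar m j) * (x m i l - xbar m l))
    let SigXε : Fin p → ℝ := fun j =>
      ∑ m, π m * ((1 / ((n1 m : ℝ) - 1)) *
        ∑ i ∈ A m, (x m i j - xbar1 m j) * (ε m i - εbar1 m))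
    let obj : (Fin p → ℝ) → ℝ := fun b =>
      (1 / 2) * ∑ m, π m / ((n1 m : ℝ) - 1) *
          ∑ i ∈ A m, (Y m i - Ybar1 m - ∑ j, (x m i j - xbar1 m j) * b j) ^ 2
        + lam * ∑ j, |b j|
    (∀ b : Fin p → ℝ, obj βhat ≤ obj b) →
    (∀ j, |SigXε j| ≤ η * lam) →
    (∑ j, |βhat j - β j| ≤ K * s * lam) →
    lamMax Spop ≤ C' →
    ((univ.filter fun j => βhat j ≠ 0).card : ℝ)
      ≤ 2 * C' * K * (1 + η) * s / (c * (1 - η) ^ 2) := by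
  intro n π xbar Ybar ε xbar1 Ybar1 εbar1 Spop SigXε obj hmin hXε hl1 hLmax
  -- basic numeric facts
  have hn1R : ∀ m, (2:ℝ) ≤ (n1 m : ℝ) := fun m => by exact_mod_cast hn1 m
  have hnbR : ∀ m, (3:ℝ) ≤ (nb m : ℝ) := fun m => by exact_mod_cast hnb m
  have hn1nb : ∀ m, (n1 m : ℝ) ≤ (nb m : ℝ) := fun m => by exact_mod_cast hn1' m
  have hπpos : ∀ m, 0 < π m := by
    intro m
    have h1 : (nb m : ℝ) ≤ n := by
      exact Finset.single_le_sum (f := fun m => ((nb m : ℝ))) (fun i _ => by positivity)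
        (mem_univ m)
    have h2 : (0:ℝ) < nb m := lt_of_lt_of_le (by norm_num) (hnbR m)
    exact div_pos h2 (lt_of_lt_of_le h2 h1)
  have hcard : ∀ m, ((A m).card : ℝ) = (n1 m : ℝ) := fun m => by exact_mod_cast hA m
  set d1 : (m : Fin M) → Fin (nb m) → Fin p → ℝ := fun m i j => x m i j - xbar1 m j with hd1
  set d0 : (m : Fin M) → Fin (nb m) → Fin p → ℝ := fun m i j => x m i j - xbar m j with hd0
  set w : Fin M → ℝ := fun m => π m / ((n1 m : ℝ) - 1) with hwdef
  have hwpos : ∀ m, 0 < w m := fun m => div_pos (hπpos m) (by linarith [hn1R m])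
  set r : (m : Fin M) → Fin (nb m) → ℝ :=
    fun m i => Y m i - Ybar1 m - ∑ l, d1 m i l * βhat l with hrdef
  set rb : (m : Fin M) → Fin (nb m) → ℝ :=
    fun m i => Y m i - Ybar1 m - ∑ l, d1 m i l * β l with hrbdef
  set e : (m : Fin M) → Fin (nb m) → ℝ :=
    fun m i => ∑ l, d1 m i l * (βhat l - β l) with hedef
  set G : Fin p → ℝ := fun j => ∑ m, w m * ∑ i ∈ A m, d1 m i j * r m i with hGdef
  set T : Fin p → ℝ := fun j => ∑ m, w m * ∑ i ∈ A m, d1 m i j * e m i with hTdef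
  set aa : Fin p → ℝ := fun j => ∑ m, w m * ∑ i ∈ A m, (d1 m i j)^2 with haadef
  have hobj2 : ∀ b : Fin p → ℝ, obj b =
      (1/2) * ∑ m, w m * ∑ i ∈ A m, (Y m i - Ybar1 m - ∑ l, d1 m i l * b l)^2
        + lam * ∑ l, |b l| := fun b => rfl
  have haa0 : ∀ j, 0 ≤ aa j / 2 := by
    intro j
    have : 0 ≤ aa j := Finset.sum_nonneg fun m _ =>
      mul_nonneg (hwpos m).le (Finset.sum_nonneg fun i _ => sq_nonneg _)
    linarith
  have hkkt : ∀ j, ∀ t : ℝ, G j * t ≤ (aa j / 2) * t^2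
      + lam * (|βhat j + t| - |βhat j|) := by
    intro j t
    have h0 := hmin (Function.update βhat j (βhat j + t))
    rw [hobj2, hobj2] at h0
    have hupd : ∀ m, ∀ i ∈ A m,
        (Y m i - Ybar1 m - ∑ l, d1 m i l * (Function.update βhat j (βhat j + t)) l)^2
          = (r m i - d1 m i j * t)^2 := by
      intro m i _
      congr 1
      have h1 : ∀ l ∈ (univ : Finset (Fin p)),
          d1 m i l * (Function.update βhat j (βhat j + t)) l
            = d1 m i l * βhat l + (if l = j then d1 m i j * t else 0) := by
        intro l _
        rcases eq_or_ne l j with rfl | h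
        · rw [Function.update_self, if_pos rfl]; ring
        · rw [Function.update_of_ne h, if_neg h, add_zero]
      rw [Finset.sum_congr rfl h1, Finset.sum_add_distrib, Finset.sum_ite_eq' univ j]
      simp only [mem_univ, if_true, hrdef]
      ring
    have habs : ∑ l, |(Function.update βhat j (βhat j + t)) l|
        = ∑ l, |βhat l| + (|βhat j + t| - |βhat j|) := by
      have h1 : ∀ l ∈ (univ : Finset (Fin p)),
          |(Function.update βhat j (βhat j + t)) l|
            = |βhat l| + (if l = j then |βhat j + t| - |βhat j| else 0) := by
        intro l _
        rcases eq_or_ne l j with rfl | h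
        · rw [Function.update_self, if_pos rfl]; ring
        · rw [Function.update_of_ne h, if_neg h, add_zero]
      rw [Finset.sum_congr rfl h1, Finset.sum_add_distrib, Finset.sum_ite_eq' univ j]
      simp only [mem_univ, if_true]
    have hsq : ∑ m, w m * ∑ i ∈ A m,
        (Y m i - Ybar1 m - ∑ l, d1 m i l * (Function.update βhat j (βhat j + t)) l)^2
          = ∑ m, w m * ∑ i ∈ A m, (r m i - d1 m i j * t)^2 := by
      exact Finset.sum_congr rfl fun m _ => by
        rw [Finset.sum_congr rfl (hupd m)]
    rw [hsq, expand_sq_nested w A r (fun m i => d1 m i j) t, habs] at h0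
    have hGj : G j = ∑ m, w m * ∑ i ∈ A m, d1 m i j * r m i := by rw [hGdef]
    have haj : aa j = ∑ m, w m * ∑ i ∈ A m, (d1 m i j)^2 := by rw [haadef]
    rw [← hGj, ← haj] at h0
    nlinarith [h0]
  -- G bounds from KKT
  have hGle : ∀ j, |G j| ≤ lam := fun j => kkt_abs (haa0 j) hlam (hkkt j)
  have hGpos : ∀ j, 0 < βhat j → G j = lam := fun j h => kkt_pos (haa0 j) h (hkkt j)
  have hGneg : ∀ j, βhat j < 0 → G j = -lam := fun j h => kkt_neg (haa0 j) h (hkkt j)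
  -- pointwise residual identities
  have hre : ∀ m i, r m i = rb m i - e m i := by
    intro m i
    simp only [hrdef, hrbdef, hedef]
    have h1 : ∑ l, d1 m i l * βhat l
        = ∑ l, d1 m i l * β l + ∑ l, d1 m i l * (βhat l - β l) := by
      rw [← Finset.sum_add_distrib]
      exact Finset.sum_congr rfl fun l _ => by ring
    linarith [h1]
  have hn1ne : ∀ m, ((n1 m : ℝ)) ≠ 0 := fun m => by linarith [hn1R m]
  have hsumε : ∀ m, ∑ i' ∈ A m, ε m i' = (∑ i' ∈ A m, Y m i') - (n1 m:ℝ) * Ybar m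
      - ∑ jj, ((∑ i' ∈ A m, x m i' jj) - (n1 m:ℝ) * xbar m jj) * β jj := by
    intro m
    have h1 : ∀ i' ∈ A m, ε m i'
        = Y m i' - Ybar m - ∑ jj, (x m i' jj - xbar m jj) * β jj := fun _ _ => rfl
    rw [Finset.sum_congr rfl h1, Finset.sum_sub_distrib, Finset.sum_sub_distrib,
      Finset.sum_const, nsmul_eq_mul, hcard m, Finset.sum_comm]
    congr 1
    apply Finset.sum_congr rfl
    intro jj _
    rw [← Finset.sum_mul, Finset.sum_sub_distrib, Finset.sum_const, nsmul_eq_mul, hcard m]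
  have hεbar : ∀ m, εbar1 m = Ybar1 m - Ybar m - ∑ jj, (xbar1 m jj - xbar m jj) * β jj := by
    intro m
    have hεb : εbar1 m = (∑ i' ∈ A m, ε m i') / (n1 m : ℝ) := rfl
    rw [hεb, hsumε m, div_eq_iff (hn1ne m)]
    have h3 : ∀ jj ∈ (univ : Finset (Fin p)),
        ((xbar1 m jj - xbar m jj) * β jj) * (n1 m:ℝ)
          = ((∑ i' ∈ A m, x m i' jj) - (n1 m:ℝ) * xbar m jj) * β jj := by
      intro jj _
      have hx1 : xbar1 m jj = (∑ i' ∈ A m, x m i' jj) / (n1 m:ℝ) := rfl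
      rw [hx1]
      calc ((∑ i' ∈ A m, x m i' jj) / (n1 m:ℝ) - xbar m jj) * β jj * (n1 m:ℝ)
          = ((∑ i' ∈ A m, x m i' jj) / (n1 m:ℝ) * (n1 m:ℝ)) * β jj
            - (n1 m:ℝ) * xbar m jj * β jj := by ring
      _ = (∑ i' ∈ A m, x m i' jj) * β jj - (n1 m:ℝ) * xbar m jj * β jj := by
          rw [div_mul_cancel₀ _ (hn1ne m)]
      _ = ((∑ i' ∈ A m, x m i' jj) - (n1 m:ℝ) * xbar m jj) * β jj := by ring
    have h4 : Ybar1 m = (∑ i' ∈ A m, Y m i')/(n1 m:ℝ) := rfl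
    rw [sub_mul, sub_mul, Finset.sum_mul, Finset.sum_congr rfl h3, h4,
      div_mul_cancel₀ _ (hn1ne m)]
    ring
  have hpt : ∀ m (i : Fin (nb m)), ε m i - εbar1 m = rb m i := by
    intro m i
    rw [hεbar m]
    have h1 : ε m i = Y m i - Ybar m - ∑ jj, (x m i jj - xbar m jj) * β jj := rfl
    have h2 : rb m i = Y m i - Ybar1 m - ∑ jj, (x m i jj - xbar1 m jj) * β jj := rfl
    rw [h1, h2]
    have h3 : ∑ jj, (x m i jj - xbar m jj) * β jj
        - ∑ jj, (xbar1 m jj - xbar m jj) * β jj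
        = ∑ jj, (x m i jj - xbar1 m jj) * β jj := by
      rw [← Finset.sum_sub_distrib]
      exact Finset.sum_congr rfl fun jj _ => by ring
    linarith [h3]
  have hSig2 : ∀ j, SigXε j = ∑ m, w m * ∑ i ∈ A m, d1 m i j * rb m i := by
    intro j
    have h0 : SigXε j = ∑ m, π m * ((1/((n1 m:ℝ)-1))
        * ∑ i ∈ A m, (x m i j - xbar1 m j) * (ε m i - εbar1 m)) := rfl
    rw [h0]
    apply Finset.sum_congr rfl
    intro m _
    have h1 : ∑ i ∈ A m, (x m i j - xbar1 m j) * (ε m i - εbar1 m)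
        = ∑ i ∈ A m, d1 m i j * rb m i :=
      Finset.sum_congr rfl fun i _ => by rw [hpt m i]
    rw [h1]
    have hwm : w m = π m / ((n1 m:ℝ)-1) := rfl
    rw [hwm]
    ring
  have hGT : ∀ j, G j = SigXε j - T j := by
    intro j
    rw [hSig2 j]
    have hGj : G j = ∑ m, w m * ∑ i ∈ A m, d1 m i j * r m i := rfl
    have hTj : T j = ∑ m, w m * ∑ i ∈ A m, d1 m i j * e m i := rfl
    rw [hGj, hTj, ← Finset.sum_sub_distrib]
    apply Finset.sum_congr rfl
    intro m _
    rw [← mul_sub, ← Finset.sum_sub_distrib]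
    congr 1
    apply Finset.sum_congr rfl
    intro i _
    rw [hre m i]
    ring
  have hTabs : ∀ j, |T j| ≤ (1+η)*lam := by
    intro j
    have h1 := hGle j
    have h2 := hXε j
    have h3 : T j = SigXε j - G j := by have := hGT j; linarith
    rw [h3]
    have h4 : |SigXε j - G j| ≤ |SigXε j| + |G j| := by
      calc |SigXε j - G j| = |SigXε j + -(G j)| := by rw [sub_eq_add_neg]
      _ ≤ |SigXε j| + |-(G j)| := abs_add_le _ _
      _ = |SigXε j| + |G j| := by rw [abs_neg]
    linarith
  -- the sign vector
  set v : Fin p → ℝ :=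
    (fun j => if βhat j = 0 then 0 else if 0 < βhat j then -1 else 1) with hvdef
  have hv0 : ∀ j, βhat j = 0 → v j = 0 := by
    intro j h; rw [hvdef]; simp [h]
  have hvT : ∀ j, βhat j ≠ 0 → (1-η)*lam ≤ v j * T j := by
    intro j hj
    have h3 : T j = SigXε j - G j := by have := hGT j; linarith
    have hXj := abs_le.mp (hXε j)
    rcases lt_trichotomy (βhat j) 0 with hlt | h0 | hgt
    · have hG := hGneg j hlt
      have hv : v j = 1 := by
        rw [hvdef]; simp only [if_neg hj, if_neg (not_lt.mpr hlt.le)]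
      rw [hv, h3, hG, one_mul]
      linarith [hXj.1]
    · exact absurd h0 hj
    · have hG := hGpos j hgt
      have hv : v j = -1 := by
        rw [hvdef]; simp only [if_neg hj, if_pos hgt]
      rw [hv, h3, hG]
      have := hXj.2
      nlinarith
  -- lower bound on ∑ v T
  have hsum_vT : ((univ.filter fun j => βhat j ≠ 0).card : ℝ) * ((1-η)*lam)
      ≤ ∑ j, v j * T j := by
    have hfil : ∑ j ∈ univ.filter (fun j => βhat j ≠ 0), (v j * T j) = ∑ j, v j * T j := by
      apply Finset.sum_filter_of_ne
      intro j _ hne h0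
      exact hne (by rw [hv0 j h0, zero_mul])
    have hlow : ∀ j ∈ univ.filter (fun j => βhat j ≠ 0), (1-η)*lam ≤ v j * T j :=
      fun j hj => hvT j (Finset.mem_filter.mp hj).2
    calc ((univ.filter fun j => βhat j ≠ 0).card : ℝ) * ((1-η)*lam)
        = (univ.filter fun j => βhat j ≠ 0).card • ((1-η)*lam) := by rw [nsmul_eq_mul]
    _ ≤ ∑ j ∈ univ.filter (fun j => βhat j ≠ 0), (v j * T j) :=
        Finset.card_nsmul_le_sum _ _ _ hlow
    _ = ∑ j, v j * T j := hfil
  -- upper bound on ∑ Δ T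
  have hDT : ∑ j, (βhat j - β j) * T j ≤ (K*s*lam)*((1+η)*lam) := by
    calc ∑ j, (βhat j - β j) * T j ≤ ∑ j, |βhat j - β j| * ((1+η)*lam) := by
          apply Finset.sum_le_sum
          intro j _
          calc (βhat j - β j) * T j ≤ |(βhat j - β j) * T j| := le_abs_self _
          _ = |βhat j - β j| * |T j| := abs_mul _ _
          _ ≤ |βhat j - β j| * ((1+η)*lam) :=
              mul_le_mul_of_nonneg_left (hTabs j) (abs_nonneg _)
    _ = (∑ j, |βhat j - β j|) * ((1+η)*lam) := (Finset.sum_mul _ _ _).symm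
    _ ≤ (K*s*lam)*((1+η)*lam) := by
        apply mul_le_mul_of_nonneg_right hl1
        nlinarith
  -- swap identities
  have hBvD : ∑ j, v j * T j
      = ∑ m, w m * ∑ i ∈ A m, (∑ j, v j * d1 m i j) * e m i := by
    have hTj : ∀ j ∈ (univ : Finset (Fin p)),
        v j * T j = v j * (∑ m, w m * ∑ i ∈ A m, d1 m i j * e m i) := fun j _ => rfl
    rw [Finset.sum_congr rfl hTj]
    exact swap_nested w A d1 e v
  have hBDD : ∑ j, (βhat j - β j) * T j = ∑ m, w m * ∑ i ∈ A m, (e m i)^2 := by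
    have hTj : ∀ j ∈ (univ : Finset (Fin p)), (βhat j - β j) * T j
        = (βhat j - β j) * (∑ m, w m * ∑ i ∈ A m, d1 m i j * e m i) := fun j _ => rfl
    rw [Finset.sum_congr rfl hTj, swap_nested w A d1 e (fun j => βhat j - β j)]
    apply Finset.sum_congr rfl
    intro m _
    congr 1
    apply Finset.sum_congr rfl
    intro i _
    have he : ∑ j, (βhat j - β j) * d1 m i j = e m i := by
      have h0 : e m i = ∑ l, d1 m i l * (βhat l - β l) := rfl
      rw [h0]
      exact Finset.sum_congr rfl fun l _ => by ring
    rw [he, sq]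
  have hEnn : 0 ≤ ∑ m, w m * ∑ i ∈ A m, (e m i)^2 :=
    Finset.sum_nonneg fun m _ =>
      mul_nonneg (hwpos m).le (Finset.sum_nonneg fun i _ => sq_nonneg _)
  have hPnn : 0 ≤ ∑ m, w m * ∑ i ∈ A m, (∑ j, v j * d1 m i j)^2 :=
    Finset.sum_nonneg fun m _ =>
      mul_nonneg (hwpos m).le (Finset.sum_nonneg fun i _ => sq_nonneg _)
  have hCS : (∑ j, v j * T j)^2
      ≤ (∑ m, w m * ∑ i ∈ A m, (∑ j, v j * d1 m i j)^2)
        * (∑ j, (βhat j - β j) * T j) := by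
    rw [hBvD, hBDD]
    exact cs_nested w (fun m => (hwpos m).le) A (fun m i => ∑ j, v j * d1 m i j) e
  -- comparison of treated-sample variance against population variance
  have hcomp : ∀ m, ∑ i ∈ A m, (∑ j, v j * d1 m i j)^2
      ≤ ∑ i, (∑ j, v j * d0 m i j)^2 := by
    intro m
    set am : Fin (nb m) → ℝ := fun i => ∑ j, v j * x m i j with hamdef
    have hcardpos : 0 < ((A m).card : ℝ) := by rw [hcard m]; linarith [hn1R m]
    have h1 : ∀ i ∈ A m, (∑ j, v j * d1 m i j)^2
        = (am i - (∑ i' ∈ A m, am i')/((A m).card : ℝ))^2 := by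
      intro i _
      congr 1
      have e1 : ∀ j ∈ (univ : Finset (Fin p)),
          v j * d1 m i j = v j * x m i j - v j * xbar1 m j := fun j _ => by
        have : d1 m i j = x m i j - xbar1 m j := rfl
        rw [this]; ring
      rw [Finset.sum_congr rfl e1, Finset.sum_sub_distrib]
      congr 1
      have e2 : ∀ j ∈ (univ : Finset (Fin p)),
          v j * xbar1 m j = (v j * ∑ i' ∈ A m, x m i' j)/(n1 m : ℝ) := by
        intro j _
        have hx1 : xbar1 m j = (∑ i' ∈ A m, x m i' j)/(n1 m:ℝ) := rfl
        rw [hx1, mul_div_assoc]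
      rw [Finset.sum_congr rfl e2, ← Finset.sum_div, hcard m]
      congr 1
      calc ∑ j, v j * ∑ i' ∈ A m, x m i' j
          = ∑ j, ∑ i' ∈ A m, v j * x m i' j :=
            Finset.sum_congr rfl fun j _ => Finset.mul_sum _ _ _
      _ = ∑ i' ∈ A m, ∑ j, v j * x m i' j := Finset.sum_comm
    have h2 : ∀ i, (∑ j, v j * d0 m i j)^2 = (am i - ∑ j, v j * xbar m j)^2 := by
      intro i
      congr 1
      have e1 : ∀ j ∈ (univ : Finset (Fin p)),
          v j * d0 m i j = v j * x m i j - v j * xbar m j := fun j _ => by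
        have : d0 m i j = x m i j - xbar m j := rfl
        rw [this]; ring
      rw [Finset.sum_congr rfl e1, Finset.sum_sub_distrib]
    calc ∑ i ∈ A m, (∑ j, v j * d1 m i j)^2
        = ∑ i ∈ A m, (am i - (∑ i' ∈ A m, am i')/((A m).card : ℝ))^2 :=
          Finset.sum_congr rfl h1
    _ ≤ ∑ i ∈ A m, (am i - ∑ j, v j * xbar m j)^2 :=
          sum_sq_mean_le (A m) am _ hcardpos
    _ ≤ ∑ i, (am i - ∑ j, v j * xbar m j)^2 :=
          Finset.sum_le_sum_of_subset_of_nonneg (Finset.subset_univ _)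
            (fun i _ _ => sq_nonneg _)
    _ = ∑ i, (∑ j, v j * d0 m i j)^2 := (Finset.sum_congr rfl fun i _ => h2 i).symm
  -- coefficient comparison
  have hcoef : ∀ m, w m ≤ (2/c) * (π m * (1/((nb m:ℝ)-1))) := by
    intro m
    have hnb1 : (0:ℝ) < (nb m:ℝ)-1 := by linarith [hnbR m]
    have hn11 : (0:ℝ) < (n1 m:ℝ)-1 := by linarith [hn1R m]
    have hbpos : (0:ℝ) < (nb m:ℝ) := by linarith [hnbR m]
    have hcnb : c * (nb m:ℝ) ≤ (n1 m:ℝ) := (le_div_iff₀ hbpos).mp (hce m)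
    have h1 : c * ((nb m:ℝ)-1) ≤ 2*((n1 m:ℝ)-1) := by nlinarith [hc.le, hn1R m]
    have hwm : w m = π m / ((n1 m:ℝ)-1) := rfl
    rw [hwm, div_le_iff₀ hn11]
    have expand : 2/c * (π m * (1/((nb m:ℝ)-1))) * ((n1 m:ℝ)-1)
        = (π m * (2*((n1 m:ℝ)-1)))/(c*((nb m:ℝ)-1)) := by
      field_simp
    rw [expand, le_div_iff₀ (mul_pos hc hnb1)]
    calc π m * (c*((nb m:ℝ)-1)) ≤ π m * (2*((n1 m:ℝ)-1)) :=
          mul_le_mul_of_nonneg_left h1 (hπpos m).le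
    _ = π m * (2*((n1 m:ℝ)-1)) := rfl
  have hP2 : ∑ m, w m * ∑ i ∈ A m, (∑ j, v j * d1 m i j)^2
      ≤ (2/c) * ∑ m, (π m * (1/((nb m:ℝ)-1))) * ∑ i, (∑ j, v j * d0 m i j)^2 := by
    rw [Finset.mul_sum]
    apply Finset.sum_le_sum
    intro m _
    have h0 : 0 ≤ ∑ i ∈ A m, (∑ j, v j * d1 m i j)^2 :=
      Finset.sum_nonneg fun i _ => sq_nonneg _
    have hco : (0:ℝ) ≤ (2/c) * (π m * (1/((nb m:ℝ)-1))) := by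
      have := hπpos m
      have : (0:ℝ) < (nb m:ℝ)-1 := by linarith [hnbR m]
      positivity
    calc w m * ∑ i ∈ A m, (∑ j, v j * d1 m i j)^2
        ≤ ((2/c) * (π m * (1/((nb m:ℝ)-1)))) * ∑ i ∈ A m, (∑ j, v j * d1 m i j)^2 :=
          mul_le_mul_of_nonneg_right (hcoef m) h0
    _ ≤ ((2/c) * (π m * (1/((nb m:ℝ)-1)))) * ∑ i, (∑ j, v j * d0 m i j)^2 :=
          mul_le_mul_of_nonneg_left (hcomp m) hco
    _ = 2/c * ((π m * (1/((nb m:ℝ)-1))) * ∑ i, (∑ j, v j * d0 m i j)^2) := by ring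
  -- population quadratic form
  have hquadpop : ∑ m, (π m * (1/((nb m:ℝ)-1))) * ∑ i, (∑ j, v j * d0 m i j)^2
      = ∑ j, ∑ l, v j * Spop j l * v l := by
    rw [← quadform_swap (fun m => π m * (1/((nb m:ℝ)-1)))
      (fun m => (univ : Finset (Fin (nb m)))) d0 v]
    apply Finset.sum_congr rfl
    intro j _
    apply Finset.sum_congr rfl
    intro l _
    have hSp : Spop j l = ∑ m, π m * ((1/((nb m:ℝ)-1))
        * ∑ i, (x m i j - xbar m j) * (x m i l - xbar m l)) := rfl
    have : (∑ m, (π m * (1/((nb m:ℝ)-1))) * ∑ i, d0 m i j * d0 m i l) = Spop j l := by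
      rw [hSp]
      apply Finset.sum_congr rfl
      intro m _
      have hd0' : ∀ i, d0 m i j * d0 m i l
          = (x m i j - xbar m j) * (x m i l - xbar m l) := fun i => rfl
      rw [Finset.sum_congr rfl (fun i _ => hd0' i)]
      ring
    rw [this]
  have hSpnn : ∀ j, 0 ≤ Spop j j := by
    intro j
    have hSp : Spop j j = ∑ m, π m * ((1/((nb m:ℝ)-1))
        * ∑ i, (x m i j - xbar m j) * (x m i j - xbar m j)) := rfl
    rw [hSp]
    apply Finset.sum_nonneg
    intro m _
    have h1 : (0:ℝ) < (nb m:ℝ)-1 := by linarith [hnbR m]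
    exact mul_nonneg (hπpos m).le (mul_nonneg (by positivity)
      (Finset.sum_nonneg fun i _ => mul_self_nonneg _))
  have hC'0 : 0 ≤ C' := le_trans (lamMax_nonneg Spop hSpnn) hLmax
  rcases Nat.eq_zero_or_pos (univ.filter fun j => βhat j ≠ 0).card with hN0 | hNpos
  · rw [hN0]
    have h6 : (0:ℝ) ≤ 2*C'*K*(1+η)*s :=
      mul_nonneg (mul_nonneg (mul_nonneg (by linarith) hK.le) (by linarith)) hs.le
    have h7 : (0:ℝ) ≤ c*(1-η)^2 := by positivity
    simpa using div_nonneg h6 h7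
  · have hNrpos : (0:ℝ) < ((univ.filter fun j => βhat j ≠ 0).card : ℝ) := by
      exact_mod_cast hNpos
    have hvsq : ∑ j, (v j)^2 = ((univ.filter fun j => βhat j ≠ 0).card : ℝ) := by
      have h1 : ∀ j ∈ (univ : Finset (Fin p)),
          (v j)^2 = if βhat j ≠ 0 then (1:ℝ) else 0 := by
        intro j _
        rcases eq_or_ne (βhat j) 0 with h|h
        · rw [hv0 j h]; simp [h]
        · have hvj : v j = -1 ∨ v j = 1 := by
            rw [hvdef]
            by_cases h2 : 0 < βhat j
            · left; simp [h, h2]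
            · right; simp [h, h2]
          rcases hvj with h3|h3 <;> rw [h3] <;> simp [h]
      rw [Finset.sum_congr rfl h1, Finset.sum_boole]
    have hquadv : ∑ j, ∑ l, v j * Spop j l * v l
        ≤ C' * ((univ.filter fun j => βhat j ≠ 0).card : ℝ) := by
      calc ∑ j, ∑ l, v j * Spop j l * v l
          ≤ lamMax Spop * ((univ.filter fun j => βhat j ≠ 0).card : ℝ) :=
            quad_le_lamMax Spop v _ hNrpos hvsq
      _ ≤ C' * ((univ.filter fun j => βhat j ≠ 0).card : ℝ) :=
            mul_le_mul_of_nonneg_right hLmax hNrpos.le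
    have hBv : ∑ m, w m * ∑ i ∈ A m, (∑ j, v j * d1 m i j)^2 ≤ (2/c) * (C' * ((univ.filter fun j => βhat j ≠ 0).card : ℝ)) := by
      calc ∑ m, w m * ∑ i ∈ A m, (∑ j, v j * d1 m i j)^2
          ≤ (2/c) * ∑ m, (π m * (1/((nb m:ℝ)-1))) * ∑ i, (∑ j, v j * d0 m i j)^2 := hP2
      _ = (2/c) * (∑ j, ∑ l, v j * Spop j l * v l) := by rw [hquadpop]
      _ ≤ (2/c) * (C' * ((univ.filter fun j => βhat j ≠ 0).card : ℝ)) := mul_le_mul_of_nonneg_left hquadv (by positivity)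
    have hDnn : 0 ≤ ∑ j, (βhat j - β j) * T j := by rw [hBDD]; exact hEnn
    have hsq2 : (((univ.filter fun j => βhat j ≠ 0).card : ℝ) * ((1-η)*lam))^2 ≤ (∑ j, v j * T j)^2 :=
      pow_le_pow_left₀ (mul_nonneg hNrpos.le (mul_nonneg (by linarith) hlam.le)) hsum_vT 2
    have hBvD2 : (∑ m, w m * ∑ i ∈ A m, (∑ j, v j * d1 m i j)^2)
          * (∑ j, (βhat j - β j) * T j)
        ≤ ((2/c)*(C'*((univ.filter fun j => βhat j ≠ 0).card : ℝ))) * ((K*s*lam)*((1+η)*lam)) :=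
      mul_le_mul hBv hDT hDnn
        (mul_nonneg (by positivity) (mul_nonneg hC'0 hNrpos.le))
    have key : (((univ.filter fun j => βhat j ≠ 0).card : ℝ) * ((1-η)*lam))^2 ≤ ((2/c)*(C'*((univ.filter fun j => βhat j ≠ 0).card : ℝ))) * ((K*s*lam)*((1+η)*lam)) :=
      le_trans hsq2 (le_trans hCS hBvD2)
    have key3 : c * ((((univ.filter fun j => βhat j ≠ 0).card : ℝ) * ((1-η)*lam))^2)
        ≤ 2*(C'*((univ.filter fun j => βhat j ≠ 0).card : ℝ))*((K*s*lam)*((1+η)*lam)) := by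
      have h4 := mul_le_mul_of_nonneg_left key hc.le
      have h5 : c * (((2:ℝ)/c)*(C'*((univ.filter fun j => βhat j ≠ 0).card : ℝ))*((K*s*lam)*((1+η)*lam)))
          = 2*(C'*((univ.filter fun j => βhat j ≠ 0).card : ℝ))*((K*s*lam)*((1+η)*lam)) := by
        field_simp
      linarith [h4, h5]
    rw [le_div_iff₀ (mul_pos hc (by nlinarith : (0:ℝ) < (1-η)^2))]
    nlinarith [key3, mul_pos hNrpos (mul_pos hlam hlam), hNrpos, hlam]
end

section
/- (Single-block variance-difference identity.) With β̃ = (1 − e) β(1) + e β(0), the following identity holds: [ S²_{Y(1)}/e + S²_{Y(0)}/(1 − e) − S²_{Y(1)−Y(0)} ] − [ S²_{ε(1)}/e + S²_{ε(0)}/(1 − e) − S²_{ε(1)−ε(0)} ] = β̃ᵀ S²_X β̃ / (e(1 − e)) + 2 ( S_{Xε(1)}/e + S_{Xε(0)}/(1 − e) )ᵀ β̃. -/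
/-!
For a symmetric bilinear form `B`, `B u u / e + B v v / (1 - e) - B (u - v) (u - v)` is the
quadratic form of the single vector `(1 - e) u + e v`, divided by `e (1 - e)`. So the two brackets
are the variances of `Ỹ = (1 - e) Y(1) + e Y(0)` and `ε̃ = (1 - e) ε(1) + e ε(0)`, over `e (1 - e)`.
Residuals are linear in the pair `(β, Y)`, so `ε̃` is the residual of `Ỹ` for the coefficient `β̃`,
and expanding the variance of the centred `Ỹ = ε̃ + (x - x̄)ᵀ β̃` leaves exactly the quadratic term
in `β̃` and the cross term between `ε̃` and the covariates.
-/

open Finset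

namespace LinearMap.BilinForm

variable {K M : Type*} [Field K] [AddCommGroup M] [Module K M] {B : LinearMap.BilinForm K M}

theorem IsSymm.apply_add_self (hB : B.IsSymm) (u w : M) :
    B (u + w) (u + w) = B u u + 2 * B u w + B w w := by
  simp only [add_left, add_right, hB.eq w u]
  ring

theorem IsSymm.apply_div_add_apply_div_sub_apply_sub (hB : B.IsSymm) {e : K} (he : e ≠ 0)
    (he' : 1 - e ≠ 0) (u v : M) :
    B u u / e + B v v / (1 - e) - B (u - v) (u - v)
      = B ((1 - e) • u + e • v) ((1 - e) • u + e • v) / (e * (1 - e)) := by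
  simp only [add_left, add_right, sub_left, sub_right, smul_left, smul_right, hB.eq v u]
  field_simp
  ring

end LinearMap.BilinForm

namespace FinitePopulation

open LinearMap.BilinForm

variable {ι κ : Type*} [Fintype ι] [Fintype κ]

noncomputable def mean : (ι → ℝ) →ₗ[ℝ] ℝ where
  toFun a := (∑ i, a i) / Fintype.card ι
  map_add' a b := by simp only [Pi.add_apply, sum_add_distrib, add_div]
  map_smul' r a := by
    simp only [Pi.smul_apply, smul_eq_mul, ← mul_sum, mul_div_assoc, RingHom.id_apply]

theorem mean_apply (a : ι → ℝ) : mean a = (∑ i, a i) / Fintype.card ι := rfl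

noncomputable def center : (ι → ℝ) →ₗ[ℝ] (ι → ℝ) :=
  LinearMap.id - LinearMap.pi fun _ => mean

theorem center_apply (a : ι → ℝ) (i : ι) : center a i = a i - mean a := rfl

theorem mean_center (a : ι → ℝ) : mean (center a) = 0 := by
  cases isEmpty_or_nonempty ι
  · simp [mean_apply]
  · simp only [mean_apply, center_apply, sum_sub_distrib, sum_const, card_univ, nsmul_eq_mul,
      div_eq_zero_iff, Nat.cast_eq_zero, Fintype.card_ne_zero, or_false]
    field_simp
    ring

noncomputable def cov : LinearMap.BilinForm ℝ (ι → ℝ) :=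
  (1 / ((Fintype.card ι : ℝ) - 1)) • (dotProductBilin ℝ ℝ).compl₁₂ center center

theorem cov_apply (a b : ι → ℝ) :
    cov a b = 1 / ((Fintype.card ι : ℝ) - 1) * ∑ i, (a i - mean a) * (b i - mean b) := rfl

theorem cov_isSymm : (cov : LinearMap.BilinForm ℝ (ι → ℝ)).IsSymm :=
  isSymm_def.2 fun a b => by simp only [cov_apply, mul_comm]

theorem cov_center_left (a b : ι → ℝ) : cov (center a) b = cov a b := by
  simp only [cov_apply, mean_center, sub_zero, center_apply]

theorem cov_center_right (a b : ι → ℝ) : cov a (center b) = cov a b := by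
  rw [cov_isSymm.eq, cov_center_left, cov_isSymm.eq]

noncomputable def regressionResidual (f : κ → ι → ℝ) (β : κ → ℝ) (Y : ι → ℝ) : ι → ℝ :=
  center Y - ∑ j, β j • center (f j)

theorem regressionResidual_lincomb (f : κ → ι → ℝ) (a b : ℝ) (β β' : κ → ℝ) (Y Y' : ι → ℝ) :
    a • regressionResidual f β Y + b • regressionResidual f β' Y'
      = regressionResidual f (a • β + b • β') (a • Y + b • Y') := by
  simp only [regressionResidual, map_add, map_smul, smul_sub, smul_sum, Pi.add_apply,
    Pi.smul_apply, add_smul, smul_assoc, sum_add_distrib]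
  abel

theorem cov_self_eq_cov_regressionResidual_add (f : κ → ι → ℝ) (β : κ → ℝ) (Y : ι → ℝ) :
    cov Y Y = cov (regressionResidual f β Y) (regressionResidual f β Y)
      + 2 * ∑ j, β j * cov (regressionResidual f β Y) (f j)
      + ∑ j, ∑ l, β j * cov (f j) (f l) * β l := by
  have hY : center Y = regressionResidual f β Y + ∑ j, β j • center (f j) :=
    (sub_add_cancel _ _).symm
  rw [← cov_center_left, ← cov_center_right, hY, cov_isSymm.apply_add_self]
  simp only [sum_left, sum_right, smul_left, smul_right, cov_center_left, cov_center_right,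
    mul_sum]
  congr 1
  rw [sum_comm]
  exact sum_congr rfl fun j _ => sum_congr rfl fun l _ => by ring

end FinitePopulation

open FinitePopulation LinearMap.BilinForm

theorem single_block_variance_difference_general (N p : ℕ)
    (x : Fin N → Fin p → ℝ) (Y1 Y0 : Fin N → ℝ) (β1 β0 : Fin p → ℝ)
    (e : ℝ) (he0 : 0 < e) (he1 : e < 1) :
    let xbar : Fin p → ℝ := fun j => (∑ i, x i j) / (N : ℝ)
    let mean : (Fin N → ℝ) → ℝ := fun a => (∑ i, a i) / (N : ℝ)
    let ε1 : Fin N → ℝ := fun i => Y1 i - mean Y1 - ∑ j, (x i j - xbar j) * β1 j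
    let ε0 : Fin N → ℝ := fun i => Y0 i - mean Y0 - ∑ j, (x i j - xbar j) * β0 j
    let S2 : (Fin N → ℝ) → ℝ := fun a =>
      (1 / ((N : ℝ) - 1)) * ∑ i, (a i - mean a) ^ 2
    let SX : (Fin N → ℝ) → Fin p → ℝ := fun a j =>
      (1 / ((N : ℝ) - 1)) * ∑ i, (x i j - xbar j) * (a i - mean a)
    let S2X : Fin p → Fin p → ℝ := fun j l =>
      (1 / ((N : ℝ) - 1)) * ∑ i, (x i j - xbar j) * (x i l - xbar l)
    let βt : Fin p → ℝ := fun j => (1 - e) * β1 j + e * β0 j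
    (S2 Y1 / e + S2 Y0 / (1 - e) - S2 (fun i => Y1 i - Y0 i))
        - (S2 ε1 / e + S2 ε0 / (1 - e) - S2 (fun i => ε1 i - ε0 i))
      = (∑ j, ∑ l, βt j * S2X j l * βt l) / (e * (1 - e))
        + 2 * ∑ j, (SX ε1 j / e + SX ε0 j / (1 - e)) * βt j := by
  intro xbar mean ε1 ε0 S2 SX S2X βt
  have he : e ≠ 0 := he0.ne'
  have he' : 1 - e ≠ 0 := sub_ne_zero.2 he1.ne'
  let col : Fin p → Fin N → ℝ := fun j i => x i j
  have hS2 : ∀ a, S2 a = cov a a := fun a => by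
    simp only [S2, cov_apply, mean_apply, Fintype.card_fin, sq, mean]
  have hSX : ∀ a j, SX a j = cov a (col j) := fun a j => by
    simp only [SX, cov_apply, mean_apply, Fintype.card_fin, mean, col, xbar, mul_comm]
  have hS2X : ∀ j l, S2X j l = cov (col j) (col l) := fun j l => by
    simp only [S2X, cov_apply, mean_apply, Fintype.card_fin, col, xbar]
  have hres : ∀ β Y,
      regressionResidual col β Y = fun i => Y i - mean Y - ∑ j, (x i j - xbar j) * β j := by
    intro β Y
    funext i
    simp only [regressionResidual, center_apply, mean_apply, Fintype.card_fin, Pi.sub_apply,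
      Finset.sum_apply, Pi.smul_apply, smul_eq_mul, mean, col, xbar, mul_comm]
  have hεt : (1 - e) • ε1 + e • ε0 = regressionResidual col βt ((1 - e) • Y1 + e • Y0) := by
    change _ = regressionResidual col ((1 - e) • β1 + e • β0) _
    rw [← regressionResidual_lincomb, hres, hres]
  have hcomb : ∀ u v, S2 u / e + S2 v / (1 - e) - S2 (fun i => u i - v i)
      = cov ((1 - e) • u + e • v) ((1 - e) • u + e • v) / (e * (1 - e)) := by
    intro u v
    rw [hS2, hS2, hS2]
    exact cov_isSymm.apply_div_add_apply_div_sub_apply_sub he he' u v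
  have hcross : ∑ j, (SX ε1 j / e + SX ε0 j / (1 - e)) * βt j
      = (∑ j, βt j * cov ((1 - e) • ε1 + e • ε0) (col j)) / (e * (1 - e)) := by
    rw [Finset.sum_div]
    refine Finset.sum_congr rfl fun j _ => ?_
    simp only [hSX, add_left, smul_left]
    field_simp
  rw [hcomb, hcomb, cov_self_eq_cov_regressionResidual_add col βt, ← hεt, hcross]
  simp only [hS2X]
  ring

/-- **Single-block variance-difference identity.**
A single block of `N ≥ 2` units with covariates `x i : Fin p → ℝ`, potential outcomes
`Y1, Y0`, residuals `ε(z)` from the linear decomposition with coefficients `β(z)`, and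
`β̃ = (1 − e)β(1) + eβ(0)`:
`[S²_{Y(1)}/e + S²_{Y(0)}/(1−e) − S²_{Y(1)−Y(0)}] − [S²_{ε(1)}/e + S²_{ε(0)}/(1−e) −
S²_{ε(1)−ε(0)}] = β̃ᵀS²_Xβ̃/(e(1−e)) + 2(S_{Xε(1)}/e + S_{Xε(0)}/(1−e))ᵀβ̃`. -/
theorem single_block_variance_difference (N p : ℕ) (hN : 2 ≤ N)
    (x : Fin N → Fin p → ℝ) (Y1 Y0 : Fin N → ℝ) (β1 β0 : Fin p → ℝ)
    (e : ℝ) (he0 : 0 < e) (he1 : e < 1) :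
    let xbar : Fin p → ℝ := fun j => (∑ i, x i j) / (N : ℝ)
    let mean : (Fin N → ℝ) → ℝ := fun a => (∑ i, a i) / (N : ℝ)
    let ε1 : Fin N → ℝ := fun i => Y1 i - mean Y1 - ∑ j, (x i j - xbar j) * β1 j
    let ε0 : Fin N → ℝ := fun i => Y0 i - mean Y0 - ∑ j, (x i j - xbar j) * β0 j
    let S2 : (Fin N → ℝ) → ℝ := fun a =>
      (1 / ((N : ℝ) - 1)) * ∑ i, (a i - mean a) ^ 2
    let SX : (Fin N → ℝ) → Fin p → ℝ := fun a j =>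
      (1 / ((N : ℝ) - 1)) * ∑ i, (x i j - xbar j) * (a i - mean a)
    let S2X : Fin p → Fin p → ℝ := fun j l =>
      (1 / ((N : ℝ) - 1)) * ∑ i, (x i j - xbar j) * (x i l - xbar l)
    let βt : Fin p → ℝ := fun j => (1 - e) * β1 j + e * β0 j
    (S2 Y1 / e + S2 Y0 / (1 - e) - S2 (fun i => Y1 i - Y0 i))
        - (S2 ε1 / e + S2 ε0 / (1 - e) - S2 (fun i => ε1 i - ε0 i))
      = (∑ j, ∑ l, βt j * S2X j l * βt l) / (e * (1 - e))
        + 2 * ∑ j, (SX ε1 j / e + SX ε0 j / (1 - e)) * βt j :=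
  single_block_variance_difference_general N p x Y1 Y0 β1 β0 e he0 he1
end

section
/- (Bound on the weighted covariate–residual covariance in the direction of the projection coefficient.) Suppose each block has n_{[m]} ≥ 2 units, β ∈ ℝ^p, and ε_i = Y_i − Ȳ_{[m]} − (x_i − x̄_{[m]})ᵀ β for i ∈ [m]. If L > 0 satisfies n⁻¹ ∑_{m=1}^M ∑_{i∈[m]} (Y_i − Ȳ_{[m]})² ≤ L^{1/2} and n⁻¹ ∑_{m=1}^M ∑_{i∈[m]} ε_i⁴ ≤ L, then ∑_{m=1}^M π_{[m]} | S_{[m]Xε}ᵀ β | ≤ 4 L^{1/2}, where S_{[m]Xε}ᵀ β = (n_{[m]} − 1)⁻¹ ∑_{i∈[m]} (x_i − x̄_{[m]})ᵀ β · ε_i. -/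
/-!
Write `dᵢ = Yᵢ − Ȳ_[m]` and `aᵢ = (xᵢ − x̄_[m])ᵀβ`, so that `εᵢ = dᵢ − aᵢ`. Then
`aᵢεᵢ = dᵢεᵢ − εᵢ²`, and AM–GM gives `|aᵢεᵢ| ≤ dᵢ²/2 + 3εᵢ²/2`. Since `n_[m] ≥ 2`, the weight
`π_[m]/(n_[m] − 1)` is at most `2/n`, so the left side is at most
`n⁻¹∑dᵢ² + 3n⁻¹∑εᵢ²`. By Jensen, `(n⁻¹∑εᵢ²)² ≤ n⁻¹∑εᵢ⁴ ≤ L`, and the total is at most `√L + 3√L`.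
-/

open Finset

theorem abs_mul_sub_le (d a : ℝ) : |a * (d - a)| ≤ d ^ 2 / 2 + 3 / 2 * (d - a) ^ 2 :=
  abs_le.mpr ⟨by nlinarith [sq_nonneg (d + (d - a))], by nlinarith [sq_nonneg (d - (d - a))]⟩

theorem div_mul_one_div_sub_one_le {k n : ℝ} (hk : 2 ≤ k) (hn : 0 ≤ n) :
    k / n * (1 / (k - 1)) ≤ 2 / n := by
  rw [div_mul_div_comm, mul_one, mul_comm, ← div_div]
  gcongr
  rw [div_le_iff₀ (by linarith)]
  linarith

theorem mean_sq_le_sqrt_of_mean_pow_four_le {ι : Type*} (s : Finset ι) (e : ι → ℝ) {L : ℝ}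
    (h : (∑ i ∈ s, e i ^ 4) / #s ≤ L) : (∑ i ∈ s, e i ^ 2) / #s ≤ √L := by
  have hJensen := sum_div_card_sq_le_sum_sq_div_card (s := s) (f := fun i => e i ^ 2)
  simp only [← pow_mul] at hJensen
  exact (le_abs_self _).trans (Real.abs_le_sqrt (hJensen.trans h))

theorem weighted_abs_cov_le {ι : Type*} (s : Finset ι) (d a : ι → ℝ) {k n : ℝ}
    (hk : 2 ≤ k) (hn : 0 ≤ n) :
    k / n * |1 / (k - 1) * ∑ i ∈ s, a i * (d i - a i)|
      ≤ 2 / n * ∑ i ∈ s, (d i ^ 2 / 2 + 3 / 2 * (d i - a i) ^ 2) := by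
  rw [abs_mul, abs_of_pos (one_div_pos.mpr (by linarith)), ← mul_assoc]
  gcongr
  · exact div_mul_one_div_sub_one_le hk hn
  · exact (abs_sum_le_sum_abs _ _).trans (sum_le_sum fun i _ => abs_mul_sub_le (d i) (a i))

theorem weighted_cov_residual_direction_bound_general (M p : ℕ) (nb : Fin M → ℕ)
    (hnb : ∀ m, 2 ≤ nb m)
    (x : (m : Fin M) → Fin (nb m) → Fin p → ℝ)
    (Y : (m : Fin M) → Fin (nb m) → ℝ) (β : Fin p → ℝ) (L : ℝ) :
    let n : ℝ := ∑ m, (nb m : ℝ)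
    let π : Fin M → ℝ := fun m => (nb m : ℝ) / n
    let xbar : (m : Fin M) → Fin p → ℝ := fun m j => (∑ i, x m i j) / (nb m : ℝ)
    let Ybar : (m : Fin M) → ℝ := fun m => (∑ i, Y m i) / (nb m : ℝ)
    let ε : (m : Fin M) → Fin (nb m) → ℝ := fun m i =>
      Y m i - Ybar m - ∑ j, (x m i j - xbar m j) * β j
    ((1 / n) * ∑ m, ∑ i, (Y m i - Ybar m) ^ 2 ≤ Real.sqrt L) →
    ((1 / n) * ∑ m, ∑ i, ε m i ^ 4 ≤ L) →
    ∑ m, π m * |(1 / ((nb m : ℝ) - 1)) *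
        ∑ i, (∑ j, (x m i j - xbar m j) * β j) * ε m i|
      ≤ 4 * Real.sqrt L := by
  intro n π xbar Ybar ε hY hε
  have hcard : ((#(univ : Finset (Σ m, Fin (nb m))) : ℕ) : ℝ) = n := by
    simp [n, Fintype.card_sigma]
  have hε2 : 1 / n * ∑ m, ∑ i, ε m i ^ 2 ≤ √L := by
    have := mean_sq_le_sqrt_of_mean_pow_four_le univ (fun v : Σ m, Fin (nb m) => ε v.1 v.2)
      (L := L) (by rwa [Fintype.sum_sigma, hcard, ← one_div_mul_eq_div])
    rwa [Fintype.sum_sigma, hcard, ← one_div_mul_eq_div] at this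
  calc ∑ m, π m * |(1 / ((nb m : ℝ) - 1)) * ∑ i, (∑ j, (x m i j - xbar m j) * β j) * ε m i|
      ≤ ∑ m, 2 / n * ∑ i, ((Y m i - Ybar m) ^ 2 / 2 + 3 / 2 * ε m i ^ 2) :=
        sum_le_sum fun m _ =>
          weighted_abs_cov_le _ _ _ (by exact_mod_cast hnb m) (by positivity)
    _ = 1 / n * ∑ m, ∑ i, (Y m i - Ybar m) ^ 2 + 3 * (1 / n * ∑ m, ∑ i, ε m i ^ 2) := by
        simp only [← mul_sum, sum_add_distrib, ← sum_div]
        ring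
    _ ≤ √L + 3 * √L := by gcongr
    _ = 4 * √L := by ring

/-- **Bound on the weighted covariate–residual covariance in the direction of the
projection coefficient.**  With residuals `ε_i = Y_i − Ȳ_[m] − (x_i − x̄_[m])ᵀβ`,
second-moment bound `n⁻¹ ∑ₘ∑ᵢ (Yᵢ − Ȳ_[m])² ≤ L^{1/2}` and fourth-moment bound
`n⁻¹ ∑ₘ∑ᵢ εᵢ⁴ ≤ L`, one has `∑ₘ π_[m] |S_[m]Xεᵀβ| ≤ 4L^{1/2}`, where
`S_[m]Xεᵀβ = (n_[m] − 1)⁻¹ ∑_{i∈[m]} (xᵢ − x̄_[m])ᵀβ · εᵢ`. -/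
theorem weighted_cov_residual_direction_bound (M p : ℕ) (nb : Fin M → ℕ)
    (hnb : ∀ m, 2 ≤ nb m)
    (x : (m : Fin M) → Fin (nb m) → Fin p → ℝ)
    (Y : (m : Fin M) → Fin (nb m) → ℝ) (β : Fin p → ℝ) (L : ℝ) (hL : 0 < L) :
    let n : ℝ := ∑ m, (nb m : ℝ)
    let π : Fin M → ℝ := fun m => (nb m : ℝ) / n
    let xbar : (m : Fin M) → Fin p → ℝ := fun m j => (∑ i, x m i j) / (nb m : ℝ)
    let Ybar : (m : Fin M) → ℝ := fun m => (∑ i, Y m i) / (nb m : ℝ)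
    let ε : (m : Fin M) → Fin (nb m) → ℝ := fun m i =>
      Y m i - Ybar m - ∑ j, (x m i j - xbar m j) * β j
    ((1 / n) * ∑ m, ∑ i, (Y m i - Ybar m) ^ 2 ≤ Real.sqrt L) →
    ((1 / n) * ∑ m, ∑ i, ε m i ^ 4 ≤ L) →
    ∑ m, π m * |(1 / ((nb m : ℝ) - 1)) *
        ∑ i, (∑ j, (x m i j - xbar m j) * β j) * ε m i|
      ≤ 4 * Real.sqrt L :=
  weighted_cov_residual_direction_bound_general M p nb hnb x Y β L
end
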